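/- arXiv:2503.11391 — 12 statements merged into one kernel-verified Lean document; each statement's English description precedes it below -/
import Mathlib

section
/- For every integer n ≥ 1, set θ = π/(n+3). Then the tuple (a_1, …, a_n) with a_i = sin((i+1)θ)/sin(θ) is the unique n-tuple of positive real numbers satisfying a_i^2 = 1 + a_{i-1} a_{i+1} for all i ∈ {1, …, n}, where by convention a_0 = a_{n+1} = 1. -/
private lemma trigA (y t : ℝ) :
    Real.sin ((y + 1) * t) ^ 2 = Real.sin t ^ 2 + Real.sin (y * t) * Real.sin ((y + 2) * t) := by
  have e1 : (y + 1) * t = y * t + t := by ring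
  have e2 : (y + 2) * t = (y * t + t) + t := by ring
  rw [e1, e2]
  simp only [Real.sin_add, Real.cos_add]
  linear_combination Real.sin t ^ 2 * Real.sin_sq_add_cos_sq (y * t)

/-- Strict comparison: if two positive solutions of the recurrence start with
`b 1 < a 1` then `b (n+1) < a (n+1)`. -/
private lemma compA (n : ℕ) (a b : ℕ → ℝ) (ha0 : a 0 = 1) (hb0 : b 0 = 1)
    (hapos : ∀ i, i ≤ n + 1 → 0 < a i) (hbpos : ∀ i, i ≤ n + 1 → 0 < b i)
    (haeq : ∀ i, 1 ≤ i → i ≤ n → a i ^ 2 = 1 + a (i - 1) * a (i + 1))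
    (hbeq : ∀ i, 1 ≤ i → i ≤ n → b i ^ 2 = 1 + b (i - 1) * b (i + 1))
    (h1 : b 1 < a 1) : b (n + 1) < a (n + 1) := by
  have key : ∀ i, 1 ≤ i → i ≤ n + 1 →
      b i < a i ∧ b (i - 1) ≤ a (i - 1) ∧ b i * a (i - 1) < a i * b (i - 1) := by
    intro i hi
    induction i, hi using Nat.le_induction with
    | base =>
      intro _
      refine ⟨h1, le_of_eq (hb0.trans ha0.symm), ?_⟩
      rw [show (1 - 1 : ℕ) = 0 from rfl, ha0, hb0]
      simpa using h1
    | succ m hm IH =>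
      intro hle
      have hmn : m ≤ n := by omega
      obtain ⟨h1', h2', h3'⟩ := IH (by omega)
      have pa1 : 0 < a (m - 1) := hapos _ (by omega)
      have pb1 : 0 < b (m - 1) := hbpos _ (by omega)
      have pa : 0 < a m := hapos _ (by omega)
      have pb : 0 < b m := hbpos _ (by omega)
      have ra : 0 < a (m + 1) := hapos _ (by omega)
      have rb : 0 < b (m + 1) := hbpos _ (by omega)
      have EA : a (m + 1) * a (m - 1) = a m ^ 2 - 1 := by
        linear_combination -haeq m hm hmn
      have EB : b (m + 1) * b (m - 1) = b m ^ 2 - 1 := by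
        linear_combination -hbeq m hm hmn
      have h4 : b m * b (m - 1) < a m * a (m - 1) := by
        nlinarith [mul_le_mul_of_nonneg_left h2' pb.le, mul_lt_mul_of_pos_right h1' pa1]
      have D : (b m ^ 2 - 1) * (a m * a (m - 1)) < (a m ^ 2 - 1) * (b m * b (m - 1)) := by
        nlinarith [mul_pos (mul_pos pa pb) (sub_pos.2 h3'), h4]
      have L : (b (m + 1) * a m) * (a (m - 1) * b (m - 1)) =
          (b m ^ 2 - 1) * (a m * a (m - 1)) := by
        linear_combination (a m * a (m - 1)) * EB
      have R : (a (m + 1) * b m) * (a (m - 1) * b (m - 1)) =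
          (a m ^ 2 - 1) * (b m * b (m - 1)) := by
        linear_combination (b m * b (m - 1)) * EA
      have h5 : (b (m + 1) * a m) * (a (m - 1) * b (m - 1)) <
          (a (m + 1) * b m) * (a (m - 1) * b (m - 1)) := by
        rw [L, R]; exact D
      have hr : b (m + 1) * a m < a (m + 1) * b m :=
        lt_of_mul_lt_mul_right h5 (mul_pos pa1 pb1).le
      have hlt : b (m + 1) < a (m + 1) := by
        have : b (m + 1) * a m < a (m + 1) * a m :=
          hr.trans (by nlinarith)
        exact lt_of_mul_lt_mul_right this pa.le
      refine ⟨hlt, ?_, ?_⟩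
      · simpa using h1'.le
      · simpa using hr
  exact (key (n + 1) (by omega) le_rfl).1

/-- Type `A_n` fixed-point equations: for `n ≥ 1` and `θ = π/(n+3)`, the tuple
`a_i = sin((i+1)θ)/sin θ` (for `i = 1, …, n`) is the unique positive solution of
`a_i^2 = 1 + a_{i-1} a_{i+1}`, with the convention `a_0 = a_{n+1} = 1`. -/
theorem stmt0 (n : ℕ) (hn : 1 ≤ n) (θ : ℝ) (hθ : θ = Real.pi / (n + 3))
    (a : ℕ → ℝ) (ha0 : a 0 = 1) (hatop : a (n + 1) = 1) :
    ((∀ i, 1 ≤ i → i ≤ n → 0 < a i) ∧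
      (∀ i, 1 ≤ i → i ≤ n → a i ^ 2 = 1 + a (i - 1) * a (i + 1)))
    ↔ (∀ i, 1 ≤ i → i ≤ n → a i = Real.sin (((i : ℝ) + 1) * θ) / Real.sin θ) := by
  set b : ℕ → ℝ := fun i => Real.sin (((i : ℝ) + 1) * θ) / Real.sin θ with hb
  have hθpos : 0 < θ := by
    rw [hθ]; positivity
  have hpi : ((n : ℝ) + 3) * θ = Real.pi := by
    rw [hθ]; field_simp
  have hsinpos : ∀ i : ℕ, i ≤ n + 1 → 0 < Real.sin (((i : ℝ) + 1) * θ) := by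
    intro i hi
    apply Real.sin_pos_of_pos_of_lt_pi
    · positivity
    · rw [← hpi]
      have : ((i : ℝ) + 1) < (n : ℝ) + 3 := by
        have : (i : ℝ) ≤ (n : ℝ) + 1 := by exact_mod_cast hi
        linarith
      nlinarith
  have hs : 0 < Real.sin θ := by
    have := hsinpos 0 (by omega)
    simpa using this
  have hbpos : ∀ i, i ≤ n + 1 → 0 < b i := fun i hi => div_pos (hsinpos i hi) hs
  have hb0 : b 0 = 1 := by
    simp only [hb, Nat.cast_zero, zero_add, one_mul]
    exact div_self hs.ne'
  have hbtop : b (n + 1) = 1 := by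
    have harg : ((((n + 1 : ℕ)) : ℝ) + 1) * θ = Real.pi - θ := by
      push_cast
      linarith [hpi]
    simp only [hb, harg, Real.sin_pi_sub]
    exact div_self hs.ne'
  have hbeq : ∀ i, 1 ≤ i → i ≤ n → b i ^ 2 = 1 + b (i - 1) * b (i + 1) := by
    intro i h1 h2
    have hc : ((i - 1 : ℕ) : ℝ) = (i : ℝ) - 1 := by
      rw [Nat.cast_sub h1, Nat.cast_one]
    simp only [hb, hc]
    push_cast
    have key := trigA (i : ℝ) θ
    have e1 : ((i : ℝ) - 1 + 1) = (i : ℝ) := by ring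
    rw [e1, show ((i : ℝ) + 1 + 1) = (i : ℝ) + 2 from by ring]
    field_simp
    rw [mul_comm θ ((i : ℝ) + 2)]
    linear_combination key
  constructor
  · rintro ⟨hpos, heq⟩
    have hapos : ∀ i, i ≤ n + 1 → 0 < a i := by
      intro i hi
      rcases Nat.eq_zero_or_pos i with h | h
      · rw [h, ha0]; norm_num
      · rcases Nat.lt_or_ge i (n + 1) with h' | h'
        · exact hpos i h (by omega)
        · have : i = n + 1 := by omega
          rw [this, hatop]; norm_num
    have h1 : a 1 = b 1 := by
      rcases lt_trichotomy (a 1) (b 1) with h | h | h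
      · exfalso
        have := compA n b a hb0 ha0 hbpos hapos hbeq heq h
        rw [hatop, hbtop] at this
        exact lt_irrefl 1 this
      · exact h
      · exfalso
        have := compA n a b ha0 hb0 hapos hbpos heq hbeq h
        rw [hatop, hbtop] at this
        exact lt_irrefl 1 this
    have key2 : ∀ i, 1 ≤ i → i ≤ n + 1 → a i = b i ∧ a (i - 1) = b (i - 1) := by
      intro i hi
      induction i, hi using Nat.le_induction with
      | base =>
        intro _
        exact ⟨h1, by rw [show (1 - 1 : ℕ) = 0 from rfl, ha0, hb0]⟩
      | succ m hm IH =>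
        intro hle
        have hmn : m ≤ n := by omega
        obtain ⟨e1, e2⟩ := IH (by omega)
        have pa1 : 0 < a (m - 1) := hapos _ (by omega)
        have EA : a (m + 1) * a (m - 1) = a m ^ 2 - 1 := by
          linear_combination -heq m hm hmn
        have EB : b (m + 1) * b (m - 1) = b m ^ 2 - 1 := by
          linear_combination -hbeq m hm hmn
        have : a (m + 1) * a ( m - 1) = b (m + 1) * a (m - 1) := by
          rw [EA, e1, ← EB, e2]
        have hnext : a (m + 1) = b (m + 1) := mul_right_cancel₀ pa1.ne' this
        exact ⟨hnext, by simpa using e1⟩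
    intro i hi1 hi2
    exact (key2 i hi1 (by omega)).1
  · intro h
    have hall : ∀ j, j ≤ n + 1 → a j = b j := by
      intro j hj
      rcases Nat.eq_zero_or_pos j with h0 | h0
      · rw [h0, ha0, hb0]
      · rcases Nat.lt_or_ge j (n + 1) with h' | h'
        · exact h j h0 (by omega)
        · have : j = n + 1 := by omega
          rw [this, hatop, hbtop]
    constructor
    · intro i hi1 hi2
      rw [hall i (by omega)]
      exact hbpos i (by omega)
    · intro i hi1 hi2
      rw [hall i (by omega), hall (i - 1) (by omega), hall (i + 1) (by omega)]
      exact hbeq i hi1 hi2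
end

section
/- For every integer n ≥ 2, the tuple (a_1, …, a_n) with a_i = i+1 for 1 ≤ i ≤ n−1 and a_n = √(n+1) is the unique n-tuple of positive real numbers satisfying: a_i^2 = 1 + a_{i-1} a_{i+1} for 1 ≤ i ≤ n−2 (with convention a_0 = 1), a_{n-1}^2 = 1 + a_{n-2} · a_n^2 (with a_0 = 1 when n = 2), and a_n^2 = 1 + a_{n-1}. -/
/-- Type `B_n` fixed-point equations: for `n ≥ 2`, the tuple
`(2, 3, …, n, √(n+1))` is the unique positive solution of
`a_i^2 = 1 + a_{i-1} a_{i+1}` for `1 ≤ i ≤ n-2` (with `a_0 = 1`),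
`a_{n-1}^2 = 1 + a_{n-2} a_n^2`, and `a_n^2 = 1 + a_{n-1}`. -/
theorem stmt1 (n : ℕ) (hn : 2 ≤ n) (a : ℕ → ℝ) (ha0 : a 0 = 1) :
    ((∀ i, 1 ≤ i → i ≤ n → 0 < a i) ∧
      (∀ i, 1 ≤ i → i ≤ n - 2 → a i ^ 2 = 1 + a (i - 1) * a (i + 1)) ∧
      a (n - 1) ^ 2 = 1 + a (n - 2) * a n ^ 2 ∧
      a n ^ 2 = 1 + a (n - 1))
    ↔ ((∀ i, 1 ≤ i → i ≤ n - 1 → a i = (i : ℝ) + 1) ∧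
        a n = Real.sqrt ((n : ℝ) + 1)) := by
  obtain ⟨m, rfl⟩ : ∃ m, n = m + 2 := ⟨n - 2, by omega⟩
  simp only [show m + 2 - 1 = m + 1 from rfl, show m + 2 - 2 = m from rfl]
  constructor
  · rintro ⟨hpos, heq, heq1, heq2⟩
    have ht0 : 0 < a 1 := hpos 1 (by omega) (by omega)
    -- linear recurrence
    have hrec : ∀ k, k + 1 ≤ m → a (k + 2) = a 1 * a (k + 1) - a k := by
      intro k
      induction k with
      | zero =>
        intro hk
        have h1 := heq 1 (by omega) (by omega)
        simp only [show (1:ℕ) - 1 = 0 from rfl] at h1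
        rw [ha0] at h1
        show a 2 = a 1 * a 1 - a 0
        rw [ha0]; nlinarith [h1]
      | succ k ih =>
        intro hk
        have h1 := heq (k+1) (by omega) (by omega)
        have h2 := heq (k+2) (by omega) (by omega)
        simp only [show k + 1 - 1 = k from rfl, show k + 2 - 1 = k + 1 from rfl,
          show k + 1 + 1 = k + 2 from rfl, show k + 2 + 1 = k + 3 from rfl] at h1 h2
        have h3 := ih (by omega)
        have hp : 0 < a (k+1) := hpos (k+1) (by omega) (by omega)
        have key : a (k+1) * a (k+3) = a (k+1) * (a 1 * a (k+2) - a (k+1)) := by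
          linear_combination h1 - h2 + a (k+2) * h3
        exact mul_left_cancel₀ (ne_of_gt hp) key
    -- extended relation at the end
    have hA : a (m+2) ^ 2 = a 1 * a (m+1) - a m := by
      rcases Nat.eq_zero_or_pos m with hm | hm
      · subst hm
        simp only [Nat.zero_add] at heq1 ⊢
        rw [ha0] at heq1 ⊢
        nlinarith [heq1]
      · obtain ⟨k, rfl⟩ : ∃ k, m = k + 1 := ⟨m - 1, by omega⟩
        have h1 := heq (k+1) (by omega) (by omega)
        simp only [show k + 1 - 1 = k from rfl, show k + 1 + 1 = k + 2 from rfl] at h1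
        simp only [show k + 1 + 1 = k + 2 from rfl, show k + 1 + 2 = k + 3 from rfl] at heq1
        have h3 : a (k+2) = a 1 * a (k+1) - a k := hrec k (by omega)
        have hp : 0 < a (k+1) := hpos (k+1) (by omega) (by omega)
        have key : a (k+1) * a (k+3) ^ 2 = a (k+1) * (a 1 * a (k+2) - a (k+1)) := by
          linear_combination h1 - heq1 + a (k+2) * h3
        exact mul_left_cancel₀ (ne_of_gt hp) key
    have hstar : a 1 * a (m+1) - a m = 1 + a (m+1) := by linarith [hA, heq2]
    have hpm : 0 < a (m+1) := hpos (m+1) (by omega) (by omega)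
    rcases lt_trichotomy (a 1) 2 with h | h | h
    · exfalso
      have Dle : ∀ k, k ≤ m → a (k+1) - a k ≤ a 1 - 1 := by
        intro k
        induction k with
        | zero => intro _; norm_num [ha0]
        | succ k ih =>
          intro hk
          have h3 := hrec k hk
          have hp : 0 < a (k+1) := hpos (k+1) (by omega) (by omega)
          have hprod : (a 1 - 2) * a (k+1) ≤ 0 :=
            mul_nonpos_of_nonpos_of_nonneg (by linarith) hp.le
          nlinarith [ih (by omega), h3, hprod]
      have hD := Dle m le_rfl
      have hprod : (a 1 - 2) * a (m+1) < 0 :=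
        mul_neg_of_neg_of_pos (by linarith) hpm
      nlinarith [hstar, hD, hprod]
    · -- a 1 = 2
      have hval2 : ∀ k, k ≤ m → a k = (k : ℝ) + 1 ∧ a (k+1) = (k : ℝ) + 2 := by
        intro k
        induction k with
        | zero => intro _; refine ⟨by rw [ha0]; norm_num, by rw [h]; norm_num⟩
        | succ k ih =>
          intro hk
          obtain ⟨hk1, hk2⟩ := ih (by omega)
          have h3 := hrec k hk
          rw [h] at h3
          constructor
          · rw [hk2]; push_cast; ring
          · rw [h3, hk2, hk1]; push_cast; ring
      constructor
      · intro i hi1 hi2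
        rcases Nat.lt_or_ge i (m+1) with hi | hi
        · exact (hval2 i (by omega)).1
        · have : i = m + 1 := by omega
          subst this
          have := (hval2 m le_rfl).2
          rw [this]; push_cast; ring
      · have hsq : a (m+2) ^ 2 = ((m+2 : ℕ) : ℝ) + 1 := by
          rw [heq2, (hval2 m le_rfl).2]; push_cast; ring
        rw [show ((m+2 : ℕ) : ℝ) + 1 = a (m+2) ^ 2 from hsq.symm,
          Real.sqrt_sq (hpos (m+2) (by omega) le_rfl).le]
    · exfalso
      have Dge : ∀ k, k ≤ m → a 1 - 1 ≤ a (k+1) - a k := by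
        intro k
        induction k with
        | zero => intro _; norm_num [ha0]
        | succ k ih =>
          intro hk
          have h3 := hrec k hk
          have hp : 0 < a (k+1) := hpos (k+1) (by omega) (by omega)
          have hprod : 0 ≤ (a 1 - 2) * a (k+1) :=
            mul_nonneg (by linarith) hp.le
          nlinarith [ih (by omega), h3, hprod]
      have hD := Dge m le_rfl
      have hprod : 0 < (a 1 - 2) * a (m+1) :=
        mul_pos (by linarith) hpm
      nlinarith [hstar, hD, hprod]
  · rintro ⟨h1, h2⟩
    have hval : ∀ j, j ≤ m + 1 → a j = (j : ℝ) + 1 := by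
      intro j hj
      rcases Nat.eq_zero_or_pos j with hj0 | hj0
      · subst hj0; rw [ha0]; norm_num
      · exact h1 j hj0 hj
    have hsq : a (m+2) ^ 2 = (m : ℝ) + 3 := by
      rw [h2, Real.sq_sqrt (by positivity)]; push_cast; ring
    refine ⟨?_, ?_, ?_, ?_⟩
    · intro i hi1 hi2
      rcases Nat.lt_or_ge i (m+2) with hi | hi
      · rw [hval i (by omega)]; positivity
      · have : i = m + 2 := by omega
        subst this
        rw [h2]; exact Real.sqrt_pos.mpr (by positivity)
    · intro i hi1 hi2
      obtain ⟨j, rfl⟩ : ∃ j, i = j + 1 := ⟨i - 1, by omega⟩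
      simp only [show j + 1 - 1 = j from rfl]
      rw [hval j (by omega), hval (j+1) (by omega), hval (j+2) (by omega)]
      push_cast; ring
    · rw [hval (m+1) le_rfl, hval m (by omega), hsq]; push_cast; ring
    · rw [hsq, hval (m+1) le_rfl]; push_cast; ring
end

section
/- For every integer n ≥ 3, set θ = π/(2n+2). Then the tuple (a_1, …, a_n) with a_i = sin((i+1)θ)/sin(θ) is the unique n-tuple of positive real numbers satisfying: a_i^2 = 1 + a_{i-1} a_{i+1} for 1 ≤ i ≤ n−1 (with convention a_0 = 1) and a_n^2 = 1 + a_{n-1}^2. -/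
open Real

private lemma trig1 (x t : ℝ) :
    Real.sin (x + t) ^ 2 = Real.sin t ^ 2 + Real.sin x * Real.sin (x + 2 * t) := by
  rw [show x + 2 * t = x + (t + t) by ring]
  simp only [Real.sin_add, Real.cos_add]
  linear_combination Real.sin t ^ 2 * Real.sin_sq_add_cos_sq x

private lemma trig2 (x t : ℝ) :
    Real.sin (x + t) = 2 * Real.cos t * Real.sin x - Real.sin (x - t) := by
  rw [Real.sin_add, Real.sin_sub]; ring

/-- Type `C_n` fixed-point equations: for `n ≥ 3` and `θ = π/(2n+2)`, the tuple
`a_i = sin((i+1)θ)/sin θ` (for `i = 1, …, n`) is the unique positive solution of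
`a_i^2 = 1 + a_{i-1} a_{i+1}` for `1 ≤ i ≤ n-1` (with `a_0 = 1`) and
`a_n^2 = 1 + a_{n-1}^2`. -/
theorem stmt2 (n : ℕ) (hn : 3 ≤ n) (θ : ℝ) (hθ : θ = Real.pi / (2 * n + 2))
    (a : ℕ → ℝ) (ha0 : a 0 = 1) :
    ((∀ i, 1 ≤ i → i ≤ n → 0 < a i) ∧
      (∀ i, 1 ≤ i → i ≤ n - 1 → a i ^ 2 = 1 + a (i - 1) * a (i + 1)) ∧
      a n ^ 2 = 1 + a (n - 1) ^ 2)
    ↔ (∀ i, 1 ≤ i → i ≤ n → a i = Real.sin (((i : ℝ) + 1) * θ) / Real.sin θ) := by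
  have hn' : (3:ℝ) ≤ (n:ℝ) := by exact_mod_cast hn
  have hden : (0:ℝ) < 2 * (n:ℝ) + 2 := by linarith
  have hθpos : 0 < θ := by rw [hθ]; positivity
  have hhalf : ((n:ℝ) + 1) * θ = π / 2 := by
    rw [hθ]; field_simp
  have hθltpi : θ < π := by
    have : ((n:ℝ) + 1) * θ < ((n:ℝ)+1) * π := by
      rw [hhalf]
      nlinarith [Real.pi_pos]
    have hn1 : (0:ℝ) < (n:ℝ) + 1 := by linarith
    nlinarith [Real.pi_pos]
  have hsθ : 0 < Real.sin θ := Real.sin_pos_of_pos_of_lt_pi hθpos hθltpi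
  constructor
  · rintro ⟨hpos, hrec, hlast⟩
    set c := a 1 with hc
    have hc0 : 0 < c := hpos 1 le_rfl (by omega)
    -- joint induction: quadratic invariant and linear recurrence
    have key : ∀ i, 1 ≤ i → i ≤ n →
        (a i ^ 2 + a (i-1) ^ 2 = 1 + c * a i * a (i-1)) ∧
        (i ≤ n - 1 → a (i+1) = c * a i - a (i-1)) := by
      intro i hi1 hin
      induction i with
      | zero => omega
      | succ j ih =>
        rcases Nat.eq_zero_or_pos j with rfl | hj
        · constructor
          · simp only [show (1:ℕ) - 1 = 0 from rfl, ha0, hc]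
            ring
          · intro _
            have h1 := hrec 1 le_rfl (by omega)
            simp only [show (1:ℕ) - 1 = 0 from rfl, ha0] at h1
            simp only [← hc]
            linarith [h1]
        · obtain ⟨hQ, hL⟩ := ih (by omega) (by omega)
          have hL' := hL (by omega)
          have heq := hrec j hj (by omega)
          have hQ1 : a (j+1) ^ 2 + a j ^ 2 = 1 + c * a (j+1) * a j := by
            linear_combination a (j+1) * hL' + heq
          constructor
          · simpa only [Nat.add_sub_cancel] using hQ1
          · intro hj1n
            have heq2 := hrec (j+1) (by omega) hj1n
            simp only [Nat.add_sub_cancel] at heq2 ⊢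
            have haj : 0 < a j := hpos j hj (by omega)
            have h2 : a j * a (j+2) = a j * (c * a (j+1) - a j) := by
              linear_combination hQ1 - heq2
            exact mul_left_cancel₀ haj.ne' h2
    have hQn := (key n (by omega) le_rfl).1
    have hpn1 : 0 < a (n-1) := hpos (n-1) (by omega) (by omega)
    have hpn : 0 < a n := hpos n (by omega) le_rfl
    have hfin : 2 * a (n-1) = c * a n := by
      have h2 : a (n-1) * (2 * a (n-1)) = a (n-1) * (c * a n) := by
        linear_combination hQn - hlast
      exact mul_left_cancel₀ hpn1.ne' h2
    have hc2 : c < 2 := by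
      by_contra hge
      push_neg at hge
      have mono : ∀ i, 1 ≤ i → i ≤ n → a (i-1) < a i := by
        intro i hi1 hin
        induction i with
        | zero => omega
        | succ j ih =>
          rcases Nat.eq_zero_or_pos j with rfl | hj
          · simp only [show (1:ℕ) - 1 = 0 from rfl, ha0, ← hc]
            linarith
          · have hprev := ih (by omega) (by omega)
            have hL := (key j hj (by omega)).2 (by omega)
            have hpj := hpos j hj (by omega)
            have h2 : 2 * a j ≤ c * a j := by nlinarith
            simp only [Nat.add_sub_cancel]
            linarith [hL]
      have h1 := mono n (by omega) le_rfl
      have h2 : 2 * a n ≤ c * a n := by nlinarith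
      linarith
    set φ := Real.arccos (c/2) with hφ
    have hφcos : Real.cos φ = c/2 := Real.cos_arccos (by linarith) (by linarith)
    have hφ1 : 0 < φ := Real.arccos_pos.mpr (by linarith)
    have hφπ : φ < π := lt_of_le_of_ne (Real.arccos_le_pi _)
      (by intro h; rw [h, Real.cos_pi] at hφcos; linarith)
    have hsφ : 0 < Real.sin φ := Real.sin_pos_of_pos_of_lt_pi hφ1 hφπ
    have claim : ∀ i, i ≤ n → a i * Real.sin φ = Real.sin (((i:ℝ)+1) * φ) := by
      intro i
      induction i using Nat.strong_induction_on with
      | _ i ih =>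
        intro hin
        match i, ih with
        | 0, _ => simp [ha0]
        | 1, _ =>
          rw [show ((1:ℕ):ℝ) + 1 = 2 by norm_num, Real.sin_two_mul, hφcos, ← hc]
          ring
        | (j+2), ih =>
          have h1 := ih (j+1) (by omega) (by omega)
          have h0 := ih j (by omega) (by omega)
          have hL := (key (j+1) (by omega) (by omega)).2 (by omega)
          simp only [Nat.add_sub_cancel] at hL
          push_cast at h1 h0 ⊢
          rw [show ((j:ℝ)+1+1) * φ = ((j:ℝ)+2) * φ by ring] at h1
          rw [hL, show ((j:ℝ)+2+1) * φ = ((j:ℝ)+2) * φ + φ by ring,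
            trig2 (((j:ℝ)+2)*φ) φ, show ((j:ℝ)+2)*φ - φ = ((j:ℝ)+1)*φ by ring, hφcos]
          linear_combination c * h1 - h0
    have hspos : ∀ k : ℕ, 1 ≤ k → k ≤ n + 1 → 0 < Real.sin ((k:ℝ) * φ) := by
      intro k hk1 hk2
      rcases k with _ | i
      · omega
      rcases Nat.eq_zero_or_pos i with rfl | hi
      · simpa using hsφ
      · have := claim i (by omega)
        push_cast
        rw [← this]
        exact mul_pos (hpos i hi (by omega)) hsφ
    have hlt : ((n:ℝ) + 1) * φ < π := by
      by_contra h
      push_neg at h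
      set k : ℕ := ⌈π / φ⌉₊ with hk
      have hk1 : π ≤ (k:ℝ) * φ := by
        have := Nat.le_ceil (π / φ)
        calc π = (π / φ) * φ := by field_simp
        _ ≤ (k:ℝ) * φ := mul_le_mul_of_nonneg_right this hφ1.le
      have hkn : k ≤ n + 1 := by
        rw [hk]
        apply Nat.ceil_le.mpr
        rw [div_le_iff₀ hφ1]
        push_cast
        linarith
      have hk0 : 1 ≤ k := by
        by_contra h0
        push_neg at h0
        interval_cases k
        simp at hk1
        linarith [Real.pi_pos]
      have hk2 : (k:ℝ) * φ < 2 * π := by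
        have := Nat.ceil_lt_add_one (le_of_lt (div_pos Real.pi_pos hφ1))
        rw [← hk] at this
        have h2 : (k:ℝ) * φ < (π / φ + 1) * φ := by nlinarith
        have h3 : (π / φ + 1) * φ = π + φ := by field_simp
        linarith
      have hneg : Real.sin ((k:ℝ) * φ) ≤ 0 := by
        have h4 : Real.sin ((k:ℝ) * φ - π) = - Real.sin ((k:ℝ)*φ) := Real.sin_sub_pi _
        have h5 : 0 ≤ Real.sin ((k:ℝ) * φ - π) :=
          Real.sin_nonneg_of_nonneg_of_le_pi (by linarith) (by linarith)
        linarith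
      exact absurd (hspos k hk0 hkn) (not_lt.mpr hneg)
    -- derive cos((n+1)φ) = 0
    have hA : 2 * Real.sin ((n:ℝ) * φ) = c * Real.sin (((n:ℝ)+1) * φ) := by
      have e1 := claim (n-1) (by omega)
      have e2 := claim n le_rfl
      have hcast : ((n-1:ℕ):ℝ) = (n:ℝ) - 1 := by
        have : (1:ℕ) ≤ n := by omega
        push_cast [this]
        ring
      rw [hcast, show ((n:ℝ) - 1 + 1) = (n:ℝ) by ring] at e1
      linear_combination -2 * e1 + Real.sin φ * hfin + c * e2
    have hcos : Real.cos (((n:ℝ)+1) * φ) = 0 := by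
      have e : (n:ℝ) * φ = ((n:ℝ)+1) * φ - φ := by ring
      rw [e, Real.sin_sub] at hA
      have h0 : Real.cos (((n:ℝ)+1) * φ) * Real.sin φ = 0 := by
        linear_combination (-(1:ℝ)/2) * hA + Real.sin (((n:ℝ)+1)*φ) * hφcos
      exact (mul_eq_zero.mp h0).resolve_right hsφ.ne'
    have hX : ((n:ℝ)+1) * φ = π / 2 := by
      have h1 : ((n:ℝ)+1) * φ ∈ Set.Icc 0 π := Set.mem_Icc.mpr ⟨by positivity, hlt.le⟩
      have h2 : π / 2 ∈ Set.Icc 0 π :=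
        Set.mem_Icc.mpr ⟨by linarith [Real.pi_pos], by linarith [Real.pi_pos]⟩
      exact Real.injOn_cos h1 h2 (by rw [hcos, Real.cos_pi_div_two])
    have hφθ : φ = θ := by
      rw [hθ]
      rw [eq_div_iff (by positivity)]
      linear_combination 2 * hX
    intro i hi1 hin
    have := claim i hin
    rw [hφθ] at this
    rw [eq_div_iff hsθ.ne']
    exact this
  · intro hf
    have hsinpos : ∀ i : ℕ, 1 ≤ i → i ≤ n → 0 < Real.sin (((i:ℝ)+1) * θ) := by
      intro i hi1 hin
      apply Real.sin_pos_of_pos_of_lt_pi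
      · positivity
      · have hc : (i:ℝ) ≤ (n:ℝ) := by exact_mod_cast hin
        have : ((i:ℝ)+1) * θ ≤ ((n:ℝ)+1) * θ := by nlinarith
        nlinarith [Real.pi_pos, hhalf]
    refine ⟨?_, ?_, ?_⟩
    · intro i hi1 hin
      rw [hf i hi1 hin]
      exact div_pos (hsinpos i hi1 hin) hsθ
    · intro i hi1 hin
      have hfi := hf i hi1 (by omega)
      have hfi1 := hf (i+1) (by omega) (by omega)
      have hfm : a (i-1) = Real.sin ((i:ℝ) * θ) / Real.sin θ := by
        rcases Nat.eq_or_lt_of_le hi1 with h1 | h2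
        · rw [← h1]
          simp only [show (1:ℕ) - 1 = 0 from rfl, ha0]
          rw [show ((1:ℕ):ℝ) * θ = θ by push_cast; ring]
          rw [div_self hsθ.ne']
        · have hcast : ((i-1:ℕ):ℝ) = (i:ℝ) - 1 := by
            have : (1:ℕ) ≤ i := by omega
            push_cast [this]; ring
          rw [hf (i-1) (by omega) (by omega), hcast,
            show ((i:ℝ) - 1 + 1) = (i:ℝ) by ring]
      rw [hfi, hfi1, hfm]
      have key := trig1 ((i:ℝ)*θ) θ
      rw [show (i:ℝ)*θ + θ = ((i:ℝ)+1)*θ by ring,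
        show (i:ℝ)*θ + 2*θ = ((i:ℝ)+2)*θ by ring] at key
      rw [show (((i+1:ℕ):ℝ)+1) * θ = ((i:ℝ)+2)*θ by push_cast; ring]
      rw [div_pow, div_mul_div_comm, key, ← pow_two (Real.sin θ), add_div,
        div_self (pow_ne_zero 2 hsθ.ne')]
    · have hfn := hf n (by omega) le_rfl
      have hfn1 := hf (n-1) (by omega) (by omega)
      have hcast : ((n-1:ℕ):ℝ) = (n:ℝ) - 1 := by
        have : (1:ℕ) ≤ n := by omega
        push_cast [this]; ring
      rw [hfn, hfn1, hcast, hhalf, show ((n:ℝ) - 1 + 1) * θ = ((n:ℝ)+1)*θ - θ by ring,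
        hhalf, Real.sin_pi_div_two, Real.sin_pi_div_two_sub]
      field_simp
      linarith [Real.sin_sq_add_cos_sq θ]
end

section
/- For every integer n ≥ 4, the tuple (a_1, …, a_n) = (2, 3, …, n−1, √n, √n) (that is, a_i = i+1 for 1 ≤ i ≤ n−2 and a_{n-1} = a_n = √n) is the unique n-tuple of positive real numbers satisfying: a_i^2 = 1 + a_{i-1} a_{i+1} for 1 ≤ i ≤ n−3 (with convention a_0 = 1), a_{n-2}^2 = 1 + a_{n-3} a_{n-1} a_n, a_{n-1}^2 = 1 + a_{n-2}, and a_n^2 = 1 + a_{n-2}. -/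
lemma dkey (x b : ℝ) (hx : 0 < x) (h : x ^ 2 = 1 + b * (x + 1)) : x = 1 + b := by
  have h2 : (x + 1) * (x - 1 - b) = 0 := by linear_combination h
  rcases mul_eq_zero.1 h2 with h3 | h3 <;> linarith

/-- Type `D_n` fixed-point equations: for `n ≥ 4`, the tuple
`(2, 3, …, n-1, √n, √n)` is the unique positive solution of
`a_i^2 = 1 + a_{i-1} a_{i+1}` for `1 ≤ i ≤ n-3` (with `a_0 = 1`),
`a_{n-2}^2 = 1 + a_{n-3} a_{n-1} a_n`, `a_{n-1}^2 = 1 + a_{n-2}`, and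
`a_n^2 = 1 + a_{n-2}`. -/
theorem stmt3 (n : ℕ) (hn : 4 ≤ n) (a : ℕ → ℝ) (ha0 : a 0 = 1) :
    ((∀ i, 1 ≤ i → i ≤ n → 0 < a i) ∧
      (∀ i, 1 ≤ i → i ≤ n - 3 → a i ^ 2 = 1 + a (i - 1) * a (i + 1)) ∧
      a (n - 2) ^ 2 = 1 + a (n - 3) * a (n - 1) * a n ∧
      a (n - 1) ^ 2 = 1 + a (n - 2) ∧
      a n ^ 2 = 1 + a (n - 2))
    ↔ ((∀ i, 1 ≤ i → i ≤ n - 2 → a i = (i : ℝ) + 1) ∧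
        a (n - 1) = Real.sqrt (n : ℝ) ∧ a n = Real.sqrt (n : ℝ)) := by
  obtain ⟨m, rfl⟩ : ∃ m, n = m + 4 := ⟨n - 4, by omega⟩
  clear hn
  have e1 : m + 4 - 1 = m + 3 := by omega
  have e2 : m + 4 - 2 = m + 2 := by omega
  have e3 : m + 4 - 3 = m + 1 := by omega
  rw [e1, e2, e3]
  constructor
  · rintro ⟨hpos, hrec, htri, h1, h2⟩
    have p3 : 0 < a (m + 3) := hpos (m + 3) (by omega) (by omega)
    have p4 : 0 < a (m + 4) := hpos (m + 4) (by omega) (by omega)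
    have hsq : a (m + 3) ^ 2 = a (m + 4) ^ 2 := by rw [h1, h2]
    have heq : a (m + 3) = a (m + 4) := by nlinarith [hsq, p3, p4]
    have hmul : a (m + 3) * a (m + 4) = 1 + a (m + 2) := by
      rw [← heq, ← pow_two]; exact h1
    have hb : a (m + 2) = 1 + a (m + 1) := by
      apply dkey _ _ (hpos (m + 2) (by omega) (by omega))
      calc a (m + 2) ^ 2 = 1 + a (m + 1) * (a (m + 3) * a (m + 4)) := by
              rw [htri]; ring
        _ = 1 + a (m + 1) * (a (m + 2) + 1) := by rw [hmul]; ring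
    have hstep : ∀ d, d ≤ m + 1 → a (m + 2 - d) = a (m + 1 - d) + 1 := by
      intro d
      induction d with
      | zero => intro _; simpa using by linarith [hb]
      | succ d ih =>
        intro hd
        have ih' := ih (by omega)
        have e4 : m + 2 - d = (m + 2 - (d + 1)) + 1 := by omega
        have e5 : m + 1 - d = m + 2 - (d + 1) := by omega
        have e6 : m + 1 - (d + 1) = (m + 2 - (d + 1)) - 1 := by omega
        set i := m + 2 - (d + 1) with hidef
        rw [e4, e5] at ih'
        rw [e6]
        have hr := hrec i (by omega) (by omega)
        have hkey : a i ^ 2 = 1 + a (i - 1) * (a i + 1) := by rw [hr, ih']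
        linarith [dkey (a i) (a (i - 1)) (hpos i (by omega) (by omega)) hkey]
    have aval : ∀ i, i ≤ m + 2 → a i = (i : ℝ) + 1 := by
      intro i
      induction i with
      | zero => intro _; simpa using ha0
      | succ i ih =>
        intro hi
        have hs := hstep (m + 1 - i) (by omega)
        have e4 : m + 2 - (m + 1 - i) = i + 1 := by omega
        have e5 : m + 1 - (m + 1 - i) = i := by omega
        rw [e4, e5] at hs
        rw [hs, ih (by omega)]
        push_cast; ring
    have hv : a (m + 3) ^ 2 = (m : ℝ) + 4 := by
      rw [h1, aval (m + 2) le_rfl]; push_cast; ring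
    refine ⟨fun i _ h2i => aval i h2i, ?_, ?_⟩
    · push_cast
      rw [← hv, Real.sqrt_sq p3.le]
    · push_cast
      rw [← heq, ← hv, Real.sqrt_sq p3.le]
  · rintro ⟨hval, h1, h2⟩
    have aval : ∀ i, i ≤ m + 2 → a i = (i : ℝ) + 1 := by
      intro i hi
      rcases Nat.eq_zero_or_pos i with h | h
      · subst h; simpa using ha0
      · exact hval i h hi
    have hs : Real.sqrt ((m + 4 : ℕ) : ℝ) ^ 2 = (m : ℝ) + 4 := by
      rw [Real.sq_sqrt (by positivity)]; push_cast; ring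
    have hspos : 0 < Real.sqrt ((m + 4 : ℕ) : ℝ) := Real.sqrt_pos.2 (by positivity)
    refine ⟨?_, ?_, ?_, ?_, ?_⟩
    · intro i h1i h2i
      rcases lt_or_ge i (m + 3) with h | h
      · rw [aval i (by omega)]; positivity
      · rcases (by omega : i = m + 3 ∨ i = m + 4) with rfl | rfl
        · rw [h1]; exact hspos
        · rw [h2]; exact hspos
    · intro i h1i h2i
      obtain ⟨j, rfl⟩ : ∃ j, i = j + 1 := ⟨i - 1, by omega⟩
      rw [show j + 1 - 1 = j from by omega, show j + 1 + 1 = j + 2 from by omega,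
        aval (j + 1) (by omega), aval (j + 2) (by omega), aval j (by omega)]
      push_cast; ring
    · have hm : Real.sqrt ((m + 4 : ℕ) : ℝ) * Real.sqrt ((m + 4 : ℕ) : ℝ) = (m : ℝ) + 4 := by
        rw [← pow_two]; exact hs
      rw [aval (m + 2) le_rfl, aval (m + 1) (by omega), h1, h2, mul_assoc, hm]
      push_cast; ring
    · rw [h1, hs, aval (m + 2) le_rfl]; push_cast; ring
    · rw [h2, hs, aval (m + 2) le_rfl]; push_cast; ring
end

section
/- There is a unique real number ε > 2 with ε^3 − 2ε^2 − ε + 1 = 0, and for this ε the tuple (a_1, a_2, a_3, a_4) = (ε, ε^2 − 1, 2ε^2 − ε − 1, ε(ε − 1)) is the unique 4-tuple of positive real numbers satisfying a_1^2 = 1 + a_2, a_2^2 = 1 + a_1 a_3, a_3^2 = 1 + a_2^2 a_4, and a_4^2 = 1 + a_3. -/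
private lemma root_unique {x y : ℝ} (hx : 2 < x) (hy : 2 < y)
    (hfx : x ^ 3 - 2 * x ^ 2 - x + 1 = 0) (hfy : y ^ 3 - 2 * y ^ 2 - y + 1 = 0) :
    x = y := by
  have key : (x - y) * (x ^ 2 + x * y + y ^ 2 - 2 * x - 2 * y - 1) = 0 := by
    linear_combination hfx - hfy
  have hpos : 0 < x ^ 2 + x * y + y ^ 2 - 2 * x - 2 * y - 1 := by nlinarith
  rcases mul_eq_zero.mp key with h | h
  · linarith
  · linarith

private lemma root_exists : ∃ ε : ℝ, 2 < ε ∧ ε ^ 3 - 2 * ε ^ 2 - ε + 1 = 0 := by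
  have hf : ContinuousOn (fun x : ℝ => x ^ 3 - 2 * x ^ 2 - x + 1) (Set.Icc 2 3) := by
    fun_prop
  have h0 : (0 : ℝ) ∈ Set.Icc ((fun x : ℝ => x ^ 3 - 2 * x ^ 2 - x + 1) 2)
      ((fun x : ℝ => x ^ 3 - 2 * x ^ 2 - x + 1) 3) := by
    norm_num
  obtain ⟨x, hx, hfx⟩ := intermediate_value_Icc (by norm_num : (2:ℝ) ≤ 3) hf h0
  refine ⟨x, ?_, hfx⟩
  rcases lt_or_eq_of_le hx.1 with h | h
  · exact h
  · exfalso; rw [← h] at hfx; norm_num at hfx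

/-- Type `F_4` fixed point: there is a unique real `ε > 2` with
`ε³ - 2ε² - ε + 1 = 0`, and for this `ε` the tuple
`(ε, ε² - 1, 2ε² - ε - 1, ε(ε - 1))` is the unique positive solution of the
type-`F_4` fixed-point equations. -/
theorem stmt5 :
    (∃! ε : ℝ, 2 < ε ∧ ε ^ 3 - 2 * ε ^ 2 - ε + 1 = 0) ∧
    ∀ ε : ℝ, 2 < ε → ε ^ 3 - 2 * ε ^ 2 - ε + 1 = 0 →
      ∀ a₁ a₂ a₃ a₄ : ℝ,
        (0 < a₁ ∧ 0 < a₂ ∧ 0 < a₃ ∧ 0 < a₄ ∧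
          a₁ ^ 2 = 1 + a₂ ∧ a₂ ^ 2 = 1 + a₁ * a₃ ∧
          a₃ ^ 2 = 1 + a₂ ^ 2 * a₄ ∧ a₄ ^ 2 = 1 + a₃)
        ↔ (a₁ = ε ∧ a₂ = ε ^ 2 - 1 ∧ a₃ = 2 * ε ^ 2 - ε - 1 ∧ a₄ = ε * (ε - 1)) := by
  constructor
  · obtain ⟨ε, hε2, hεc⟩ := root_exists
    exact ⟨ε, ⟨hε2, hεc⟩, fun y ⟨hy2, hyc⟩ => root_unique hy2 hε2 hyc hεc⟩
  · intro ε hε2 hεc a₁ a₂ a₃ a₄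
    constructor
    · rintro ⟨h1, h2, h3, h4, e1, e2, e3, e4⟩
      have ha2 : a₂ = a₁ ^ 2 - 1 := by linarith
      have h1g : 1 < a₁ := by nlinarith
      have ha3 : a₃ = a₁ ^ 3 - 2 * a₁ :=
        mul_left_cancel₀ (ne_of_gt h1)
          (show a₁ * a₃ = a₁ * (a₁ ^ 3 - 2 * a₁) by nlinarith [e2, ha2])
      have hsq : 2 < a₁ ^ 2 := by nlinarith [ha3, h3, h1]
      have h5 : a₂ ^ 2 * a₄ = a₃ ^ 2 - 1 := by linarith
      have hkey : (a₃ ^ 2 - 1) ^ 2 = a₂ ^ 4 * (1 + a₃) := by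
        linear_combination (-(a₂ ^ 2 * a₄ + a₃ ^ 2 - 1)) * h5 + a₂ ^ 4 * e4
      have hfact : a₁ * (a₁ ^ 2 - 2) * (a₁ - 1) * (a₁ + 1) ^ 2 * (a₁ ^ 3 - 2 * a₁ + 1) *
          (a₁ ^ 3 - 2 * a₁ ^ 2 - a₁ + 1) = 0 := by
        rw [ha2, ha3] at hkey
        linear_combination hkey
      have hcubic : a₁ ^ 3 - 2 * a₁ ^ 2 - a₁ + 1 = 0 := by
        have p2 : (0:ℝ) < a₁ ^ 2 - 2 := by linarith
        have p3 : (0:ℝ) < a₁ - 1 := by linarith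
        have p4 : (0:ℝ) < (a₁ + 1) ^ 2 := by positivity
        have p5 : (0:ℝ) < a₁ ^ 3 - 2 * a₁ + 1 := by nlinarith
        have hprod : 0 < a₁ * (a₁ ^ 2 - 2) * (a₁ - 1) * (a₁ + 1) ^ 2 *
            (a₁ ^ 3 - 2 * a₁ + 1) :=
          mul_pos (mul_pos (mul_pos (mul_pos h1 p2) p3) p4) p5
        rcases mul_eq_zero.mp hfact with h | h
        · exact absurd h (ne_of_gt hprod)
        · exact h
      have ha1gt2 : 2 < a₁ := by
        by_contra hle
        push_neg at hle
        nlinarith [sq_nonneg a₁, h1g]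
      have ha1 : a₁ = ε := root_unique ha1gt2 hε2 hcubic hεc
      have hεc' : a₁ ^ 3 - 2 * a₁ ^ 2 - a₁ + 1 = 0 := ha1 ▸ hεc
      refine ⟨ha1, by rw [← ha1]; exact ha2, ?_, ?_⟩
      · rw [← ha1, ha3]; linear_combination hεc'
      · rw [← ha1]
        have hb : (0:ℝ) < a₁ * (a₁ - 1) := by nlinarith
        have hsq4 : a₄ ^ 2 = (a₁ * (a₁ - 1)) ^ 2 := by
          rw [e4, ha3]; linear_combination (-(a₁ - 1)) * hεc'
        have hz : (a₄ - a₁ * (a₁ - 1)) * (a₄ + a₁ * (a₁ - 1)) = 0 := by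
          linear_combination hsq4
        rcases mul_eq_zero.mp hz with h | h
        · linarith
        · linarith
    · rintro ⟨ha1, ha2, ha3, ha4⟩
      rw [ha1, ha2, ha3, ha4]
      refine ⟨by linarith, by nlinarith, by nlinarith, by nlinarith, by ring, ?_, ?_, ?_⟩
      · linear_combination ε * hεc
      · linear_combination (-(ε ^ 3 + ε ^ 2 - 3 * ε)) * hεc
      · linear_combination ε * hεc
end

section
/- Let ε be the unique real number with ε > 2 and ε^3 − 2ε^2 − ε + 1 = 0. Then the tuple (a_1, …, a_6) = (ε, ε^2 − 1, 2ε^2 − ε − 1, ε(ε − 1), ε^2 − 1, ε) is the unique 6-tuple of positive real numbers satisfying a_1^2 = 1 + a_2, a_2^2 = 1 + a_1 a_3, a_3^2 = 1 + a_2 a_4 a_5, a_4^2 = 1 + a_3, a_5^2 = 1 + a_3 a_6, and a_6^2 = 1 + a_5. -/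
set_option maxHeartbeats 1000000


/-- Type `E_6` fixed point: with `ε` the unique real number `> 2` satisfying
`ε³ - 2ε² - ε + 1 = 0`, the tuple `(ε, ε²-1, 2ε²-ε-1, ε(ε-1), ε²-1, ε)` is the
unique positive solution of the type-`E_6` fixed-point equations. -/
theorem stmt6 (ε : ℝ) (hε2 : 2 < ε) (hεeq : ε ^ 3 - 2 * ε ^ 2 - ε + 1 = 0) :
    ∀ a₁ a₂ a₃ a₄ a₅ a₆ : ℝ,
      (0 < a₁ ∧ 0 < a₂ ∧ 0 < a₃ ∧ 0 < a₄ ∧ 0 < a₅ ∧ 0 < a₆ ∧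
        a₁ ^ 2 = 1 + a₂ ∧ a₂ ^ 2 = 1 + a₁ * a₃ ∧ a₃ ^ 2 = 1 + a₂ * a₄ * a₅ ∧
        a₄ ^ 2 = 1 + a₃ ∧ a₅ ^ 2 = 1 + a₃ * a₆ ∧ a₆ ^ 2 = 1 + a₅)
      ↔ (a₁ = ε ∧ a₂ = ε ^ 2 - 1 ∧ a₃ = 2 * ε ^ 2 - ε - 1 ∧
          a₄ = ε * (ε - 1) ∧ a₅ = ε ^ 2 - 1 ∧ a₆ = ε) := by
  intro a₁ a₂ a₃ a₄ a₅ a₆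
  constructor
  · rintro ⟨p1, p2, p3, p4, p5, p6, e1, e2, e3, e4, e5, e6⟩
    -- basic bounds
    have q1 : 1 < a₁ := by nlinarith [sq_nonneg (a₁ - 1)]
    have q6 : 1 < a₆ := by nlinarith [sq_nonneg (a₆ - 1)]
    have q2 : 1 < a₂ := by nlinarith [sq_nonneg (a₂ - 1), mul_pos p1 p3]
    have q5 : 1 < a₅ := by nlinarith [sq_nonneg (a₅ - 1), mul_pos p3 p6]
    have q3 : 1 < a₃ := by
      nlinarith [sq_nonneg (a₃ - 1), mul_pos (mul_pos p2 p4) p5]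
    -- symmetry: a₁ = a₆
    have key : (a₁ - a₆) * ((a₁ + a₆) * (a₂ + a₅) - a₃) = 0 := by
      linear_combination (a₂ + a₅) * e1 - (a₂ + a₅) * e6 + e2 - e5
    have key2 : a₁ * ((a₁ + a₆) * (a₂ + a₅) - a₃) =
        1 + a₂ + a₁ ^ 2 * a₅ + a₁ * a₆ * a₂ + a₁ * a₆ * a₅ := by
      linear_combination a₂ * e1 + e2
    have hkpos : 0 < a₁ * ((a₁ + a₆) * (a₂ + a₅) - a₃) := by
      rw [key2]; positivity
    have hb : (a₁ + a₆) * (a₂ + a₅) - a₃ > 0 := by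
      rcases mul_pos_iff.mp hkpos with ⟨_, h⟩ | ⟨h, _⟩
      · exact h
      · linarith
    have h16 : a₁ = a₆ := by
      rcases mul_eq_zero.mp key with h | h
      · linarith
      · linarith
    clear key key2 hkpos hb
    have h52 : a₅ = a₂ := by nlinarith
    have b2 : a₂ = a₁ ^ 2 - 1 := by linarith
    -- a₃ in terms of a₁
    have h3v : a₃ = a₁ ^ 3 - 2 * a₁ := by
      have hc : a₁ * a₃ = a₁ * (a₁ ^ 3 - 2 * a₁) := by
        linear_combination -e2 + (a₂ + a₁ ^ 2 - 1) * b2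
      exact mul_left_cancel₀ (ne_of_gt p1) hc
    -- hence a₁² > 2
    have q1sq : 2 < a₁ ^ 2 := by nlinarith [q3, h3v, mul_pos p1 p1]
    -- eliminate a₄
    have hC : a₃ ^ 2 - 1 = a₂ ^ 2 * a₄ := by
      linear_combination e3 + a₂ * a₄ * h52
    have hE : (a₃ ^ 2 - 1) ^ 2 = a₂ ^ 4 * (1 + a₃) := by
      linear_combination (a₃ ^ 2 - 1 + a₂ ^ 2 * a₄) * hC + a₂ ^ 4 * e4
    rw [b2, h3v] at hE
    have hg2 : (a₁ ^ 3 - 2 * a₁ ^ 2 - a₁ + 1) *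
        ((a₁ - 1) * (a₁ * (a₁ ^ 2 - 2) * (a₁ ^ 2 - 1) * (a₁ + 1) *
          (a₁ ^ 2 + a₁ - 1))) = 0 := by
      linear_combination hE
    clear hE hC
    have hposf : 0 < (a₁ - 1) * (a₁ * (a₁ ^ 2 - 2) * (a₁ ^ 2 - 1) * (a₁ + 1) *
        (a₁ ^ 2 + a₁ - 1)) := by
      have h1 : 0 < a₁ - 1 := by linarith
      have h2 : 0 < a₁ ^ 2 - 2 := by linarith
      have h3 : 0 < a₁ ^ 2 - 1 := by linarith
      have h4 : 0 < a₁ ^ 2 + a₁ - 1 := by linarith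
      have h5 : 0 < a₁ + 1 := by linarith
      positivity
    have hcubic : a₁ ^ 3 - 2 * a₁ ^ 2 - a₁ + 1 = 0 := by
      rcases mul_eq_zero.mp hg2 with h | h
      · exact h
      · linarith
    clear hg2 hposf
    -- a₁ = ε
    have hfac : (a₁ - ε) * (a₁ ^ 2 + a₁ * ε + ε ^ 2 - 2 * a₁ - 2 * ε - 1) = 0 := by
      linear_combination hcubic - hεeq
    have hqpos : 0 < a₁ ^ 2 + a₁ * ε + ε ^ 2 - 2 * a₁ - 2 * ε - 1 := by
      nlinarith [mul_pos p1 (show (0:ℝ) < ε by linarith), sq_nonneg (ε - 2)]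
    have ha1 : a₁ = ε := by
      rcases mul_eq_zero.mp hfac with h | h
      · linarith
      · linarith
    have ha2 : a₂ = ε ^ 2 - 1 := by rw [b2, ha1]
    have ha3 : a₃ = 2 * ε ^ 2 - ε - 1 := by
      rw [h3v, ha1]; linarith
    have ha4 : a₄ = ε * (ε - 1) := by
      have hsq : a₄ ^ 2 = (ε * (ε - 1)) ^ 2 := by
        linear_combination e4 + ha3 - ε * hεeq
      have hfac4 : (a₄ - ε * (ε - 1)) * (a₄ + ε * (ε - 1)) = 0 := by
        linear_combination hsq
      rcases mul_eq_zero.mp hfac4 with h | h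
      · linarith
      · nlinarith [mul_pos (show (0:ℝ) < ε by linarith)
          (show (0:ℝ) < ε - 1 by linarith)]
    have ha5 : a₅ = ε ^ 2 - 1 := by rw [h52, ha2]
    have ha6 : a₆ = ε := by rw [← h16, ha1]
    exact ⟨ha1, ha2, ha3, ha4, ha5, ha6⟩
  · rintro ⟨h1, h2, h3, h4, h5, h6⟩
    rw [h1, h2, h3, h4, h5, h6]
    refine ⟨by linarith, by nlinarith, by nlinarith, by nlinarith, by nlinarith,
      by linarith, by ring, by linear_combination ε * hεeq,
      by linear_combination (-ε ^ 3 - ε ^ 2 + 3 * ε) * hεeq,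
      by linear_combination ε * hεeq, by linear_combination ε * hεeq, by ring⟩
end

section
/- The tuple (a_1, …, a_7) = ((3+√5)/2, (5+3√5)/2, 6+3√5, √(7+3√5), 2√(7+3√5), 2+√5, √(3+√5)) is the unique 7-tuple of positive real numbers satisfying a_1^2 = 1 + a_2, a_2^2 = 1 + a_1 a_3, a_3^2 = 1 + a_2 a_4 a_5, a_4^2 = 1 + a_3, a_5^2 = 1 + a_3 a_6, a_6^2 = 1 + a_5 a_7, and a_7^2 = 1 + a_6. -/
abbrev Sol (x1 x2 x3 x4 x5 x6 x7 : ℝ) : Prop :=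
  0 < x1 ∧ 0 < x2 ∧ 0 < x3 ∧ 0 < x4 ∧ 0 < x5 ∧ 0 < x6 ∧ 0 < x7 ∧
  x1 ^ 2 = 1 + x2 ∧ x2 ^ 2 = 1 + x1 * x3 ∧ x3 ^ 2 = 1 + x2 * x4 * x5 ∧
  x4 ^ 2 = 1 + x3 ∧ x5 ^ 2 = 1 + x3 * x6 ∧ x6 ^ 2 = 1 + x5 * x7 ∧ x7 ^ 2 = 1 + x6

lemma root_pow {s : ℝ} (hs : 0 ≤ s) (n : ℕ) (hn : n ≠ 0) :
    (s ^ ((n : ℝ)⁻¹)) ^ n = s := by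
  rw [← Real.rpow_natCast (s ^ ((n : ℝ)⁻¹)) n, ← Real.rpow_mul hs,
    inv_mul_cancel₀ (by exact_mod_cast hn), Real.rpow_one]

lemma bound_aux {x y r : ℝ} (hx : 0 < x) (hy : 0 < y) (n : ℕ) (hn : n ≠ 0)
    (h : (y / x) ^ ((n : ℝ)⁻¹) ≤ r) : y ≤ r ^ n * x := by
  have h0 : (0:ℝ) ≤ (y / x) ^ ((n : ℝ)⁻¹) := Real.rpow_nonneg (by positivity) _
  have h1 := pow_le_pow_left₀ h0 h n
  rw [root_pow (by positivity) n hn] at h1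
  calc y = y / x * x := by field_simp
  _ ≤ r ^ n * x := by exact mul_le_mul_of_nonneg_right h1 hx.le

lemma eq_aux {x y r : ℝ} (hx : 0 < x) (hy : 0 < y) (n : ℕ) (hn : n ≠ 0)
    (h : r = (y / x) ^ ((n : ℝ)⁻¹)) : y = r ^ n * x := by
  rw [h, root_pow (by positivity) n hn, div_mul_cancel₀ _ (ne_of_gt hx)]

lemma key (r : ℝ) (n m : ℕ) (xi yi P Q : ℝ) (hr : 1 < r) (hn : 0 < n) (hm : m ≤ 2 * n)
    (hP : 0 ≤ P) (hxeq : xi ^ 2 = 1 + P) (hyeq : yi ^ 2 = 1 + Q)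
    (hyi : yi = r ^ n * xi) (hQ : Q ≤ r ^ m * P) : False := by
  have h2 : 1 < r ^ (2 * n) := one_lt_pow₀ hr (by omega)
  have h3 : r ^ m ≤ r ^ (2 * n) := pow_le_pow_right₀ hr.le hm
  have heq : r ^ (2 * n) * (1 + P) = 1 + Q := by rw [← hxeq, ← hyeq, hyi]; ring
  nlinarith [mul_le_mul_of_nonneg_right h3 hP]

lemma mono (x1 x2 x3 x4 x5 x6 x7 y1 y2 y3 y4 y5 y6 y7 : ℝ)
    (hx : Sol x1 x2 x3 x4 x5 x6 x7) (hy : Sol y1 y2 y3 y4 y5 y6 y7) :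
    y1 ≤ x1 ∧ y2 ≤ x2 ∧ y3 ≤ x3 ∧ y4 ≤ x4 ∧ y5 ≤ x5 ∧ y6 ≤ x6 ∧ y7 ≤ x7 := by
  obtain ⟨hx1, hx2, hx3, hx4, hx5, hx6, hx7, ex1, ex2, ex3, ex4, ex5, ex6, ex7⟩ := hx
  obtain ⟨hy1, hy2, hy3, hy4, hy5, hy6, hy7, ey1, ey2, ey3, ey4, ey5, ey6, ey7⟩ := hy
  set t1 := (y1 / x1) ^ (((2:ℕ) : ℝ)⁻¹) with ht1
  set t2 := (y2 / x2) ^ (((4:ℕ) : ℝ)⁻¹) with ht2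
  set t3 := (y3 / x3) ^ (((6:ℕ) : ℝ)⁻¹) with ht3
  set t4 := (y4 / x4) ^ (((3:ℕ) : ℝ)⁻¹) with ht4
  set t5 := (y5 / x5) ^ (((5:ℕ) : ℝ)⁻¹) with ht5
  set t6 := (y6 / x6) ^ (((4:ℕ) : ℝ)⁻¹) with ht6
  set t7 := (y7 / x7) ^ (((2:ℕ) : ℝ)⁻¹) with ht7
  set r := t1 ⊔ t2 ⊔ t3 ⊔ t4 ⊔ t5 ⊔ t6 ⊔ t7 with hrdef
  have l1 : t1 ≤ r := by simp [hrdef, le_max_iff]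
  have l2 : t2 ≤ r := by simp [hrdef, le_max_iff]
  have l3 : t3 ≤ r := by simp [hrdef, le_max_iff]
  have l4 : t4 ≤ r := by simp [hrdef, le_max_iff]
  have l5 : t5 ≤ r := by simp [hrdef, le_max_iff]
  have l6 : t6 ≤ r := by simp [hrdef, le_max_iff]
  have l7 : t7 ≤ r := by simp [hrdef, le_max_iff]
  have hch : r ≤ t1 ∨ r ≤ t2 ∨ r ≤ t3 ∨ r ≤ t4 ∨ r ≤ t5 ∨ r ≤ t6 ∨ r ≤ t7 := by
    by_contra hc
    push_neg at hc
    obtain ⟨c1, c2, c3, c4, c5, c6, c7⟩ := hc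
    have : r < r := by
      rw [hrdef]
      simp only [max_lt_iff]
      tauto
    exact absurd this (lt_irrefl r)
  have hb1 : y1 ≤ r ^ 2 * x1 := bound_aux hx1 hy1 2 (by norm_num) l1
  have hb2 : y2 ≤ r ^ 4 * x2 := bound_aux hx2 hy2 4 (by norm_num) l2
  have hb3 : y3 ≤ r ^ 6 * x3 := bound_aux hx3 hy3 6 (by norm_num) l3
  have hb4 : y4 ≤ r ^ 3 * x4 := bound_aux hx4 hy4 3 (by norm_num) l4
  have hb5 : y5 ≤ r ^ 5 * x5 := bound_aux hx5 hy5 5 (by norm_num) l5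
  have hb6 : y6 ≤ r ^ 4 * x6 := bound_aux hx6 hy6 4 (by norm_num) l6
  have hb7 : y7 ≤ r ^ 2 * x7 := bound_aux hx7 hy7 2 (by norm_num) l7
  have hr0 : 0 ≤ r := le_trans (Real.rpow_nonneg (by positivity) _) l1
  clear_value t1 t2 t3 t4 t5 t6 t7 r
  by_cases hr : r ≤ 1
  · have hp : ∀ n : ℕ, r ^ n ≤ 1 := fun n => pow_le_one₀ hr0 hr
    have step : ∀ n : ℕ, ∀ x y : ℝ, 0 < x → y ≤ r ^ n * x → y ≤ x := by
      intro n x y hxp hle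
      calc y ≤ r ^ n * x := hle
      _ ≤ 1 * x := mul_le_mul_of_nonneg_right (hp n) hxp.le
      _ = x := one_mul x
    exact ⟨step 2 _ _ hx1 hb1, step 4 _ _ hx2 hb2, step 6 _ _ hx3 hb3, step 3 _ _ hx4 hb4,
      step 5 _ _ hx5 hb5, step 4 _ _ hx6 hb6, step 2 _ _ hx7 hb7⟩
  · exfalso
    push_neg at hr
    rcases hch with h | h | h | h | h | h | h
    · have he : y1 = r ^ 2 * x1 := eq_aux hx1 hy1 2 (by norm_num) ((le_antisymm h l1).trans ht1)
      exact key r 2 4 x1 y1 x2 y2 hr (by norm_num) (by norm_num) hx2.le ex1 ey1 he hb2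
    · have he : y2 = r ^ 4 * x2 := eq_aux hx2 hy2 4 (by norm_num) ((le_antisymm h l2).trans ht2)
      have hQ : y1 * y3 ≤ r ^ 8 * (x1 * x3) := by
        calc y1 * y3 ≤ (r ^ 2 * x1) * (r ^ 6 * x3) :=
              mul_le_mul hb1 hb3 hy3.le (by positivity)
        _ = r ^ 8 * (x1 * x3) := by ring
      exact key r 4 8 x2 y2 (x1 * x3) (y1 * y3) hr (by norm_num) (by norm_num)
        (by positivity) ex2 ey2 he hQ
    · have he : y3 = r ^ 6 * x3 := eq_aux hx3 hy3 6 (by norm_num) ((le_antisymm h l3).trans ht3)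
      have hQ : y2 * y4 * y5 ≤ r ^ 12 * (x2 * x4 * x5) := by
        have h24 : y2 * y4 ≤ (r ^ 4 * x2) * (r ^ 3 * x4) :=
          mul_le_mul hb2 hb4 hy4.le (by positivity)
        calc y2 * y4 * y5 ≤ ((r ^ 4 * x2) * (r ^ 3 * x4)) * (r ^ 5 * x5) :=
              mul_le_mul h24 hb5 hy5.le (by positivity)
        _ = r ^ 12 * (x2 * x4 * x5) := by ring
      exact key r 6 12 x3 y3 (x2 * x4 * x5) (y2 * y4 * y5) hr (by norm_num) (by norm_num)
        (by positivity) ex3 ey3 he hQ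
    · have he : y4 = r ^ 3 * x4 := eq_aux hx4 hy4 3 (by norm_num) ((le_antisymm h l4).trans ht4)
      exact key r 3 6 x4 y4 x3 y3 hr (by norm_num) (by norm_num) hx3.le ex4 ey4 he hb3
    · have he : y5 = r ^ 5 * x5 := eq_aux hx5 hy5 5 (by norm_num) ((le_antisymm h l5).trans ht5)
      have hQ : y3 * y6 ≤ r ^ 10 * (x3 * x6) := by
        calc y3 * y6 ≤ (r ^ 6 * x3) * (r ^ 4 * x6) :=
              mul_le_mul hb3 hb6 hy6.le (by positivity)
        _ = r ^ 10 * (x3 * x6) := by ring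
      exact key r 5 10 x5 y5 (x3 * x6) (y3 * y6) hr (by norm_num) (by norm_num)
        (by positivity) ex5 ey5 he hQ
    · have he : y6 = r ^ 4 * x6 := eq_aux hx6 hy6 4 (by norm_num) ((le_antisymm h l6).trans ht6)
      have hQ : y5 * y7 ≤ r ^ 7 * (x5 * x7) := by
        calc y5 * y7 ≤ (r ^ 5 * x5) * (r ^ 2 * x7) :=
              mul_le_mul hb5 hb7 hy7.le (by positivity)
        _ = r ^ 7 * (x5 * x7) := by ring
      exact key r 4 7 x6 y6 (x5 * x7) (y5 * y7) hr (by norm_num) (by norm_num)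
        (by positivity) ex6 ey6 he hQ
    · have he : y7 = r ^ 2 * x7 := eq_aux hx7 hy7 2 (by norm_num) ((le_antisymm h l7).trans ht7)
      exact key r 2 4 x7 y7 x6 y6 hr (by norm_num) (by norm_num) hx6.le ex7 ey7 he hb6

lemma sq_of_sq {x y : ℝ} (hx : 0 ≤ x) (hy : 0 ≤ y) (h : x ^ 2 = y ^ 2) : x = y := by
  have h2 : (x - y) * (x + y) = 0 := by linear_combination h
  rcases mul_eq_zero.mp h2 with h3 | h3
  · linarith
  · nlinarith

lemma explicit_sol : Sol ((3 + Real.sqrt 5) / 2) ((5 + 3 * Real.sqrt 5) / 2)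
    (6 + 3 * Real.sqrt 5) (Real.sqrt (7 + 3 * Real.sqrt 5))
    (2 * Real.sqrt (7 + 3 * Real.sqrt 5)) (2 + Real.sqrt 5)
    (Real.sqrt (3 + Real.sqrt 5)) := by
  have h5 : Real.sqrt 5 ^ 2 = 5 := Real.sq_sqrt (by norm_num)
  have h5n : 0 ≤ Real.sqrt 5 := Real.sqrt_nonneg 5
  have h7 : (0:ℝ) ≤ 7 + 3 * Real.sqrt 5 := by linarith
  have h3 : (0:ℝ) ≤ 3 + Real.sqrt 5 := by linarith
  have hq : Real.sqrt (7 + 3 * Real.sqrt 5) ^ 2 = 7 + 3 * Real.sqrt 5 := Real.sq_sqrt h7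
  have hp : Real.sqrt (3 + Real.sqrt 5) ^ 2 = 3 + Real.sqrt 5 := Real.sq_sqrt h3
  have hqn : 0 ≤ Real.sqrt (7 + 3 * Real.sqrt 5) := Real.sqrt_nonneg _
  have hpn : 0 ≤ Real.sqrt (3 + Real.sqrt 5) := Real.sqrt_nonneg _
  have hqp : Real.sqrt (7 + 3 * Real.sqrt 5) * Real.sqrt (3 + Real.sqrt 5)
      = 4 + 2 * Real.sqrt 5 := by
    apply sq_of_sq (by positivity) (by linarith)
    linear_combination (Real.sqrt (3 + Real.sqrt 5)) ^ 2 * hq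
      + (7 + 3 * Real.sqrt 5) * hp - h5
  refine ⟨by positivity, by positivity, by positivity, by positivity, by positivity,
    by positivity, by positivity, ?_, ?_, ?_, ?_, ?_, ?_, ?_⟩
  · linear_combination h5 / 4
  · linear_combination (3/4) * h5
  · linear_combination (-(5 + 3 * Real.sqrt 5)) * hq
  · linear_combination hq
  · linear_combination 4 * hq - 3 * h5
  · linear_combination h5 - 2 * hqp
  · linear_combination hp

/-- Type `E_7` fixed point: the explicit tuple is the unique positive solution
of the type-`E_7` fixed-point equations. -/
theorem stmt7 :
    ∀ a₁ a₂ a₃ a₄ a₅ a₆ a₇ : ℝ,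
      (0 < a₁ ∧ 0 < a₂ ∧ 0 < a₃ ∧ 0 < a₄ ∧ 0 < a₅ ∧ 0 < a₆ ∧ 0 < a₇ ∧
        a₁ ^ 2 = 1 + a₂ ∧ a₂ ^ 2 = 1 + a₁ * a₃ ∧ a₃ ^ 2 = 1 + a₂ * a₄ * a₅ ∧
        a₄ ^ 2 = 1 + a₃ ∧ a₅ ^ 2 = 1 + a₃ * a₆ ∧ a₆ ^ 2 = 1 + a₅ * a₇ ∧
        a₇ ^ 2 = 1 + a₆)
      ↔ (a₁ = (3 + Real.sqrt 5) / 2 ∧ a₂ = (5 + 3 * Real.sqrt 5) / 2 ∧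
          a₃ = 6 + 3 * Real.sqrt 5 ∧ a₄ = Real.sqrt (7 + 3 * Real.sqrt 5) ∧
          a₅ = 2 * Real.sqrt (7 + 3 * Real.sqrt 5) ∧ a₆ = 2 + Real.sqrt 5 ∧
          a₇ = Real.sqrt (3 + Real.sqrt 5)) := by
  intro a₁ a₂ a₃ a₄ a₅ a₆ a₇
  constructor
  · intro h
    obtain ⟨u1, u2, u3, u4, u5, u6, u7⟩ := mono _ _ _ _ _ _ _ _ _ _ _ _ _ _ explicit_sol h
    obtain ⟨v1, v2, v3, v4, v5, v6, v7⟩ := mono _ _ _ _ _ _ _ _ _ _ _ _ _ _ h explicit_sol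
    exact ⟨le_antisymm u1 v1, le_antisymm u2 v2, le_antisymm u3 v3, le_antisymm u4 v4,
      le_antisymm u5 v5, le_antisymm u6 v6, le_antisymm u7 v7⟩
  · rintro ⟨rfl, rfl, rfl, rfl, rfl, rfl, rfl⟩
    exact explicit_sol
end

section
/- The tuple (a_1, …, a_8) = (2+√2, 5+4√2, 16+12√2, 3+2√2, 9+6√2, 5+3√2, 2+2√2, 1+√2) is the unique 8-tuple of positive real numbers satisfying a_1^2 = 1 + a_2, a_2^2 = 1 + a_1 a_3, a_3^2 = 1 + a_2 a_4 a_5, a_4^2 = 1 + a_3, a_5^2 = 1 + a_3 a_6, a_6^2 = 1 + a_5 a_7, a_7^2 = 1 + a_6 a_8, and a_8^2 = 1 + a_7. -/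
lemma rpow_inv_natpow {x : ℝ} (h0 : 0 ≤ x) (w : ℕ) (hw : w ≠ 0) :
    (x ^ ((w : ℝ))⁻¹) ^ w = x := by
  have hw' : ((w:ℝ)) ≠ 0 := Nat.cast_ne_zero.mpr hw
  rw [← Real.rpow_natCast (x ^ ((w:ℝ))⁻¹) w, ← Real.rpow_mul h0, inv_mul_cancel₀ hw',
    Real.rpow_one]

lemma ratio_le {x b t : ℝ} (hx : 0 ≤ x) (hb : 0 < b) (w : ℕ) (hw : w ≠ 0)
    (h : (x / b) ^ ((w : ℝ))⁻¹ ≤ t) : x ≤ t ^ w * b := by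
  have h0 : 0 ≤ x / b := div_nonneg hx hb.le
  have h1 : x / b ≤ t ^ w := by
    rw [← rpow_inv_natpow h0 w hw]
    exact pow_le_pow_left₀ (Real.rpow_nonneg h0 _) h w
  rw [div_le_iff₀ hb] at h1; linarith

lemma ratio_eq {x b t : ℝ} (hx : 0 ≤ x) (hb : 0 < b) (w : ℕ) (hw : w ≠ 0)
    (h : (x / b) ^ ((w : ℝ))⁻¹ = t) : x = t ^ w * b := by
  have h0 : 0 ≤ x / b := div_nonneg hx hb.le
  have h1 : x / b = t ^ w := by rw [← h, rpow_inv_natpow h0 w hw]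
  rw [div_eq_iff hb.ne'] at h1; exact h1

lemma node_contra {t bk ak Pa Pb : ℝ} (w s : ℕ) (hw : w ≠ 0) (hsw : s ≤ 2*w)
    (ht : 1 < t) (hPb : 0 < Pb)
    (heq : ak = t ^ w * bk) (hak : ak ^ 2 = 1 + Pa) (hbk : bk ^ 2 = 1 + Pb)
    (hPa : Pa ≤ t ^ s * Pb) : False := by
  have hsle : t ^ s ≤ t ^ (2*w) := pow_le_pow_right₀ ht.le hsw
  have h1 : 1 < t ^ (2*w) := one_lt_pow₀ ht (by omega)
  have hsq : ak ^ 2 = t ^ (2*w) * bk ^ 2 := by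
    rw [heq, mul_pow, ← pow_mul, Nat.mul_comm]
  nlinarith [mul_nonneg (sub_nonneg.2 hsle) hPb.le]
lemma sol_le (a1 a2 a3 a4 a5 a6 a7 a8 b1 b2 b3 b4 b5 b6 b7 b8 : ℝ)
    (p1 : 0 < a1) (p2 : 0 < a2) (p3 : 0 < a3) (p4 : 0 < a4) (p5 : 0 < a5) (p6 : 0 < a6) (p7 : 0 < a7) (p8 : 0 < a8)
    (q1 : 0 < b1) (q2 : 0 < b2) (q3 : 0 < b3) (q4 : 0 < b4) (q5 : 0 < b5) (q6 : 0 < b6) (q7 : 0 < b7) (q8 : 0 < b8)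
    (e1 : a1 ^ 2 = 1 + a2) (e2 : a2 ^ 2 = 1 + a1 * a3) (e3 : a3 ^ 2 = 1 + a2 * a4 * a5) (e4 : a4 ^ 2 = 1 + a3) (e5 : a5 ^ 2 = 1 + a3 * a6) (e6 : a6 ^ 2 = 1 + a5 * a7) (e7 : a7 ^ 2 = 1 + a6 * a8) (e8 : a8 ^ 2 = 1 + a7)
    (f1 : b1 ^ 2 = 1 + b2) (f2 : b2 ^ 2 = 1 + b1 * b3) (f3 : b3 ^ 2 = 1 + b2 * b4 * b5) (f4 : b4 ^ 2 = 1 + b3) (f5 : b5 ^ 2 = 1 + b3 * b6) (f6 : b6 ^ 2 = 1 + b5 * b7) (f7 : b7 ^ 2 = 1 + b6 * b8) (f8 : b8 ^ 2 = 1 + b7) :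
    a1 ≤ b1 ∧ a2 ≤ b2 ∧ a3 ≤ b3 ∧ a4 ≤ b4 ∧ a5 ≤ b5 ∧ a6 ≤ b6 ∧ a7 ≤ b7 ∧ a8 ≤ b8 := by
  obtain ⟨T, hT⟩ : ∃ t : ℝ, t = (max ((a1 / b1) ^ (((2 : ℕ) : ℝ))⁻¹) (max ((a2 / b2) ^ (((4 : ℕ) : ℝ))⁻¹) (max ((a3 / b3) ^ (((6 : ℕ) : ℝ))⁻¹) (max ((a4 / b4) ^ (((3 : ℕ) : ℝ))⁻¹) (max ((a5 / b5) ^ (((5 : ℕ) : ℝ))⁻¹) (max ((a6 / b6) ^ (((4 : ℕ) : ℝ))⁻¹) (max ((a7 / b7) ^ (((3 : ℕ) : ℝ))⁻¹) ((a8 / b8) ^ (((2 : ℕ) : ℝ))⁻¹)))))))) := ⟨_, rfl⟩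
  have hle1 : ((a1 / b1) ^ (((2 : ℕ) : ℝ))⁻¹) ≤ T := by rw [hT]; exact le_max_left _ _
  have hle2 : ((a2 / b2) ^ (((4 : ℕ) : ℝ))⁻¹) ≤ T := by rw [hT]; exact le_max_of_le_right (le_max_left _ _)
  have hle3 : ((a3 / b3) ^ (((6 : ℕ) : ℝ))⁻¹) ≤ T := by rw [hT]; exact le_max_of_le_right (le_max_of_le_right (le_max_left _ _))
  have hle4 : ((a4 / b4) ^ (((3 : ℕ) : ℝ))⁻¹) ≤ T := by rw [hT]; exact le_max_of_le_right (le_max_of_le_right (le_max_of_le_right (le_max_left _ _)))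
  have hle5 : ((a5 / b5) ^ (((5 : ℕ) : ℝ))⁻¹) ≤ T := by rw [hT]; exact le_max_of_le_right (le_max_of_le_right (le_max_of_le_right (le_max_of_le_right (le_max_left _ _))))
  have hle6 : ((a6 / b6) ^ (((4 : ℕ) : ℝ))⁻¹) ≤ T := by rw [hT]; exact le_max_of_le_right (le_max_of_le_right (le_max_of_le_right (le_max_of_le_right (le_max_of_le_right (le_max_left _ _)))))
  have hle7 : ((a7 / b7) ^ (((3 : ℕ) : ℝ))⁻¹) ≤ T := by rw [hT]; exact le_max_of_le_right (le_max_of_le_right (le_max_of_le_right (le_max_of_le_right (le_max_of_le_right (le_max_of_le_right (le_max_left _ _))))))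
  have hle8 : ((a8 / b8) ^ (((2 : ℕ) : ℝ))⁻¹) ≤ T := by rw [hT]; exact le_max_of_le_right (le_max_of_le_right (le_max_of_le_right (le_max_of_le_right (le_max_of_le_right (le_max_of_le_right (le_max_right _ _))))))
  have ht0 : (0:ℝ) ≤ T := le_trans (Real.rpow_nonneg (div_nonneg p1.le q1.le) _) hle1
  have hA1 : a1 ≤ T ^ 2 * b1 := ratio_le p1.le q1 2 (by norm_num) hle1
  have hA2 : a2 ≤ T ^ 4 * b2 := ratio_le p2.le q2 4 (by norm_num) hle2
  have hA3 : a3 ≤ T ^ 6 * b3 := ratio_le p3.le q3 6 (by norm_num) hle3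
  have hA4 : a4 ≤ T ^ 3 * b4 := ratio_le p4.le q4 3 (by norm_num) hle4
  have hA5 : a5 ≤ T ^ 5 * b5 := ratio_le p5.le q5 5 (by norm_num) hle5
  have hA6 : a6 ≤ T ^ 4 * b6 := ratio_le p6.le q6 4 (by norm_num) hle6
  have hA7 : a7 ≤ T ^ 3 * b7 := ratio_le p7.le q7 3 (by norm_num) hle7
  have hA8 : a8 ≤ T ^ 2 * b8 := ratio_le p8.le q8 2 (by norm_num) hle8
  have hTle : T ≤ 1 := by
    by_contra hTgt
    push_neg at hTgt
    have htpos : (0:ℝ) < T := lt_trans zero_lt_one hTgt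
    have hc1 : T = (max ((a1 / b1) ^ (((2 : ℕ) : ℝ))⁻¹) (max ((a2 / b2) ^ (((4 : ℕ) : ℝ))⁻¹) (max ((a3 / b3) ^ (((6 : ℕ) : ℝ))⁻¹) (max ((a4 / b4) ^ (((3 : ℕ) : ℝ))⁻¹) (max ((a5 / b5) ^ (((5 : ℕ) : ℝ))⁻¹) (max ((a6 / b6) ^ (((4 : ℕ) : ℝ))⁻¹) (max ((a7 / b7) ^ (((3 : ℕ) : ℝ))⁻¹) ((a8 / b8) ^ (((2 : ℕ) : ℝ))⁻¹)))))))) := hT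
    rcases max_choice ((a1 / b1) ^ (((2 : ℕ) : ℝ))⁻¹) (max ((a2 / b2) ^ (((4 : ℕ) : ℝ))⁻¹) (max ((a3 / b3) ^ (((6 : ℕ) : ℝ))⁻¹) (max ((a4 / b4) ^ (((3 : ℕ) : ℝ))⁻¹) (max ((a5 / b5) ^ (((5 : ℕ) : ℝ))⁻¹) (max ((a6 / b6) ^ (((4 : ℕ) : ℝ))⁻¹) (max ((a7 / b7) ^ (((3 : ℕ) : ℝ))⁻¹) ((a8 / b8) ^ (((2 : ℕ) : ℝ))⁻¹))))))) with h | h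
    · have heqT : T = ((a1 / b1) ^ (((2 : ℕ) : ℝ))⁻¹) := hc1.trans h
      have heq : a1 = T ^ 2 * b1 := ratio_eq p1.le q1 2 (by norm_num) heqT.symm
      have hPb : (0:ℝ) < b2 := by positivity
      have hPa : a2 ≤ T ^ 4 * b2 := hA2
      exact node_contra 2 4 (by norm_num) (by norm_num) hTgt hPb heq e1 f1 hPa
    · have hc2 : T = (max ((a2 / b2) ^ (((4 : ℕ) : ℝ))⁻¹) (max ((a3 / b3) ^ (((6 : ℕ) : ℝ))⁻¹) (max ((a4 / b4) ^ (((3 : ℕ) : ℝ))⁻¹) (max ((a5 / b5) ^ (((5 : ℕ) : ℝ))⁻¹) (max ((a6 / b6) ^ (((4 : ℕ) : ℝ))⁻¹) (max ((a7 / b7) ^ (((3 : ℕ) : ℝ))⁻¹) ((a8 / b8) ^ (((2 : ℕ) : ℝ))⁻¹))))))) := hc1.trans h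
      rcases max_choice ((a2 / b2) ^ (((4 : ℕ) : ℝ))⁻¹) (max ((a3 / b3) ^ (((6 : ℕ) : ℝ))⁻¹) (max ((a4 / b4) ^ (((3 : ℕ) : ℝ))⁻¹) (max ((a5 / b5) ^ (((5 : ℕ) : ℝ))⁻¹) (max ((a6 / b6) ^ (((4 : ℕ) : ℝ))⁻¹) (max ((a7 / b7) ^ (((3 : ℕ) : ℝ))⁻¹) ((a8 / b8) ^ (((2 : ℕ) : ℝ))⁻¹)))))) with h | h
      · have heqT : T = ((a2 / b2) ^ (((4 : ℕ) : ℝ))⁻¹) := hc2.trans h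
        have heq : a2 = T ^ 4 * b2 := ratio_eq p2.le q2 4 (by norm_num) heqT.symm
        have hPb : (0:ℝ) < b1 * b3 := by positivity
        have h2 : a1 * a3 ≤ (T ^ 2 * b1) * (T ^ 6 * b3) := mul_le_mul hA1 hA3 p3.le (by positivity)
        have hPa : a1 * a3 ≤ T ^ 8 * (b1 * b3) := le_trans h2 (le_of_eq (by ring))
        exact node_contra 4 8 (by norm_num) (by norm_num) hTgt hPb heq e2 f2 hPa
      · have hc3 : T = (max ((a3 / b3) ^ (((6 : ℕ) : ℝ))⁻¹) (max ((a4 / b4) ^ (((3 : ℕ) : ℝ))⁻¹) (max ((a5 / b5) ^ (((5 : ℕ) : ℝ))⁻¹) (max ((a6 / b6) ^ (((4 : ℕ) : ℝ))⁻¹) (max ((a7 / b7) ^ (((3 : ℕ) : ℝ))⁻¹) ((a8 / b8) ^ (((2 : ℕ) : ℝ))⁻¹)))))) := hc2.trans h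
        rcases max_choice ((a3 / b3) ^ (((6 : ℕ) : ℝ))⁻¹) (max ((a4 / b4) ^ (((3 : ℕ) : ℝ))⁻¹) (max ((a5 / b5) ^ (((5 : ℕ) : ℝ))⁻¹) (max ((a6 / b6) ^ (((4 : ℕ) : ℝ))⁻¹) (max ((a7 / b7) ^ (((3 : ℕ) : ℝ))⁻¹) ((a8 / b8) ^ (((2 : ℕ) : ℝ))⁻¹))))) with h | h
        · have heqT : T = ((a3 / b3) ^ (((6 : ℕ) : ℝ))⁻¹) := hc3.trans h
          have heq : a3 = T ^ 6 * b3 := ratio_eq p3.le q3 6 (by norm_num) heqT.symm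
          have hPb : (0:ℝ) < b2 * b4 * b5 := by positivity
          have h2 : a2 * a4 ≤ (T ^ 4 * b2) * (T ^ 3 * b4) := mul_le_mul hA2 hA4 p4.le (by positivity)
          have h3 : a2 * a4 * a5 ≤ ((T ^ 4 * b2) * (T ^ 3 * b4)) * (T ^ 5 * b5) := mul_le_mul h2 hA5 p5.le (by positivity)
          have hPa : a2 * a4 * a5 ≤ T ^ 12 * (b2 * b4 * b5) := le_trans h3 (le_of_eq (by ring))
          exact node_contra 6 12 (by norm_num) (by norm_num) hTgt hPb heq e3 f3 hPa
        · have hc4 : T = (max ((a4 / b4) ^ (((3 : ℕ) : ℝ))⁻¹) (max ((a5 / b5) ^ (((5 : ℕ) : ℝ))⁻¹) (max ((a6 / b6) ^ (((4 : ℕ) : ℝ))⁻¹) (max ((a7 / b7) ^ (((3 : ℕ) : ℝ))⁻¹) ((a8 / b8) ^ (((2 : ℕ) : ℝ))⁻¹))))) := hc3.trans h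
          rcases max_choice ((a4 / b4) ^ (((3 : ℕ) : ℝ))⁻¹) (max ((a5 / b5) ^ (((5 : ℕ) : ℝ))⁻¹) (max ((a6 / b6) ^ (((4 : ℕ) : ℝ))⁻¹) (max ((a7 / b7) ^ (((3 : ℕ) : ℝ))⁻¹) ((a8 / b8) ^ (((2 : ℕ) : ℝ))⁻¹)))) with h | h
          · have heqT : T = ((a4 / b4) ^ (((3 : ℕ) : ℝ))⁻¹) := hc4.trans h
            have heq : a4 = T ^ 3 * b4 := ratio_eq p4.le q4 3 (by norm_num) heqT.symm
            have hPb : (0:ℝ) < b3 := by positivity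
            have hPa : a3 ≤ T ^ 6 * b3 := hA3
            exact node_contra 3 6 (by norm_num) (by norm_num) hTgt hPb heq e4 f4 hPa
          · have hc5 : T = (max ((a5 / b5) ^ (((5 : ℕ) : ℝ))⁻¹) (max ((a6 / b6) ^ (((4 : ℕ) : ℝ))⁻¹) (max ((a7 / b7) ^ (((3 : ℕ) : ℝ))⁻¹) ((a8 / b8) ^ (((2 : ℕ) : ℝ))⁻¹)))) := hc4.trans h
            rcases max_choice ((a5 / b5) ^ (((5 : ℕ) : ℝ))⁻¹) (max ((a6 / b6) ^ (((4 : ℕ) : ℝ))⁻¹) (max ((a7 / b7) ^ (((3 : ℕ) : ℝ))⁻¹) ((a8 / b8) ^ (((2 : ℕ) : ℝ))⁻¹))) with h | h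
            · have heqT : T = ((a5 / b5) ^ (((5 : ℕ) : ℝ))⁻¹) := hc5.trans h
              have heq : a5 = T ^ 5 * b5 := ratio_eq p5.le q5 5 (by norm_num) heqT.symm
              have hPb : (0:ℝ) < b3 * b6 := by positivity
              have h2 : a3 * a6 ≤ (T ^ 6 * b3) * (T ^ 4 * b6) := mul_le_mul hA3 hA6 p6.le (by positivity)
              have hPa : a3 * a6 ≤ T ^ 10 * (b3 * b6) := le_trans h2 (le_of_eq (by ring))
              exact node_contra 5 10 (by norm_num) (by norm_num) hTgt hPb heq e5 f5 hPa
            · have hc6 : T = (max ((a6 / b6) ^ (((4 : ℕ) : ℝ))⁻¹) (max ((a7 / b7) ^ (((3 : ℕ) : ℝ))⁻¹) ((a8 / b8) ^ (((2 : ℕ) : ℝ))⁻¹))) := hc5.trans h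
              rcases max_choice ((a6 / b6) ^ (((4 : ℕ) : ℝ))⁻¹) (max ((a7 / b7) ^ (((3 : ℕ) : ℝ))⁻¹) ((a8 / b8) ^ (((2 : ℕ) : ℝ))⁻¹)) with h | h
              · have heqT : T = ((a6 / b6) ^ (((4 : ℕ) : ℝ))⁻¹) := hc6.trans h
                have heq : a6 = T ^ 4 * b6 := ratio_eq p6.le q6 4 (by norm_num) heqT.symm
                have hPb : (0:ℝ) < b5 * b7 := by positivity
                have h2 : a5 * a7 ≤ (T ^ 5 * b5) * (T ^ 3 * b7) := mul_le_mul hA5 hA7 p7.le (by positivity)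
                have hPa : a5 * a7 ≤ T ^ 8 * (b5 * b7) := le_trans h2 (le_of_eq (by ring))
                exact node_contra 4 8 (by norm_num) (by norm_num) hTgt hPb heq e6 f6 hPa
              · have hc7 : T = (max ((a7 / b7) ^ (((3 : ℕ) : ℝ))⁻¹) ((a8 / b8) ^ (((2 : ℕ) : ℝ))⁻¹)) := hc6.trans h
                rcases max_choice ((a7 / b7) ^ (((3 : ℕ) : ℝ))⁻¹) ((a8 / b8) ^ (((2 : ℕ) : ℝ))⁻¹) with h | h
                · have heqT : T = ((a7 / b7) ^ (((3 : ℕ) : ℝ))⁻¹) := hc7.trans h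
                  have heq : a7 = T ^ 3 * b7 := ratio_eq p7.le q7 3 (by norm_num) heqT.symm
                  have hPb : (0:ℝ) < b6 * b8 := by positivity
                  have h2 : a6 * a8 ≤ (T ^ 4 * b6) * (T ^ 2 * b8) := mul_le_mul hA6 hA8 p8.le (by positivity)
                  have hPa : a6 * a8 ≤ T ^ 6 * (b6 * b8) := le_trans h2 (le_of_eq (by ring))
                  exact node_contra 3 6 (by norm_num) (by norm_num) hTgt hPb heq e7 f7 hPa
                · have hc8 : T = ((a8 / b8) ^ (((2 : ℕ) : ℝ))⁻¹) := hc7.trans h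
                  have heqT : T = ((a8 / b8) ^ (((2 : ℕ) : ℝ))⁻¹) := hc8
                  have heq : a8 = T ^ 2 * b8 := ratio_eq p8.le q8 2 (by norm_num) heqT.symm
                  have hPb : (0:ℝ) < b7 := by positivity
                  have hPa : a7 ≤ T ^ 3 * b7 := hA7
                  exact node_contra 2 3 (by norm_num) (by norm_num) hTgt hPb heq e8 f8 hPa
  have hf1 : a1 ≤ b1 := hA1.trans (mul_le_of_le_one_left q1.le (pow_le_one₀ ht0 hTle))
  have hf2 : a2 ≤ b2 := hA2.trans (mul_le_of_le_one_left q2.le (pow_le_one₀ ht0 hTle))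
  have hf3 : a3 ≤ b3 := hA3.trans (mul_le_of_le_one_left q3.le (pow_le_one₀ ht0 hTle))
  have hf4 : a4 ≤ b4 := hA4.trans (mul_le_of_le_one_left q4.le (pow_le_one₀ ht0 hTle))
  have hf5 : a5 ≤ b5 := hA5.trans (mul_le_of_le_one_left q5.le (pow_le_one₀ ht0 hTle))
  have hf6 : a6 ≤ b6 := hA6.trans (mul_le_of_le_one_left q6.le (pow_le_one₀ ht0 hTle))
  have hf7 : a7 ≤ b7 := hA7.trans (mul_le_of_le_one_left q7.le (pow_le_one₀ ht0 hTle))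
  have hf8 : a8 ≤ b8 := hA8.trans (mul_le_of_le_one_left q8.le (pow_le_one₀ ht0 hTle))
  exact ⟨hf1, hf2, hf3, hf4, hf5, hf6, hf7, hf8⟩



/-- Type `E_8` fixed point: the explicit tuple is the unique positive solution
of the type-`E_8` fixed-point equations. -/
theorem stmt8 :
    ∀ a₁ a₂ a₃ a₄ a₅ a₆ a₇ a₈ : ℝ,
      (0 < a₁ ∧ 0 < a₂ ∧ 0 < a₃ ∧ 0 < a₄ ∧ 0 < a₅ ∧ 0 < a₆ ∧ 0 < a₇ ∧ 0 < a₈ ∧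
        a₁ ^ 2 = 1 + a₂ ∧ a₂ ^ 2 = 1 + a₁ * a₃ ∧ a₃ ^ 2 = 1 + a₂ * a₄ * a₅ ∧
        a₄ ^ 2 = 1 + a₃ ∧ a₅ ^ 2 = 1 + a₃ * a₆ ∧ a₆ ^ 2 = 1 + a₅ * a₇ ∧
        a₇ ^ 2 = 1 + a₆ * a₈ ∧ a₈ ^ 2 = 1 + a₇)
      ↔ (a₁ = 2 + Real.sqrt 2 ∧ a₂ = 5 + 4 * Real.sqrt 2 ∧
          a₃ = 16 + 12 * Real.sqrt 2 ∧ a₄ = 3 + 2 * Real.sqrt 2 ∧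
          a₅ = 9 + 6 * Real.sqrt 2 ∧ a₆ = 5 + 3 * Real.sqrt 2 ∧
          a₇ = 2 + 2 * Real.sqrt 2 ∧ a₈ = 1 + Real.sqrt 2) := by
  have s2 : Real.sqrt 2 ^ 2 = 2 := Real.sq_sqrt (by norm_num)
  have s3 : Real.sqrt 2 ^ 3 = 2 * Real.sqrt 2 := by rw [pow_succ, s2]
  have s2nn : (0:ℝ) ≤ Real.sqrt 2 := Real.sqrt_nonneg 2
  have q1 : (0:ℝ) < (2 + Real.sqrt 2) := by positivity
  have q2 : (0:ℝ) < (5 + 4 * Real.sqrt 2) := by positivity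
  have q3 : (0:ℝ) < (16 + 12 * Real.sqrt 2) := by positivity
  have q4 : (0:ℝ) < (3 + 2 * Real.sqrt 2) := by positivity
  have q5 : (0:ℝ) < (9 + 6 * Real.sqrt 2) := by positivity
  have q6 : (0:ℝ) < (5 + 3 * Real.sqrt 2) := by positivity
  have q7 : (0:ℝ) < (2 + 2 * Real.sqrt 2) := by positivity
  have q8 : (0:ℝ) < (1 + Real.sqrt 2) := by positivity
  have f1 : (2 + Real.sqrt 2) ^ 2 = 1 + (5 + 4 * Real.sqrt 2) := by nlinarith [s2, s3, s2nn]
  have f2 : (5 + 4 * Real.sqrt 2) ^ 2 = 1 + (2 + Real.sqrt 2) * (16 + 12 * Real.sqrt 2) := by nlinarith [s2, s3, s2nn]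
  have f3 : (16 + 12 * Real.sqrt 2) ^ 2 = 1 + (5 + 4 * Real.sqrt 2) * (3 + 2 * Real.sqrt 2) * (9 + 6 * Real.sqrt 2) := by nlinarith [s2, s3, s2nn]
  have f4 : (3 + 2 * Real.sqrt 2) ^ 2 = 1 + (16 + 12 * Real.sqrt 2) := by nlinarith [s2, s3, s2nn]
  have f5 : (9 + 6 * Real.sqrt 2) ^ 2 = 1 + (16 + 12 * Real.sqrt 2) * (5 + 3 * Real.sqrt 2) := by nlinarith [s2, s3, s2nn]
  have f6 : (5 + 3 * Real.sqrt 2) ^ 2 = 1 + (9 + 6 * Real.sqrt 2) * (2 + 2 * Real.sqrt 2) := by nlinarith [s2, s3, s2nn]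
  have f7 : (2 + 2 * Real.sqrt 2) ^ 2 = 1 + (5 + 3 * Real.sqrt 2) * (1 + Real.sqrt 2) := by nlinarith [s2, s3, s2nn]
  have f8 : (1 + Real.sqrt 2) ^ 2 = 1 + (2 + 2 * Real.sqrt 2) := by nlinarith [s2, s3, s2nn]
  intro a₁ a₂ a₃ a₄ a₅ a₆ a₇ a₈
  constructor
  · rintro ⟨p1, p2, p3, p4, p5, p6, p7, p8, e1, e2, e3, e4, e5, e6, e7, e8⟩
    obtain ⟨l1, l2, l3, l4, l5, l6, l7, l8⟩ :=
      sol_le a₁ a₂ a₃ a₄ a₅ a₆ a₇ a₈ (2 + Real.sqrt 2) (5 + 4 * Real.sqrt 2) (16 + 12 * Real.sqrt 2) (3 + 2 * Real.sqrt 2) (9 + 6 * Real.sqrt 2) (5 + 3 * Real.sqrt 2) (2 + 2 * Real.sqrt 2) (1 + Real.sqrt 2) p1 p2 p3 p4 p5 p6 p7 p8 q1 q2 q3 q4 q5 q6 q7 q8 e1 e2 e3 e4 e5 e6 e7 e8 f1 f2 f3 f4 f5 f6 f7 f8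
    obtain ⟨g1, g2, g3, g4, g5, g6, g7, g8⟩ :=
      sol_le (2 + Real.sqrt 2) (5 + 4 * Real.sqrt 2) (16 + 12 * Real.sqrt 2) (3 + 2 * Real.sqrt 2) (9 + 6 * Real.sqrt 2) (5 + 3 * Real.sqrt 2) (2 + 2 * Real.sqrt 2) (1 + Real.sqrt 2) a₁ a₂ a₃ a₄ a₅ a₆ a₇ a₈ q1 q2 q3 q4 q5 q6 q7 q8 p1 p2 p3 p4 p5 p6 p7 p8 f1 f2 f3 f4 f5 f6 f7 f8 e1 e2 e3 e4 e5 e6 e7 e8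
    exact ⟨le_antisymm l1 g1, le_antisymm l2 g2, le_antisymm l3 g3, le_antisymm l4 g4,
      le_antisymm l5 g5, le_antisymm l6 g6, le_antisymm l7 g7, le_antisymm l8 g8⟩
  · rintro ⟨rfl, rfl, rfl, rfl, rfl, rfl, rfl, rfl⟩
    exact ⟨q1, q2, q3, q4, q5, q6, q7, q8, f1, f2, f3, f4, f5, f6, f7, f8⟩
end

section
/- For every integer n ≥ 1, set θ = π/(n+3) and ζ = exp(2πi/(n+3)) ∈ ℂ. Then in ℂ[X] one has the polynomial identity ∏_{j=2}^{n+1} (X − ζ^j) = ∑_{j=0}^{n} ( sin((j+1)θ) · sin((j+2)θ) / (sin(θ) · sin(2θ)) ) · X^j. -/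
open Polynomial

private lemma trig_rec' (θ x : ℝ) :
    Real.sin (x + 2*θ) * Real.sin (x + 3*θ)
      = Real.sin θ * Real.sin (2*θ) + 2 * Real.cos (2*θ) * (Real.sin (x + θ) * Real.sin (x + 2*θ))
        - Real.sin x * Real.sin (x + θ) := by
  have h2 : (2:ℝ)*θ = θ + θ := by ring
  have h3 : (3:ℝ)*θ = θ + θ + θ := by ring
  have hp := Real.sin_sq_add_cos_sq θ
  have hx := Real.sin_sq_add_cos_sq x
  rw [h2, h3]
  simp only [Real.sin_add, Real.cos_add]
  set s := Real.sin x
  set c := Real.cos x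
  set p := Real.sin θ
  set q := Real.cos θ
  linear_combination (q - q^5 + p^4*q) * hx
    + (-q - q^3 + p^2*q + c^2*q + c^2*q^3 + c^2*p^2*q - s*c*p - s*c*p*q^2 - s*c*p^3) * hp

private lemma aux_poly' {R : Type*} [CommRing R] (a : R) (c : ℕ → R)
    (h0 : c 0 = 1) (h1 : c 1 = 1 + a)
    (hrec : ∀ j, c (j+2) = 1 + a * c (j+1) - c j) : ∀ m : ℕ,
    (∑ j ∈ Finset.range (m+1), C (c j) * X ^ j) * (X^2 - C a * X + 1) =
      (∑ k ∈ Finset.range (m+1), X ^ k) + C (1 - c (m+1)) * X ^ (m+1) + C (c m) * X ^ (m+2) := by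
  intro m
  induction m with
  | zero =>
      rw [Finset.sum_range_one, Finset.sum_range_one, h0, h1,
        show (1 : R) - (1+a) = -a from by ring, map_neg, map_one]
      ring
  | succ m ih =>
      rw [Finset.sum_range_succ, add_mul, ih, hrec m,
        Finset.sum_range_succ (fun k => (X:R[X]) ^ k) (m+1)]
      simp only [map_add, map_sub, map_mul, map_one]
      ring

private noncomputable def auxc (θ : ℝ) (j : ℕ) : ℝ :=
  Real.sin (((j:ℝ)+1)*θ) * Real.sin (((j:ℝ)+2)*θ) / (Real.sin θ * Real.sin (2*θ))

/-- The polynomial `𝒟_{A_n}(X) = ∏_{j=2}^{n+1} (X - ζ^j)`, with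
`ζ = exp(2πi/(n+3))`, has coefficients `sin((j+1)θ)sin((j+2)θ)/(sin θ sin 2θ)`
where `θ = π/(n+3)`. -/
theorem stmt9 (n : ℕ) (hn : 1 ≤ n) (θ : ℝ) (hθ : θ = Real.pi / (n + 3))
    (ζ : ℂ) (hζ : ζ = Complex.exp (2 * Real.pi * Complex.I / (n + 3))) :
    ∏ j ∈ Finset.Icc 2 (n + 1), (X - C (ζ ^ j)) =
      ∑ j ∈ Finset.range (n + 1),
        C ((Real.sin (((j : ℝ) + 1) * θ) * Real.sin (((j : ℝ) + 2) * θ) /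
            (Real.sin θ * Real.sin (2 * θ)) : ℝ) : ℂ) * X ^ j := by
  have h3 : ((n:ℝ) + 3) ≠ 0 := by positivity
  have hn' : (1:ℝ) ≤ (n:ℝ) := by exact_mod_cast hn
  have hπ : ((n:ℝ) + 3) * θ = Real.pi := by rw [hθ]; field_simp
  have hpi := Real.pi_pos
  have hθpos : 0 < θ := by rw [hθ]; positivity
  have hθlt : 2 * θ < Real.pi := by
    have h4 : (4:ℝ) ≤ (n:ℝ)+3 := by linarith
    have : θ ≤ Real.pi/4 := by rw [hθ]; gcongr
    linarith
  have hsθ : 0 < Real.sin θ := Real.sin_pos_of_pos_of_lt_pi hθpos (by nlinarith)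
  have hs2θ : 0 < Real.sin (2*θ) := Real.sin_pos_of_pos_of_lt_pi (by positivity) hθlt
  have hD : Real.sin θ * Real.sin (2*θ) ≠ 0 := by positivity
  set c := auxc θ with hc
  -- real coefficient facts
  have hc0 : c 0 = 1 := by
    simp only [hc, auxc]
    norm_num
    exact ⟨hsθ.ne', hs2θ.ne'⟩
  have hc1 : c 1 = 1 + 2 * Real.cos (2*θ) := by
    have h := trig_rec' θ 0
    simp only [zero_add, Real.sin_zero, zero_mul] at h
    simp only [hc, auxc]
    push_cast
    rw [div_eq_iff hD]
    norm_num
    linear_combination h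
  have hrec : ∀ j, c (j+2) = 1 + (2 * Real.cos (2*θ)) * c (j+1) - c j := by
    intro j
    have h := trig_rec' θ (((j:ℝ)+1)*θ)
    rw [show ((j:ℝ)+1)*θ + θ = ((j:ℝ)+2)*θ from by ring,
      show ((j:ℝ)+1)*θ + 2*θ = ((j:ℝ)+3)*θ from by ring,
      show ((j:ℝ)+1)*θ + 3*θ = ((j:ℝ)+4)*θ from by ring] at h
    simp only [hc, auxc]
    push_cast
    rw [show ((j:ℝ)+2+1) = ((j:ℝ)+3) from by ring, show ((j:ℝ)+2+2) = ((j:ℝ)+4) from by ring,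
      show ((j:ℝ)+1+1) = ((j:ℝ)+2) from by ring, show ((j:ℝ)+1+2) = ((j:ℝ)+3) from by ring]
    rw [eq_sub_iff_add_eq, ← add_div, mul_div_assoc', one_add_div hD,
      div_left_inj' hD]
    linear_combination h
  have hcn : c n = 1 := by
    simp only [hc, auxc]
    rw [show ((n:ℝ)+1)*θ = Real.pi - 2*θ from by linear_combination hπ,
      show ((n:ℝ)+2)*θ = Real.pi - θ from by linear_combination hπ,
      Real.sin_pi_sub, Real.sin_pi_sub, mul_comm (Real.sin (2*θ)), div_self hD]
  have hcn1 : c (n+1) = 0 := by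
    simp only [hc, auxc]
    push_cast
    rw [show ((n:ℝ)+1+2)*θ = Real.pi from by linear_combination hπ, Real.sin_pi]
    simp
  -- complex facts about ζ
  have hprim : IsPrimitiveRoot ζ (n+3) := by
    have h := Complex.isPrimitiveRoot_exp (n+3) (by omega)
    rw [hζ]
    convert h using 3
    push_cast
    ring
  have hζ1 : ζ ^ (n+3) = 1 := hprim.pow_eq_one
  have hζne : ζ ≠ 0 := by rw [hζ]; exact Complex.exp_ne_zero _
  have hζprod : ζ^(n+2) * ζ = 1 := by rw [← pow_succ]; exact hζ1
  have hζinv : ζ^(n+2) = ζ⁻¹ := eq_inv_of_mul_eq_one_left hζprod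
  have hζexp : ζ = Complex.exp (((2*θ : ℝ) : ℂ) * Complex.I) := by
    rw [hζ, hθ]
    push_cast
    ring_nf
  have hζsum : ζ + ζ^(n+2) = ((2 * Real.cos (2*θ) : ℝ) : ℂ) := by
    rw [hζinv, hζexp, ← Complex.exp_neg, show -(((2*θ:ℝ):ℂ) * Complex.I) = ((-(2*θ):ℝ):ℂ) * Complex.I from by push_cast; ring,
      Complex.exp_mul_I, Complex.exp_mul_I]
    push_cast
    simp only [Complex.cos_neg, Complex.sin_neg]
    ring
  -- full product over range (n+3)
  have hinj : Set.InjOn (ζ ^ ·) (Finset.range (n+3)) := by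
    intro i hi j hj hij
    exact hprim.pow_inj (Finset.mem_range.1 hi) (Finset.mem_range.1 hj) hij
  have himg : Polynomial.nthRootsFinset (n+3) (1:ℂ) = (Finset.range (n+3)).image (ζ ^ ·) := by
    symm
    apply Finset.eq_of_subset_of_card_le
    · intro x hx
      simp only [Finset.mem_image, Finset.mem_range] at hx
      obtain ⟨j, hj, rfl⟩ := hx
      rw [Polynomial.mem_nthRootsFinset (by omega)]
      rw [← pow_mul, mul_comm, pow_mul, hζ1, one_pow]
    · rw [hprim.card_nthRootsFinset, Finset.card_image_of_injOn hinj, Finset.card_range]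
  have hfull : ∏ j ∈ Finset.range (n+3), (X - C (ζ^j)) = X^(n+3) - 1 := by
    rw [Polynomial.X_pow_sub_one_eq_prod (by omega) hprim, himg,
      Finset.prod_image (fun i hi j hj hij => hinj hi hj hij)]
  -- splitting the full product
  have hsplit : (X - C (ζ^0)) * ((X - C (ζ^1)) *
      ((∏ j ∈ Finset.Icc 2 (n+1), (X - C (ζ^j))) * (X - C (ζ^(n+2)))))
      = ∏ j ∈ Finset.range (n+3), (X - C (ζ^j)) := by
    have hIcc : Finset.Icc 2 (n+1) = Finset.Ico 2 (n+2) := (Finset.Ico_add_one_right_eq_Icc 2 (n+1)).symm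
    have h02 : Finset.Ico 0 2 = ({0, 1} : Finset ℕ) := by
      ext a
      simp only [Finset.mem_Ico, Finset.mem_insert, Finset.mem_singleton]
      omega
    rw [hIcc, ← Finset.prod_Ico_succ_top (by omega : 2 ≤ n+2),
      Finset.range_eq_Ico, ← Finset.prod_Ico_consecutive _ (Nat.zero_le 2) (by omega : 2 ≤ n+3),
      h02, Finset.prod_insert (by simp), Finset.prod_singleton]
    ring
  -- the quadratic factor
  have hquad : (X - C ζ) * (X - C (ζ^(n+2)))
      = X^2 - C (((2 * Real.cos (2*θ) : ℝ) : ℂ)) * X + 1 := by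
    rw [← hζsum]
    have : (X - C ζ) * (X - C (ζ^(n+2)))
        = X^2 - C (ζ + ζ^(n+2)) * X + C (ζ^(n+2) * ζ) := by
      simp only [map_add, map_mul]
      ring
    rw [this, hζprod, map_one]
  -- complex coefficients
  set cc : ℕ → ℂ := fun j => ((c j : ℝ) : ℂ) with hccdef
  have hcc0 : cc 0 = 1 := by simp [hccdef, hc0]
  have hcc1 : cc 1 = 1 + ((2 * Real.cos (2*θ) : ℝ) : ℂ) := by
    simp only [hccdef, hc1]; push_cast; ring
  have hccrec : ∀ j, cc (j+2) = 1 + ((2 * Real.cos (2*θ) : ℝ) : ℂ) * cc (j+1) - cc j := by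
    intro j
    simp only [hccdef, hrec j]; push_cast; ring
  have hpoly := aux_poly' (((2 * Real.cos (2*θ) : ℝ) : ℂ)) cc hcc0 hcc1 hccrec n
  have hccn : cc n = 1 := by simp [hccdef, hcn]
  have hccn1 : cc (n+1) = 0 := by simp [hccdef, hcn1]
  -- RHS equals the sum with cc coefficients
  have hRHS : (∑ j ∈ Finset.range (n + 1),
        C ((Real.sin (((j : ℝ) + 1) * θ) * Real.sin (((j : ℝ) + 2) * θ) /
            (Real.sin θ * Real.sin (2 * θ)) : ℝ) : ℂ) * X ^ j)
      = ∑ j ∈ Finset.range (n+1), C (cc j) * X ^ j := by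
    refine Finset.sum_congr rfl fun j _ => ?_
    simp [hccdef, hc, auxc]
  rw [hRHS]
  -- cancellation
  have hB : ((X : ℂ[X]) - C 1) * ((X - C ζ) * (X - C (ζ^(n+2)))) ≠ 0 :=
    mul_ne_zero (X_sub_C_ne_zero 1)
      (mul_ne_zero (X_sub_C_ne_zero ζ) (X_sub_C_ne_zero (ζ^(n+2))))
  apply mul_right_cancel₀ hB
  have hL : (∏ j ∈ Finset.Icc 2 (n+1), (X - C (ζ^j))) *
      (((X : ℂ[X]) - C 1) * ((X - C ζ) * (X - C (ζ^(n+2))))) = X^(n+3) - 1 := by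
    rw [← hfull, ← hsplit, pow_zero, pow_one]
    ring
  rw [hL]
  symm
  -- RHS computation
  have hsum : (∑ j ∈ Finset.range (n+1), C (cc j) * X ^ j) *
      ((X - C ζ) * (X - C (ζ^(n+2)))) = ∑ k ∈ Finset.range (n+3), (X : ℂ[X]) ^ k := by
    rw [hquad, hpoly, hccn, hccn1, map_one]
    rw [Finset.sum_range_succ (fun k => (X:ℂ[X]) ^ k) (n+2),
      Finset.sum_range_succ (fun k => (X:ℂ[X]) ^ k) (n+1)]
    simp only [map_sub, map_zero, map_one]
    ring
  calc (∑ j ∈ Finset.range (n+1), C (cc j) * X ^ j) *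
        (((X : ℂ[X]) - C 1) * ((X - C ζ) * (X - C (ζ^(n+2)))))
      = ((∑ j ∈ Finset.range (n+1), C (cc j) * X ^ j) *
          ((X - C ζ) * (X - C (ζ^(n+2))))) * (X - C 1) := by ring
    _ = (∑ k ∈ Finset.range (n+3), (X : ℂ[X]) ^ k) * (X - 1) := by rw [hsum, map_one]
    _ = X^(n+3) - 1 := geom_sum_mul X (n+3)
end

section
/- For every integer n ≥ 1, set θ = π/(n+3), a_i = sin((i+1)θ)/sin(θ) and κ_i = a_i^2/(a_i^2 − 1) for i = 1, …, n. Let U be the n×n real matrix with diagonal entries κ_1, …, κ_n, entries −1 in positions (i, i+1) for 1 ≤ i ≤ n−1, and 0 elsewhere; let L be the n×n real matrix with diagonal entries κ_1, …, κ_n, entries −1 in positions (i+1, i) for 1 ≤ i ≤ n−1, and 0 elsewhere. Then in ℝ[X] one has det(X·U + L) = (∏_{i=1}^n κ_i) · ∑_{j=0}^{n} ( sin((j+1)θ) · sin((j+2)θ) / (sin(θ) · sin(2θ)) ) · X^j. -/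
open Polynomial

section Aux

variable {R : Type*} [CommRing R]

def triE (d u l : ℕ → R) (i j : ℕ) : R :=
  if i = j then d i else if j = i+1 then u i else if i = j+1 then l j else 0

def triMat (d u l : ℕ → R) (n : ℕ) : Matrix (Fin n) (Fin n) R :=
  Matrix.of fun i j => triE d u l (i : ℕ) (j : ℕ)

theorem triE_zero (d u l : ℕ → R) {i j : ℕ} (h1 : i ≠ j) (h2 : j ≠ i+1) (h3 : i ≠ j+1) :
    triE d u l i j = 0 := by
  rw [triE, if_neg h1, if_neg h2, if_neg h3]

theorem triE_diag (d u l : ℕ → R) (i : ℕ) : triE d u l i i = d i := if_pos rfl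

theorem triE_up (d u l : ℕ → R) (i : ℕ) : triE d u l i (i+1) = u i := by
  rw [triE, if_neg (by omega), if_pos rfl]

theorem triE_lo (d u l : ℕ → R) (j : ℕ) : triE d u l (j+1) j = l j := by
  rw [triE, if_neg (by omega), if_neg (by omega), if_pos rfl]

theorem triMat_apply (d u l : ℕ → R) (n : ℕ) (i j : Fin n) :
    triMat d u l n i j = triE d u l (i : ℕ) (j : ℕ) := rfl

theorem triMat_det_rec (d u l : ℕ → R) (k : ℕ) :
    (triMat d u l (k+2)).det
      = d (k+1) * (triMat d u l (k+1)).det - u k * l k * (triMat d u l k).det := by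
  have hvlt : ∀ i : Fin (k+1), (i:ℕ) < k →
      ((((Fin.last k).castSucc).succAbove i : Fin (k+2)) : ℕ) = (i:ℕ) := by
    intro i hi
    rw [Fin.succAbove, if_pos (by simpa [Fin.lt_def] using hi)]
    simp
  have hvlast : ((((Fin.last k).castSucc).succAbove (Fin.last k) : Fin (k+2)) : ℕ) = k+1 := by
    rw [Fin.succAbove, if_neg (by simp [Fin.lt_def])]
    simp
  rw [Matrix.det_succ_column (triMat d u l (k+2)) (Fin.last (k+1))]
  rw [Fin.sum_univ_castSucc, Fin.sum_univ_castSucc]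
  have hz : ∀ i : Fin k, triMat d u l (k+2) i.castSucc.castSucc (Fin.last (k+1)) = 0 := by
    intro i
    have := i.isLt
    rw [triMat_apply]
    exact triE_zero _ _ _ (by simp; omega) (by simp; omega) (by simp; omega)
  rw [Finset.sum_eq_zero (fun i _ => by rw [hz]; ring)]
  have he2 : triMat d u l (k+2) (Fin.last (k+1)) (Fin.last (k+1)) = d (k+1) := by
    rw [triMat_apply]; simpa using triE_diag d u l (k+1)
  have he1 : triMat d u l (k+2) (Fin.last k).castSucc (Fin.last (k+1)) = u k := by
    rw [triMat_apply]; simpa using triE_up d u l k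
  have hm2 : (triMat d u l (k+2)).submatrix
      (Fin.last (k+1)).succAbove (Fin.last (k+1)).succAbove = triMat d u l (k+1) := by
    ext i j
    simp [triMat, triE, Matrix.submatrix_apply, Fin.succAbove_last]
  have hm1 : ((triMat d u l (k+2)).submatrix
      ((Fin.last k).castSucc).succAbove (Fin.last (k+1)).succAbove).det
        = l k * (triMat d u l k).det := by
    rw [Fin.succAbove_last]
    rw [Matrix.det_succ_row _ (Fin.last k)]
    rw [Fin.sum_univ_castSucc]
    have hz1 : ∀ j : Fin k,
        (triMat d u l (k+2)).submatrix ((Fin.last k).castSucc).succAbove Fin.castSucc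
          (Fin.last k) j.castSucc = 0 := by
      intro j
      have := j.isLt
      rw [Matrix.submatrix_apply, triMat_apply, hvlast]
      exact triE_zero _ _ _ (by simp; omega) (by simp; omega) (by simp; omega)
    rw [Finset.sum_eq_zero (fun j _ => by rw [hz1]; ring)]
    have he3 : (triMat d u l (k+2)).submatrix ((Fin.last k).castSucc).succAbove Fin.castSucc
        (Fin.last k) (Fin.last k) = l k := by
      rw [Matrix.submatrix_apply, triMat_apply, hvlast]
      simpa using triE_lo d u l k
    have hm3 : ((triMat d u l (k+2)).submatrix ((Fin.last k).castSucc).succAbove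
        Fin.castSucc).submatrix (Fin.last k).succAbove (Fin.last k).succAbove
          = triMat d u l k := by
      ext i j
      have := i.isLt
      rw [Matrix.submatrix_apply, Matrix.submatrix_apply, Fin.succAbove_last,
        triMat_apply, triMat_apply]
      rw [show ((((Fin.last k).castSucc).succAbove (Fin.castSucc i) : Fin (k+2)) : ℕ)
            = ((i : ℕ)) from by rw [hvlt _ (by simpa using this)]; simp]
      simp
    rw [he3, hm3]
    simp [Fin.val_last]
  rw [he1, he2, hm2, hm1]
  simp only [Fin.coe_castSucc, Fin.val_last]
  have hsgn : (-1 : R) ^ (k + (k+1)) = -1 := Odd.neg_one_pow ⟨k, by ring⟩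
  have hsgn2 : (-1 : R) ^ ((k+1) + (k+1)) = 1 := Even.neg_one_pow ⟨k+1, rfl⟩
  rw [hsgn, hsgn2]
  ring

end Aux

noncomputable def sθ (θ : ℝ) (m : ℕ) : ℝ := Real.sin (m * θ)

noncomputable def cf (θ : ℝ) (m j : ℕ) : ℝ :=
  sθ θ (j+1) * sθ θ (m+1-j) / (sθ θ 1 * sθ θ (m+1))

noncomputable def Krd (θ : ℝ) (i : ℕ) : ℝ :=
  sθ θ (i+2) ^ 2 / (sθ θ (i+1) * sθ θ (i+3))

noncomputable def Tp (θ : ℝ) (m : ℕ) : ℝ[X] :=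
  ∑ j ∈ Finset.range (m+1), C (cf θ m j) * X ^ j

theorem keytrig (p q r : ℝ) :
    Real.sin p * Real.sin q - Real.sin (p+r) * Real.sin (q-r)
      = Real.sin r * Real.sin (p - q + r) := by
  have h1 : p - q + r = (p - q) + r := by ring
  simp only [h1, Real.sin_add, Real.sin_sub, Real.cos_sub]
  linear_combination (- Real.sin p * Real.sin q) * (Real.sin_sq_add_cos_sq r)

theorem sqtrig (a b : ℝ) :
    Real.sin a ^ 2 - Real.sin b ^ 2 = Real.sin (a+b) * Real.sin (a-b) := by
  rw [Real.sin_add, Real.sin_sub]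
  linear_combination Real.sin b ^ 2 * Real.sin_sq_add_cos_sq a
    - (Real.sin a ^ 2) * (Real.sin_sq_add_cos_sq b)

theorem bigtrig (A B t : ℝ) :
    Real.sin (B+3*t) * Real.sin (A+t) * Real.sin (B-A+2*t)
      + Real.sin (B+3*t) * Real.sin (A+2*t) * Real.sin (B-A+t)
      - Real.sin (B+4*t) * Real.sin (A+t) * Real.sin (B-A+t)
      - Real.sin (B+2*t) * Real.sin (A+2*t) * Real.sin (B-A+2*t) = 0 := by
  have h1 := keytrig (B+3*t) (B-A+2*t) t
  have h2 := keytrig (B+2*t) (B-A+2*t) t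
  have e1 : B+3*t+t = B+4*t := by ring
  have e2 : B-A+2*t-t = B-A+t := by ring
  have e3 : B+3*t - (B-A+2*t) + t = A+2*t := by ring
  have e4 : B+2*t+t = B+3*t := by ring
  have e5 : B+2*t - (B-A+2*t) + t = A+t := by ring
  rw [e1, e2, e3] at h1
  rw [e4, e2, e5] at h2
  linear_combination Real.sin (A+t) * h1 - Real.sin (A+2*t) * h2

theorem sθ_pos (n : ℕ) (θ : ℝ) (hθ : θ = Real.pi / (n + 3)) {m : ℕ}
    (h1 : 1 ≤ m) (h2 : m ≤ n+2) : 0 < sθ θ m := by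
  have hθpos : 0 < θ := by rw [hθ]; positivity
  apply Real.sin_pos_of_pos_of_lt_pi
  · have : (1:ℝ) ≤ (m:ℝ) := by exact_mod_cast h1
    nlinarith
  · have hm : (m : ℝ) ≤ (n:ℝ) + 2 := by exact_mod_cast h2
    have hlt : (m : ℝ) * θ < ((n:ℝ)+3) * θ := by nlinarith
    have hpi : ((n:ℝ)+3) * θ = Real.pi := by rw [hθ]; field_simp
    linarith

theorem fraclem (sa1 sa2 sb1 sb2 sb3 sb4 sd1 sd2 s1 : ℝ)
    (h1 : s1 ≠ 0) (hb1 : sb1 ≠ 0) (hb2 : sb2 ≠ 0) (hb3 : sb3 ≠ 0)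
    (H : sb3*sa1*sd2 + sb3*sa2*sd1 - sb4*sa1*sd1 - sb2*sa2*sd2 = 0) :
    sa1*sd2/(s1*sb2) + sa2*sd1/(s1*sb2) - (sb1*sb4/(sb2*sb3))*(sa1*sd1/(s1*sb1))
      = sa2*sd2/(s1*sb3) := by
  field_simp
  linear_combination H

theorem cf_main (n : ℕ) (θ : ℝ) (hθ : θ = Real.pi / (n + 3)) (k j : ℕ)
    (hj : j ≤ k) (hk : k + 2 ≤ n) :
    cf θ (k+1) j + cf θ (k+1) (j+1)
      - (sθ θ (k+1) * sθ θ (k+4) / (sθ θ (k+2) * sθ θ (k+3))) * cf θ k j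
      = cf θ (k+2) (j+1) := by
  have h1 : sθ θ 1 ≠ 0 := ne_of_gt (sθ_pos n θ hθ le_rfl (by omega))
  have hb1 : sθ θ (k+1) ≠ 0 := ne_of_gt (sθ_pos n θ hθ (by omega) (by omega))
  have hb2 : sθ θ (k+2) ≠ 0 := ne_of_gt (sθ_pos n θ hθ (by omega) (by omega))
  have hb3 : sθ θ (k+3) ≠ 0 := ne_of_gt (sθ_pos n θ hθ (by omega) (by omega))
  have a1 : sθ θ (j+1) = Real.sin ((j:ℝ)*θ+θ) := by rw [sθ]; congr 1; push_cast; ring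
  have a2 : sθ θ (j+2) = Real.sin ((j:ℝ)*θ+2*θ) := by rw [sθ]; congr 1; push_cast; ring
  have b2 : sθ θ (k+2) = Real.sin ((k:ℝ)*θ+2*θ) := by rw [sθ]; congr 1; push_cast; ring
  have b3 : sθ θ (k+3) = Real.sin ((k:ℝ)*θ+3*θ) := by rw [sθ]; congr 1; push_cast; ring
  have b4 : sθ θ (k+4) = Real.sin ((k:ℝ)*θ+4*θ) := by rw [sθ]; congr 1; push_cast; ring
  have d1 : sθ θ (k+1-j) = Real.sin ((k:ℝ)*θ-(j:ℝ)*θ+θ) := by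
    rw [sθ]; congr 1; rw [Nat.cast_sub (by omega)]; push_cast; ring
  have d2 : sθ θ (k+2-j) = Real.sin ((k:ℝ)*θ-(j:ℝ)*θ+2*θ) := by
    rw [sθ]; congr 1; rw [Nat.cast_sub (by omega)]; push_cast; ring
  have H : sθ θ (k+3) * sθ θ (j+1) * sθ θ (k+2-j)
      + sθ θ (k+3) * sθ θ (j+2) * sθ θ (k+1-j)
      - sθ θ (k+4) * sθ θ (j+1) * sθ θ (k+1-j)
      - sθ θ (k+2) * sθ θ (j+2) * sθ θ (k+2-j) = 0 := by
    rw [a1, a2, b2, b3, b4, d1, d2]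
    exact bigtrig ((j:ℝ)*θ) ((k:ℝ)*θ) θ
  have e1 : (k+1)+1-j = k+2-j := by omega
  have e2 : (k+1)+1-(j+1) = k+1-j := by omega
  have e3 : (k+2)+1-(j+1) = k+2-j := by omega
  show sθ θ (j+1) * sθ θ ((k+1)+1-j) / (sθ θ 1 * sθ θ ((k+1)+1))
      + sθ θ ((j+1)+1) * sθ θ ((k+1)+1-(j+1)) / (sθ θ 1 * sθ θ ((k+1)+1))
      - (sθ θ (k+1) * sθ θ (k+4) / (sθ θ (k+2) * sθ θ (k+3)))
        * (sθ θ (j+1) * sθ θ (k+1-j) / (sθ θ 1 * sθ θ (k+1)))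
      = sθ θ ((j+1)+1) * sθ θ ((k+2)+1-(j+1)) / (sθ θ 1 * sθ θ ((k+2)+1))
  rw [e1, e2, e3]
  exact fraclem _ _ _ _ _ _ _ _ _ h1 hb1 hb2 hb3 H

theorem cf_zero (n : ℕ) (θ : ℝ) (hθ : θ = Real.pi / (n + 3)) (m : ℕ) (hm : m ≤ n+1) :
    cf θ m 0 = 1 := by
  have h1 : sθ θ 1 ≠ 0 := ne_of_gt (sθ_pos n θ hθ le_rfl (by omega))
  have h2 : sθ θ (m+1) ≠ 0 := ne_of_gt (sθ_pos n θ hθ (by omega) (by omega))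
  rw [cf]
  rw [show m+1-0 = m+1 from rfl, show (0:ℕ)+1 = 1 from rfl]
  rw [div_self (mul_ne_zero h1 h2)]

theorem cf_last (n : ℕ) (θ : ℝ) (hθ : θ = Real.pi / (n + 3)) (m : ℕ) (hm : m ≤ n+1) :
    cf θ m m = 1 := by
  have h1 : sθ θ 1 ≠ 0 := ne_of_gt (sθ_pos n θ hθ le_rfl (by omega))
  have h2 : sθ θ (m+1) ≠ 0 := ne_of_gt (sθ_pos n θ hθ (by omega) (by omega))
  rw [cf, show m+1-m = 1 by omega, mul_comm (sθ θ 1) (sθ θ (m+1))]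
  exact div_self (mul_ne_zero h2 h1)

theorem coeff_Tp (θ : ℝ) (m i : ℕ) :
    (Tp θ m).coeff i = if i ≤ m then cf θ m i else 0 := by
  rw [Tp, Polynomial.finset_sum_coeff]
  simp only [Polynomial.coeff_C_mul, Polynomial.coeff_X_pow, mul_ite, mul_one, mul_zero]
  rw [Finset.sum_ite_eq (Finset.range (m+1)) i (fun j => cf θ m j)]
  simp [Nat.lt_succ_iff]

theorem Tp_rec (n : ℕ) (θ : ℝ) (hθ : θ = Real.pi / (n + 3)) (k : ℕ) (hk : k + 2 ≤ n) :
    (X + 1) * Tp θ (k+1)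
      - C (sθ θ (k+1) * sθ θ (k+4) / (sθ θ (k+2) * sθ θ (k+3))) * X * Tp θ k
      = Tp θ (k+2) := by
  set r : ℝ := sθ θ (k+1) * sθ θ (k+4) / (sθ θ (k+2) * sθ θ (k+3)) with hr
  ext i
  rw [Polynomial.coeff_sub, add_mul, one_mul, Polynomial.coeff_add, mul_assoc,
    Polynomial.coeff_C_mul]
  cases i with
  | zero =>
    rw [Polynomial.mul_coeff_zero, Polynomial.mul_coeff_zero, Polynomial.coeff_X_zero,
      zero_mul, zero_mul, mul_zero, sub_zero, zero_add, coeff_Tp, coeff_Tp,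
      if_pos (by omega : (0:ℕ) ≤ k+1), if_pos (by omega : (0:ℕ) ≤ k+2)]
    rw [cf_zero n θ hθ (k+1) (by omega), cf_zero n θ hθ (k+2) (by omega)]
  | succ j =>
    rw [Polynomial.coeff_X_mul, Polynomial.coeff_X_mul, coeff_Tp, coeff_Tp, coeff_Tp, coeff_Tp]
    by_cases hj1 : j ≤ k
    · rw [if_pos (by omega), if_pos (by omega), if_pos hj1, if_pos (by omega)]
      exact cf_main n θ hθ k j hj1 hk
    · by_cases hj2 : j = k+1
      · subst hj2
        rw [if_pos (by omega), if_neg (by omega), if_neg (by omega), if_pos (by omega)]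
        rw [cf_last n θ hθ (k+1) (by omega), cf_last n θ hθ (k+2) (by omega)]
        ring
      · rw [if_neg (by omega), if_neg (by omega), if_neg (by omega), if_neg (by omega)]
        ring

theorem main_ind (n : ℕ) (θ : ℝ) (hθ : θ = Real.pi / (n + 3)) :
    ∀ k, k ≤ n →
      (triMat (fun i => C (Krd θ i) * (X+1)) (fun _ => -X) (fun _ => (-1:ℝ[X])) k).det
        = C (∏ i ∈ Finset.range k, Krd θ i) * Tp θ k := by
  set d : ℕ → ℝ[X] := fun i => C (Krd θ i) * (X+1) with hd
  set u : ℕ → ℝ[X] := fun _ => -X with hu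
  set l : ℕ → ℝ[X] := fun _ => (-1:ℝ[X]) with hl
  have base0 : (triMat d u l 0).det = C (∏ i ∈ Finset.range 0, Krd θ i) * Tp θ 0 := by
    rw [Matrix.det_fin_zero]
    simp [Tp, Finset.sum_range_one, cf_zero n θ hθ 0 (by omega)]
  have base1 : (triMat d u l 1).det = C (∏ i ∈ Finset.range 1, Krd θ i) * Tp θ 1 := by
    rw [Matrix.det_fin_one, triMat_apply]
    show triE d u l 0 0 = _
    rw [triE_diag]
    simp only [Tp, Finset.prod_range_one, Finset.sum_range_succ, Finset.sum_range_one,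
      cf_zero n θ hθ 1 (by omega), cf_last n θ hθ 1 (by omega), hd]
    simp only [map_one, pow_zero, pow_one, one_mul]
    ring
  have step : ∀ k, k + 2 ≤ n →
      (triMat d u l (k+1)).det = C (∏ i ∈ Finset.range (k+1), Krd θ i) * Tp θ (k+1) →
      (triMat d u l k).det = C (∏ i ∈ Finset.range k, Krd θ i) * Tp θ k →
      (triMat d u l (k+2)).det = C (∏ i ∈ Finset.range (k+2), Krd θ i) * Tp θ (k+2) := by
    intro k h ih1 ih0
    have hb1 : sθ θ (k+1) ≠ 0 := ne_of_gt (sθ_pos n θ hθ (by omega) (by omega))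
    have hb2 : sθ θ (k+2) ≠ 0 := ne_of_gt (sθ_pos n θ hθ (by omega) (by omega))
    have hb3 : sθ θ (k+3) ≠ 0 := ne_of_gt (sθ_pos n θ hθ (by omega) (by omega))
    have hb4 : sθ θ (k+4) ≠ 0 := ne_of_gt (sθ_pos n θ hθ (by omega) (by omega))
    have hprod : Krd θ k * Krd θ (k+1)
        * (sθ θ (k+1) * sθ θ (k+4) / (sθ θ (k+2) * sθ θ (k+3))) = 1 := by
      simp only [Krd]
      rw [show k+1+1 = k+2 from rfl, show k+1+2 = k+3 from rfl, show k+1+3 = k+4 from rfl]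
      field_simp
    have hC : C (Krd θ k) * C (Krd θ (k+1))
        * C (sθ θ (k+1) * sθ θ (k+4) / (sθ θ (k+2) * sθ θ (k+3))) = 1 := by
      rw [← map_mul, ← map_mul, hprod, map_one]
    have R := Tp_rec n θ hθ k h
    rw [triMat_det_rec, ih1, ih0]
    simp only [Finset.prod_range_succ, map_mul, hd, hu, hl]
    linear_combination (C (∏ i ∈ Finset.range k, Krd θ i) * C (Krd θ k)
        * C (Krd θ (k+1))) * R
      + (C (∏ i ∈ Finset.range k, Krd θ i) * X * Tp θ k) * hC
  have key : ∀ k : ℕ, (k ≤ n → (triMat d u l k).det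
        = C (∏ i ∈ Finset.range k, Krd θ i) * Tp θ k)
      ∧ (k+1 ≤ n → (triMat d u l (k+1)).det
        = C (∏ i ∈ Finset.range (k+1), Krd θ i) * Tp θ (k+1)) := by
    intro k
    induction k with
    | zero => exact ⟨fun _ => base0, fun _ => base1⟩
    | succ k ih =>
      refine ⟨ih.2, fun h => step k h (ih.2 (by omega)) (ih.1 (by omega))⟩
  exact fun k hk => (key k).1 hk

/-- Type `A_n`: `det(X·U_κ + L_κ) = (∏ κ_i)·𝒫_{A_n}(X)`, where
`κ_i = a_i²/(a_i² - 1)` for the unique positive fixed point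
`a_i = sin((i+1)θ)/sin θ`, `θ = π/(n+3)`. -/
theorem stmt10 (n : ℕ) (hn : 1 ≤ n) (θ : ℝ) (hθ : θ = Real.pi / (n + 3))
    (a : Fin n → ℝ) (ha : ∀ i, a i = Real.sin (((i : ℕ) + 2 : ℝ) * θ) / Real.sin θ)
    (κ : Fin n → ℝ) (hκ : ∀ i, κ i = (a i) ^ 2 / ((a i) ^ 2 - 1))
    (U L : Matrix (Fin n) (Fin n) ℝ)
    (hU : ∀ i j, U i j = if i = j then κ i else if (j : ℕ) = (i : ℕ) + 1 then -1 else 0)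
    (hL : ∀ i j, L i j = if i = j then κ i else if (i : ℕ) = (j : ℕ) + 1 then -1 else 0) :
    ((X : ℝ[X]) • U.map C + L.map C).det =
      C (∏ i, κ i) *
        ∑ j ∈ Finset.range (n + 1),
          C (Real.sin (((j : ℝ) + 1) * θ) * Real.sin (((j : ℝ) + 2) * θ) /
              (Real.sin θ * Real.sin (2 * θ))) * X ^ j := by
  have hpi : ((n:ℝ)+3) * θ = Real.pi := by rw [hθ]; field_simp
  have hs1 : sθ θ 1 = Real.sin θ := by rw [sθ]; norm_num
  have hKr : ∀ i : Fin n, κ i = Krd θ (i : ℕ) := by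
    intro i
    have hi := i.isLt
    set m := (i : ℕ) with hm
    have h1 : sθ θ 1 ≠ 0 := ne_of_gt (sθ_pos n θ hθ le_rfl (by omega))
    have hm1 : sθ θ (m+1) ≠ 0 := ne_of_gt (sθ_pos n θ hθ (by omega) (by omega))
    have hm3 : sθ θ (m+3) ≠ 0 := ne_of_gt (sθ_pos n θ hθ (by omega) (by omega))
    have ha' : a i = sθ θ (m+2) / sθ θ 1 := by
      rw [ha i, hs1, sθ]
      congr 2
      push_cast
      ring
    have hsq : sθ θ (m+2)^2 - sθ θ 1^2 = sθ θ (m+3) * sθ θ (m+1) := by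
      have e2 : sθ θ (m+2) = Real.sin (((m:ℝ)+2)*θ) := by rw [sθ]; congr 1; push_cast; ring
      have e3 : sθ θ (m+3) = Real.sin (((m:ℝ)+2)*θ + θ) := by rw [sθ]; congr 1; push_cast; ring
      have e1 : sθ θ (m+1) = Real.sin (((m:ℝ)+2)*θ - θ) := by rw [sθ]; congr 1; push_cast; ring
      have es : sθ θ 1 = Real.sin θ := hs1
      rw [e1, e2, e3, es]
      exact sqtrig (((m:ℝ)+2)*θ) θ
    have h2 : (sθ θ (m+2)/sθ θ 1)^2 - 1 = (sθ θ (m+1) * sθ θ (m+3)) / sθ θ 1^2 := by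
      field_simp
      linear_combination hsq
    rw [hκ i, ha', h2, div_pow, Krd]
    field_simp
  have hM : ((X : ℝ[X]) • U.map C + L.map C)
      = triMat (fun i => C (Krd θ i) * (X+1)) (fun _ => -X) (fun _ => (-1:ℝ[X])) n := by
    refine Matrix.ext fun i j => ?_
    simp only [Matrix.add_apply, Matrix.smul_apply, Matrix.map_apply, smul_eq_mul,
      triMat_apply]
    rw [hU i j, hL i j]
    by_cases h1 : i = j
    · subst h1
      rw [if_pos rfl, triE_diag, hKr i]
      ring
    · have hij : (i:ℕ) ≠ (j:ℕ) := fun hc => h1 (Fin.ext hc)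
      rw [if_neg h1, if_neg h1]
      by_cases h2 : (j:ℕ) = (i:ℕ)+1
      · rw [if_pos h2, if_neg (by omega), triE, if_neg hij, if_pos h2]
        simp
      · by_cases h3 : (i:ℕ) = (j:ℕ)+1
        · rw [if_neg h2, if_pos h3, triE, if_neg hij, if_neg h2, if_pos h3]
          simp
        · rw [if_neg h2, if_neg h3, triE_zero _ _ _ hij h2 h3]
          simp
  rw [hM, main_ind n θ hθ n le_rfl]
  have hprodeq : (∏ i ∈ Finset.range n, Krd θ i) = ∏ i, κ i := by
    rw [← Fin.prod_univ_eq_prod_range (fun i => Krd θ i) n]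
    exact Finset.prod_congr rfl (fun i _ => (hKr i).symm)
  have hTp : Tp θ n = ∑ j ∈ Finset.range (n + 1),
      C (Real.sin (((j : ℝ) + 1) * θ) * Real.sin (((j : ℝ) + 2) * θ) /
        (Real.sin θ * Real.sin (2 * θ))) * X ^ j := by
    rw [Tp]
    refine Finset.sum_congr rfl (fun j hj => ?_)
    have hjn : j ≤ n := by simpa [Nat.lt_succ_iff] using hj
    congr 1
    rw [cf]
    have e1 : sθ θ (j+1) = Real.sin (((j:ℝ)+1)*θ) := by rw [sθ]; congr 1; push_cast; ring
    have e2 : sθ θ (n+1-j) = Real.sin (((j:ℝ)+2)*θ) := by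
      rw [sθ, show ((n+1-j:ℕ):ℝ)*θ = Real.pi - ((j:ℝ)+2)*θ from by
        rw [Nat.cast_sub (by omega)]; push_cast; linear_combination hpi]
      exact Real.sin_pi_sub _
    have e3 : sθ θ (n+1) = Real.sin (2*θ) := by
      rw [sθ, show ((n+1:ℕ):ℝ)*θ = Real.pi - 2*θ from by push_cast; linear_combination hpi]
      exact Real.sin_pi_sub _
    rw [e1, e2, e3, hs1]
  rw [hprodeq, hTp]
end

section
/- For every integer n ≥ 2, set κ_i = (i+1)^2/(i(i+2)) for 1 ≤ i ≤ n−1 and κ_n = (n+1)/n. Let U be the n×n real matrix with diagonal entries κ_1, …, κ_n, entries −1 in positions (i, i+1) for 1 ≤ i ≤ n−1, and 0 elsewhere; let L be the n×n real matrix with diagonal entries κ_1, …, κ_n, entries −1 in positions (i+1, i) for 1 ≤ i ≤ n−2, entry −2 in position (n, n−1), and 0 elsewhere. Then in ℝ[X] one has det(X·U + L) = (∏_{i=1}^n κ_i) · (1 + X + X^2 + … + X^n). -/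
open Polynomial Finset

/-- closed form of the leading principal minors (up to factor). -/
noncomputable def fcB (x : ℝ) (k : ℕ) : ℝ :=
  (2/((k:ℝ)+2)) * (((k:ℝ)+1)*(x^(k+2)+1)*(x-1) - 2*x^(k+2) + 2*x) / (x-1)^3

lemma fcB_zero (x : ℝ) (hx1 : x ≠ 1) : fcB x 0 = 1 := by
  have hx : x - 1 ≠ 0 := sub_ne_zero.mpr hx1
  unfold fcB
  field_simp
  ring

lemma fcB_one (x : ℝ) (hx1 : x ≠ 1) : fcB x 1 = 4/3*(x+1) := by
  have hx : x - 1 ≠ 0 := sub_ne_zero.mpr hx1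
  unfold fcB
  norm_num
  field_simp
  ring

lemma fcB_rec (x : ℝ) (hx1 : x ≠ 1) (k : ℕ) :
    fcB x (k+2) = (x+1) * ((((k:ℝ)+3)^2)/((((k:ℝ))+2)*(((k:ℝ))+4))) * fcB x (k+1) - x * fcB x k := by
  have hx : x - 1 ≠ 0 := sub_ne_zero.mpr hx1
  have h2 : ((k:ℝ))+2 ≠ 0 := by positivity
  have h3 : ((k:ℝ))+3 ≠ 0 := by positivity
  have h4 : ((k:ℝ))+4 ≠ 0 := by positivity
  unfold fcB
  have e1 : x^(k+2+2) = x^k * x^4 := by ring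
  have e2 : x^(k+1+2) = x^k * x^3 := by ring
  have e3 : x^(k+2) = x^k * x^2 := by ring
  rw [e1, e2, e3]
  push_cast
  field_simp
  ring

lemma fcB_last (x : ℝ) (hx1 : x ≠ 1) (m : ℕ) :
    2 * ∑ j ∈ Finset.range (m+3), x^j
      = (x+1) * ((((m:ℝ)+3))/(((m:ℝ))+2)) * fcB x (m+1) - 2*x*fcB x m := by
  have hx : x - 1 ≠ 0 := sub_ne_zero.mpr hx1
  have h2 : ((m:ℝ))+2 ≠ 0 := by positivity
  have h3 : ((m:ℝ))+3 ≠ 0 := by positivity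
  rw [geom_sum_eq hx1]
  unfold fcB
  have e1 : x^(m+3) = x^m * x^3 := by ring
  have e3 : x^(m+2) = x^m * x^2 := by ring
  rw [e1, e3]
  push_cast
  field_simp
  ring

lemma fcB_pos (x : ℝ) (hx0 : 0 < x) (hx1 : x ≠ 1) :
    ∀ k, 0 < fcB x k ∧ x * fcB x k < fcB x (k+1) := by
  intro k
  induction k with
  | zero =>
    rw [fcB_zero x hx1, fcB_one x hx1]
    constructor
    · norm_num
    · nlinarith
  | succ k ih =>
    obtain ⟨hpos, hlt⟩ := ih
    have hpos1 : 0 < fcB x (k+1) := lt_trans (mul_pos hx0 hpos) hlt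
    refine ⟨hpos1, ?_⟩
    rw [fcB_rec x hx1 k]
    have hκ : 1 < (((k:ℝ)+3)^2)/((((k:ℝ))+2)*(((k:ℝ))+4)) := by
      rw [lt_div_iff₀ (by positivity)]
      nlinarith [Nat.cast_nonneg (α := ℝ) k]
    nlinarith [mul_pos (mul_pos hx0 (sub_pos.mpr hκ)) hpos1,
      mul_pos (sub_pos.mpr hκ) hpos1, mul_pos hx0 hpos]

lemma telesc (f : ℕ → ℝ) (hf : ∀ k, f k ≠ 0) :
    ∀ m, ∏ i ∈ Finset.range m, f (i+1) / f i = f m / f 0 := by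
  intro m
  induction m with
  | zero => simp [div_self (hf 0)]
  | succ m ih =>
    rw [Finset.prod_range_succ, ih, div_mul_div_comm, mul_comm (f 0) (f m),
      mul_div_mul_left _ _ (hf m)]


lemma teleB (f : ℕ → ℝ) (hf : ∀ k, f k ≠ 0) (m : ℕ) :
    ∏ i ∈ Finset.range m, f (i+1) / f i = f m / f 0 := telesc f hf m

noncomputable def ggB (n k : ℕ) : ℝ := if k = n then 2 else 2*((k:ℝ)+1)/((k:ℝ)+2)

lemma ggB_ne (n k : ℕ) : ggB n k ≠ 0 := by
  unfold ggB
  split_ifs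
  · norm_num
  · positivity

/-- Type `B_n`: `det(X·U_κ + L_κ) = (∏ κ_i)·(1 + X + ⋯ + Xⁿ)`, where
`κ_i = (i+1)²/(i(i+2))` for `1 ≤ i ≤ n-1` and `κ_n = (n+1)/n`
(indices below are 0-based). -/
theorem stmt11 (n : ℕ) (hn : 2 ≤ n)
    (κ : Fin n → ℝ)
    (hκ : ∀ i : Fin n, κ i =
      if (i : ℕ) = n - 1 then ((n : ℝ) + 1) / n
      else ((i : ℕ) + 2 : ℝ) ^ 2 / ((((i : ℕ) : ℝ) + 1) * (((i : ℕ) : ℝ) + 3)))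
    (U L : Matrix (Fin n) (Fin n) ℝ)
    (hU : ∀ i j, U i j = if i = j then κ i else if (j : ℕ) = (i : ℕ) + 1 then -1 else 0)
    (hL : ∀ i j, L i j = if i = j then κ i
      else if (i : ℕ) = (j : ℕ) + 1 then (if (i : ℕ) = n - 1 then -2 else -1) else 0) :
    ((X : ℝ[X]) • U.map C + L.map C).det =
      C (∏ i, κ i) * ∑ j ∈ Finset.range (n + 1), X ^ j := by
  have hκ2 : (∏ i, κ i) = 2 := by
    have hκg : ∀ i : Fin n, κ i = ggB n ((i:ℕ)+1) / ggB n (i:ℕ) := by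
      intro i
      have hiLt := i.isLt
      rw [hκ i]
      unfold ggB
      by_cases hi : (i:ℕ) = n-1
      · rw [if_pos hi, if_pos (show (i:ℕ)+1 = n by omega), if_neg (show ¬ (i:ℕ) = n by omega), hi]
        have h1 : ((n-1:ℕ):ℝ) = (n:ℝ)-1 := by
          have h : (1:ℕ) ≤ n := by omega
          push_cast [h]
          ring
        rw [h1]
        have hn0 : (0:ℝ) < (n:ℝ) := by
          have : 0 < n := by omega
          exact_mod_cast this
        have hn1 : (n:ℝ)+1 ≠ 0 := by positivity
        field_simp [hn0.ne']
        ring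
      · rw [if_neg hi, if_neg (show ¬ (i:ℕ)+1 = n by omega), if_neg (show ¬ (i:ℕ) = n by omega)]
        push_cast
        have h1 : ((i:ℕ):ℝ)+1 ≠ 0 := by positivity
        have h2 : ((i:ℕ):ℝ)+2 ≠ 0 := by positivity
        have h3 : ((i:ℕ):ℝ)+3 ≠ 0 := by positivity
        field_simp
        ring
    calc (∏ i, κ i) = ∏ i : Fin n, (fun k => ggB n (k+1) / ggB n k) (i:ℕ) :=
          Finset.prod_congr rfl (fun i _ => hκg i)
      _ = ∏ k ∈ Finset.range n, ggB n (k+1)/ggB n k :=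
          Fin.prod_univ_eq_prod_range (fun k => ggB n (k+1) / ggB n k) n
      _ = ggB n n / ggB n 0 := teleB _ (ggB_ne n) n
      _ = 2 := by
          unfold ggB
          rw [if_pos rfl, if_neg (by omega)]
          norm_num
  have key : ∀ x : ℝ, 0 < x → x ≠ 1 →
      (((X : ℝ[X]) • U.map C + L.map C).map (evalRingHom x)).det
        = 2 * ∑ j ∈ Finset.range (n + 1), x ^ j := by
    intro x hx0 hx1
    have hfpos : ∀ k, 0 < fcB x k := fun k => (fcB_pos x hx0 hx1 k).1
    have hfne : ∀ k, fcB x k ≠ 0 := fun k => ne_of_gt (hfpos k)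
    set S : ℝ := ∑ j ∈ Finset.range (n+1), x^j with hS
    have hSpos : 0 < S := Finset.sum_pos (fun j _ => pow_pos hx0 j) ⟨0, by simp⟩
    set dd : ℕ → ℝ := fun i => if i = n - 1 then (2*S) / fcB x (n-1) else fcB x (i+1) / fcB x i
      with hdd
    have hddne : ∀ i, dd i ≠ 0 := by
      intro i
      rw [hdd]
      dsimp only
      split_ifs
      · exact div_ne_zero (by positivity) (hfne _)
      · exact div_ne_zero (hfne _) (hfne _)
    set A : Matrix (Fin n) (Fin n) ℝ := Matrix.of fun i k =>
        (if (i:ℕ) = (k:ℕ) then dd (i:ℕ) else 0) +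
        (if (i:ℕ) = (k:ℕ)+1 then (if (i:ℕ) = n-1 then (-2:ℝ) else -1) else 0) with hA
    set B : Matrix (Fin n) (Fin n) ℝ := Matrix.of fun k j =>
        (if (k:ℕ) = (j:ℕ) then (1:ℝ) else 0) +
        (if (j:ℕ) = (k:ℕ)+1 then -x / dd (k:ℕ) else 0) with hB
    have hABentry : ∀ i j : Fin n, (A * B) i j = x * U i j + L i j := by
      intro i j
      have hiLt := i.isLt
      have hjLt := j.isLt
      rw [Matrix.mul_apply]
      have hsplit : ∀ k : Fin n, A i k * B k j =
          (if (k:ℕ) = (j:ℕ) then A i k else 0) +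
          (if (j:ℕ) = (k:ℕ)+1 then A i k * (-x / dd (k:ℕ)) else 0) := by
        intro k
        rw [hB]
        simp only [Matrix.of_apply, mul_add, mul_ite, mul_one, mul_zero]
      rw [Finset.sum_congr rfl (fun k _ => hsplit k), Finset.sum_add_distrib]
      have hfirst : (∑ k : Fin n, if (k:ℕ) = (j:ℕ) then A i k else 0) = A i j := by
        have heq : ∀ k : Fin n, (if (k:ℕ) = (j:ℕ) then A i k else 0) = (if k = j then A i k else 0) :=
          fun k => by simp only [Fin.val_eq_val]
        rw [Finset.sum_congr rfl (fun k _ => heq k),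
          Finset.sum_ite_eq' Finset.univ j (fun k => A i k), if_pos (Finset.mem_univ j)]
      rw [hfirst]
      by_cases hj0 : (j:ℕ) = 0
      · rw [Finset.sum_eq_zero (fun k _ => by rw [if_neg (by omega)]), add_zero]
        rw [hU i j, hL i j, hκ i]
        simp only [hA, Matrix.of_apply, ← Fin.val_eq_val]
        by_cases hij : (i:ℕ) = (j:ℕ)
        · have hin : ¬ ((i:ℕ) = n - 1) := by omega
          have hi1 : ¬ ((i:ℕ) = (j:ℕ)+1) := by omega
          rw [if_pos hij, if_neg hi1, add_zero, if_pos hij, if_pos hij, if_neg hin]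
          rw [hdd]
          simp only
          rw [show (i:ℕ) = 0 from by omega]
          rw [if_neg (by omega)]
          norm_num [fcB_one x hx1, fcB_zero x hx1]
          ring
        · rw [if_neg hij, if_neg hij, if_neg hij, zero_add,
            if_neg (by omega : ¬ ((j:ℕ) = (i:ℕ)+1)), mul_zero, zero_add]
      · have hjpos : 0 < (j:ℕ) := Nat.pos_of_ne_zero hj0
        have hsum : (∑ k : Fin n, if (j:ℕ) = (k:ℕ)+1 then A i k * (-x / dd (k:ℕ)) else 0)
            = A i ⟨(j:ℕ)-1, by omega⟩ * (-x / dd ((j:ℕ)-1)) := by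
          rw [Finset.sum_eq_single (⟨(j:ℕ)-1, by omega⟩ : Fin n)]
          · rw [if_pos (by show (j:ℕ) = (j:ℕ)-1+1; omega)]
          · intro k _ hk
            rw [if_neg (fun hc => hk (Fin.eq_mk_iff_val_eq.mpr (by omega)))]
          · intro h; exact absurd (Finset.mem_univ _) h
        rw [hsum]
        rw [hU i j, hL i j, hκ i]
        simp only [hA, Matrix.of_apply, ← Fin.val_eq_val, Fin.val_mk]
        by_cases hc1 : (i:ℕ) = (j:ℕ)
        · rw [if_pos hc1, if_neg (by omega : ¬ (i:ℕ) = (j:ℕ)+1), add_zero,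
              if_neg (by omega : ¬ (i:ℕ) = (j:ℕ)-1), zero_add,
              if_pos (by omega : (i:ℕ) = (j:ℕ)-1+1),
              if_pos hc1, if_pos hc1]
          by_cases hc3 : (i:ℕ) = n-1
          · rw [if_pos hc3]
            obtain ⟨m, hnm⟩ : ∃ m, n = m + 2 := ⟨n-2, by omega⟩
            subst hnm
            rw [hdd]
            simp only
            rw [show (i:ℕ) = m+2-1 from hc3, show (j:ℕ)-1 = m from by omega]
            rw [if_pos rfl, if_neg (by omega)]
            have hlast : 2 * S = (x+1) * ((((m:ℝ)+3))/(((m:ℝ))+2)) * fcB x (m+1) - 2*x*fcB x m := by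
              rw [hS, show m+2+1 = m+3 from rfl]
              exact fcB_last x hx1 m
            rw [show m+2-1 = m+1 from rfl, hlast]
            have hm2 : ((m:ℝ))+2 ≠ 0 := by positivity
            rw [if_pos (by omega)]
            push_cast
            field_simp [hfne, hm2]
            ring
          · simp only [if_neg hc3]
            obtain ⟨m, him⟩ : ∃ m, (i:ℕ) = m + 1 := ⟨(i:ℕ)-1, by omega⟩
            rw [hdd]
            simp only
            rw [him, show (j:ℕ)-1 = m from by omega]
            rw [if_neg (by omega), if_neg (by omega)]
            rw [show m+1+1 = m+2 from rfl, fcB_rec x hx1 m]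
            have hm1 : ((m:ℝ))+1 ≠ 0 := by positivity
            have hm2 : ((m:ℝ))+2 ≠ 0 := by positivity
            have hm3 : ((m:ℝ))+3 ≠ 0 := by positivity
            have hm4 : ((m:ℝ))+4 ≠ 0 := by positivity
            push_cast
            field_simp [hfne, hm1, hm2, hm3, hm4]
            ring
        · rw [if_neg hc1, if_neg hc1, if_neg hc1, zero_add]
          by_cases hc6 : (j:ℕ) = (i:ℕ)+1
          · rw [if_neg (show ¬ (i:ℕ) = (j:ℕ)+1 by omega), if_pos (show (i:ℕ) = (j:ℕ)-1 by omega),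
              if_neg (show ¬ (i:ℕ) = (j:ℕ)-1+1 by omega), if_pos hc6, add_zero, zero_add,
              show (j:ℕ)-1 = (i:ℕ) from by omega]
            have hdx : dd (i:ℕ) * (-x / dd (i:ℕ)) = -x := by
              rw [mul_comm, div_mul_cancel₀ _ (hddne _)]
            rw [hdx]
            ring
          · rw [if_neg (show ¬ (i:ℕ) = (j:ℕ)-1 by omega),
              if_neg (show ¬ (i:ℕ) = (j:ℕ)-1+1 by omega), if_neg hc6]
            ring
    have hdetA : A.det = ∏ i : Fin n, dd (i:ℕ) := by
      rw [Matrix.det_of_lowerTriangular A (by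
        intro p q hpq
        have hlt : p < q := hpq
        have hlt' : (p:ℕ) < (q:ℕ) := hlt
        simp only [hA, Matrix.of_apply]
        rw [if_neg (by omega), if_neg (by omega), add_zero])]
      refine Finset.prod_congr rfl (fun p _ => ?_)
      have hne : ¬ (p:ℕ) = (p:ℕ)+1 := by omega
      simp [hA, Matrix.of_apply, hne]
    have hdetB : B.det = 1 := by
      rw [Matrix.det_of_upperTriangular (by
        intro p q hpq
        have hlt' : (q:ℕ) < (p:ℕ) := hpq
        simp only [hB, Matrix.of_apply]
        rw [if_neg (by omega), if_neg (by omega), add_zero])]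
      refine Finset.prod_eq_one (fun p _ => ?_)
      have hne : ¬ (p:ℕ) = (p:ℕ)+1 := by omega
      simp [hB, Matrix.of_apply, hne]
    have htel : (∏ i : Fin n, dd (i:ℕ)) = 2*S := by
      rw [Fin.prod_univ_eq_prod_range dd n]
      have h1 : ∏ i ∈ Finset.range n, dd i
          = (∏ i ∈ Finset.range (n-1), dd i) * dd (n-1) := by
        conv_lhs => rw [show n = (n-1)+1 from by omega, Finset.prod_range_succ]
      have h2 : ∏ i ∈ Finset.range (n-1), dd i
          = ∏ i ∈ Finset.range (n-1), fcB x (i+1) / fcB x i := by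
        refine Finset.prod_congr rfl (fun p hp => ?_)
        rw [hdd]
        simp only
        rw [if_neg (by have := Finset.mem_range.mp hp; omega)]
      rw [h1, h2, telesc (fcB x) hfne (n-1), fcB_zero x hx1, div_one, hdd]
      simp only [if_true]
      rw [mul_comm, div_mul_cancel₀ _ (hfne _)]
    have hmap : ((X : ℝ[X]) • U.map C + L.map C).map (evalRingHom x) = A * B := by
      ext p q
      rw [Matrix.map_apply, Matrix.add_apply, Matrix.smul_apply, Matrix.map_apply, Matrix.map_apply,
        hABentry p q]
      simp [smul_eq_mul]
      try ring
    rw [hmap, Matrix.det_mul, hdetA, hdetB, mul_one, htel]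
  apply Polynomial.eq_of_infinite_eval_eq
  apply Set.Infinite.mono ?_ (Set.infinite_coe_iff.mp (Set.Ioo.infinite (zero_lt_one (α := ℝ))))
  rintro x ⟨hx0, hxlt⟩
  simp only [Set.mem_setOf_eq]
  have hx1 : x ≠ 1 := ne_of_lt hxlt
  rw [← Polynomial.coe_evalRingHom, RingHom.map_det, RingHom.mapMatrix_apply,
    key x hx0 hx1, hκ2]
  simp [Polynomial.eval_finset_sum]
end

section
/- For every integer n ≥ 3, set θ = π/(2n+2), a_i = sin((i+1)θ)/sin(θ) and κ_i = a_i^2/(a_i^2 − 1) for i = 1, …, n. Let U be the n×n real matrix with diagonal entries κ_1, …, κ_n, entries −1 in positions (i, i+1) for 1 ≤ i ≤ n−2, entry −2 in position (n−1, n), and 0 elsewhere; let L be the n×n real matrix with diagonal entries κ_1, …, κ_n, entries −1 in positions (i+1, i) for 1 ≤ i ≤ n−1, and 0 elsewhere. Then in ℝ[X] one has det(X·U + L) = (∏_{i=1}^n κ_i) · (1 + X + X^2 + … + X^n). -/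
open Polynomial Matrix

namespace Stmt12


def ent (d u l : ℕ → ℝ) (i j : ℕ) : ℝ :=
  if i = j then d i else if j = i + 1 then u i else if i = j + 1 then l j else 0

def tri (d u l : ℕ → ℝ) (m : ℕ) : Matrix (Fin m) (Fin m) ℝ :=
  fun i j => ent d u l i j

lemma tri_apply (d u l : ℕ → ℝ) (m : ℕ) (i j : Fin m) :
    tri d u l m i j = ent d u l i j := rfl

def DD (d u l : ℕ → ℝ) : ℕ → ℝ
  | 0 => 1
  | 1 => d 0
  | (m+2) => d (m+1) * DD d u l (m+1) - u m * l m * DD d u l m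

lemma tri_det_rec (d u l : ℕ → ℝ) (m : ℕ) :
    (tri d u l (m+2)).det =
      d (m+1) * (tri d u l (m+1)).det - u m * l m * (tri d u l m).det := by
  have hrow : ∀ i : Fin (m+1), (((Fin.last (m+1)).succAbove i : Fin (m+2)) : ℕ) = i := by
    simp [Fin.succAbove_last]
  have hcol : ∀ c : Fin (m+1), (((⟨m, by omega⟩ : Fin (m+2)).succAbove c : Fin (m+2)) : ℕ) =
      if (c : ℕ) < m then (c : ℕ) else (c : ℕ) + 1 := by
    intro c
    rw [Fin.succAbove]
    split_ifs with h h2 h3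
    · simp
    · exact absurd (by simpa [Fin.lt_def] using h) h2
    · exact absurd (by simpa [Fin.lt_def] using h3) h
    · simp
  have hminor_b : (tri d u l (m+2)).submatrix (Fin.last (m+1)).succAbove
      (Fin.last (m+1)).succAbove = tri d u l (m+1) := by
    ext i j
    rw [Matrix.submatrix_apply, tri_apply, tri_apply, hrow, hrow]
  have hB : ((tri d u l (m+2)).submatrix (Fin.last (m+1)).succAbove
      (⟨m, by omega⟩ : Fin (m+2)).succAbove).det = u m * (tri d u l m).det := by
    rw [Matrix.det_succ_column _ (Fin.last m)]
    rw [Fintype.sum_eq_single (Fin.last m) ?_]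
    · rw [Matrix.submatrix_apply, tri_apply, hrow, hcol]
      have hm : (tri d u l (m+2)).submatrix
          ((Fin.last (m+1)).succAbove ∘ (Fin.last m).succAbove)
          ((⟨m, by omega⟩ : Fin (m+2)).succAbove ∘ (Fin.last m).succAbove)
          = tri d u l m := by
        ext i j
        rw [Matrix.submatrix_apply, tri_apply, tri_apply]
        simp only [Function.comp_apply, Fin.succAbove_last]
        rw [hcol]
        simp [Fin.coe_castSucc, j.isLt]
      rw [Matrix.submatrix_submatrix, hm]
      simp only [Fin.val_last, lt_irrefl, if_false]
      rw [ent, if_neg (by omega), if_pos rfl]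
      have e0 : ((-1 : ℝ)) ^ (m + m) = 1 := Even.neg_one_pow ⟨m, by ring⟩
      rw [e0]
      ring
    · intro i hi
      rw [Matrix.submatrix_apply, tri_apply, hrow, hcol]
      have hineq : (i : ℕ) ≠ m := by
        intro h; exact hi (Fin.ext (by simp [h]))
      have hisLt := i.isLt
      simp only [Fin.val_last, lt_irrefl, if_false]
      rw [ent, if_neg (by omega), if_neg (by omega), if_neg (by omega)]
      ring
  rw [Matrix.det_succ_row (tri d u l (m+2)) (Fin.last (m+1))]
  rw [Fintype.sum_eq_add (⟨m, by omega⟩ : Fin (m+2)) (Fin.last (m+1))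
    (by simp [Fin.ext_iff]) ?_]
  · rw [hminor_b, hB]
    rw [tri_apply, tri_apply]
    simp only [Fin.val_last]
    rw [show ent d u l (m+1) (⟨m, by omega⟩ : Fin (m+2)) = l m by
      rw [ent, if_neg (by simp), if_neg (by simp; omega), if_pos (by simp)]]
    rw [show ent d u l (m+1) (m+1) = d (m+1) by rw [ent, if_pos rfl]]
    have e1 : ((-1 : ℝ)) ^ (m+1+m) = -1 := Odd.neg_one_pow ⟨m, by ring⟩
    have e2 : ((-1 : ℝ)) ^ (m+1+(m+1)) = 1 := Even.neg_one_pow ⟨m+1, by ring⟩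
    rw [e1, e2]
    ring
  · intro j hj
    rw [tri_apply]
    simp only [Fin.val_last]
    have h1 : (j : ℕ) ≠ m := fun h => hj.1 (Fin.ext (by simp [h]))
    have h2 : (j : ℕ) ≠ m + 1 := fun h => hj.2 (Fin.ext (by simp [h]))
    rw [ent, if_neg (by omega), if_neg (by omega), if_neg (by omega)]
    ring

lemma tri_det (d u l : ℕ → ℝ) : ∀ m, (tri d u l m).det = DD d u l m := by
  have H : ∀ m, (tri d u l m).det = DD d u l m ∧
      (tri d u l (m+1)).det = DD d u l (m+1) := by
    intro m
    induction m with
    | zero =>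
      constructor
      · rw [show DD d u l 0 = 1 from rfl]; exact Matrix.det_fin_zero
      · rw [Matrix.det_fin_one, show DD d u l 1 = d 0 from rfl, tri_apply]
        rfl
    | succ k ih =>
      refine ⟨ih.2, ?_⟩
      rw [tri_det_rec, ih.1, ih.2]
      rfl
  exact fun m => (H m).1



lemma sin_sq_sub (A B : ℝ) :
    Real.sin (A + B) * Real.sin (A - B) = Real.sin A ^ 2 - Real.sin B ^ 2 := by
  rw [Real.sin_add, Real.sin_sub]
  linear_combination (Real.sin A ^ 2) * Real.sin_sq_add_cos_sq B
    - (Real.sin B ^ 2) * Real.sin_sq_add_cos_sq A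

lemma trig3 (θ p q : ℝ) :
    Real.sin (q - θ) * (Real.sin (p + θ) * Real.sin (q - p)) =
      Real.sin q * (Real.sin p * Real.sin (q - p) + Real.sin (p + θ) * Real.sin (q - p - θ))
        - Real.sin (q + θ) * (Real.sin p * Real.sin (q - p - θ)) := by
  simp only [Real.sin_add, Real.sin_sub, Real.cos_add, Real.cos_sub]
  linear_combination (Real.sin p * Real.cos p * Real.sin q ^ 2
    - Real.sin p ^ 2 * Real.sin q * Real.cos q) * Real.sin_sq_add_cos_sq θ

lemma trig4 (θ p : ℝ) :
    Real.sin θ * Real.cos θ =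
      Real.sin (p + θ) * Real.cos (p + θ) + Real.sin p * Real.cos p
        - 2 * Real.cos θ * (Real.sin p * Real.cos (p + θ)) := by
  simp only [Real.sin_add, Real.cos_add]
  linear_combination (Real.sin p * Real.cos p) * Real.sin_sq_add_cos_sq θ
    - (Real.sin θ * Real.cos θ) * Real.sin_sq_add_cos_sq p

noncomputable def gg (θ : ℝ) (k j : ℕ) : ℝ :=
  Real.sin (((j + 1 : ℕ) : ℝ) * θ) * Real.sin (((k + 1 - j : ℕ) : ℝ) * θ)

noncomputable def SS (θ x : ℝ) (k : ℕ) : ℝ := ∑ j ∈ Finset.range (k + 1), gg θ k j * x ^ j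

lemma gg_zero (θ : ℝ) {k j : ℕ} (h : k + 1 ≤ j) : gg θ k j = 0 := by
  have h0 : k + 1 - j = 0 := by omega
  simp [gg, h0]

lemma gg_eq (θ : ℝ) {k j : ℕ} (h : j ≤ k + 1) :
    gg θ k j = Real.sin (((j : ℝ) + 1) * θ) * Real.sin (((k : ℝ) + 1 - (j : ℝ)) * θ) := by
  rw [gg]
  have h1 : ((j + 1 : ℕ) : ℝ) = (j : ℝ) + 1 := by push_cast; ring
  have h2 : ((k + 1 - j : ℕ) : ℝ) = (k : ℝ) + 1 - (j : ℝ) := by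
    rw [Nat.cast_sub h]; push_cast; ring
  rw [h1, h2]

lemma SS_ext (θ x : ℝ) {k m : ℕ} (h : k + 1 ≤ m) :
    SS θ x k = ∑ j ∈ Finset.range m, gg θ k j * x ^ j := by
  rw [SS]
  apply Finset.sum_subset (Finset.range_subset_range.2 h)
  intro j _ hj
  rw [gg_zero θ (by simpa using hj), zero_mul]

lemma shift (x : ℝ) (N : ℕ) (f : ℕ → ℝ) (hf : f N = 0) :
    x * ∑ j ∈ Finset.range (N + 1), f j * x ^ j =
      ∑ j ∈ Finset.range (N + 1), (if j = 0 then 0 else f (j - 1)) * x ^ j := by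
  rw [Finset.mul_sum, Finset.sum_range_succ' (fun j => (if j = 0 then 0 else f (j - 1)) * x ^ j) N,
    Finset.sum_range_succ, hf]
  simp only [Nat.succ_ne_zero, if_false, Nat.add_sub_cancel, if_true, zero_mul, mul_zero, add_zero]
  exact Finset.sum_congr rfl fun j _ => by ring

lemma key1 (θ x : ℝ) (k : ℕ) :
    Real.sin (((k + 2 : ℕ) : ℝ) * θ) * SS θ x (k + 2) =
      Real.sin (((k + 3 : ℕ) : ℝ) * θ) * ((x + 1) * SS θ x (k + 1))
        - x * Real.sin (((k + 4 : ℕ) : ℝ) * θ) * SS θ x k := by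
  rw [SS_ext θ x (show (k + 2) + 1 ≤ k + 4 by omega),
      SS_ext θ x (show (k + 1) + 1 ≤ k + 4 by omega),
      SS_ext θ x (show k + 1 ≤ k + 4 by omega)]
  have e1 := shift x (k + 3) (gg θ (k + 1)) (gg_zero θ (by omega))
  have e0 := shift x (k + 3) (gg θ k) (gg_zero θ (by omega))
  have main : Real.sin (((k + 2 : ℕ) : ℝ) * θ) * (∑ j ∈ Finset.range (k + 4), gg θ (k + 2) j * x ^ j)
      = Real.sin (((k + 3 : ℕ) : ℝ) * θ) *
          ((∑ j ∈ Finset.range (k + 4), (if j = 0 then 0 else gg θ (k + 1) (j - 1)) * x ^ j)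
            + ∑ j ∈ Finset.range (k + 4), gg θ (k + 1) j * x ^ j)
        - Real.sin (((k + 4 : ℕ) : ℝ) * θ) *
            (∑ j ∈ Finset.range (k + 4), (if j = 0 then 0 else gg θ k (j - 1)) * x ^ j) := by
    rw [Finset.mul_sum]
    rw [show Real.sin (((k + 3 : ℕ) : ℝ) * θ) *
          ((∑ j ∈ Finset.range (k + 4), (if j = 0 then 0 else gg θ (k + 1) (j - 1)) * x ^ j)
            + ∑ j ∈ Finset.range (k + 4), gg θ (k + 1) j * x ^ j)
        - Real.sin (((k + 4 : ℕ) : ℝ) * θ) *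
            (∑ j ∈ Finset.range (k + 4), (if j = 0 then 0 else gg θ k (j - 1)) * x ^ j)
      = ∑ j ∈ Finset.range (k + 4),
          (Real.sin (((k + 3 : ℕ) : ℝ) * θ) *
            ((if j = 0 then 0 else gg θ (k + 1) (j - 1)) * x ^ j + gg θ (k + 1) j * x ^ j)
          - Real.sin (((k + 4 : ℕ) : ℝ) * θ) * ((if j = 0 then 0 else gg θ k (j - 1)) * x ^ j)) from by
        simp only [mul_add, Finset.sum_add_distrib, Finset.sum_sub_distrib, ← Finset.mul_sum]]
    refine Finset.sum_congr rfl fun j hj => ?_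
    rcases j with _ | i
    · rw [if_pos rfl, if_pos rfl, gg_eq θ (show 0 ≤ (k + 2) + 1 by omega),
        gg_eq θ (show 0 ≤ (k + 1) + 1 by omega)]
      push_cast
      ring_nf
    · simp only [Nat.succ_ne_zero, if_false, Nat.add_sub_cancel]
      by_cases hik : i ≤ k + 1
      · rw [gg_eq θ (show i + 1 ≤ (k + 2) + 1 by omega),
            gg_eq θ (show i + 1 ≤ (k + 1) + 1 by omega),
            gg_eq θ (show i ≤ (k + 1) + 1 by omega),
            gg_eq θ (show i ≤ k + 1 by omega)]
        push_cast
        have t := trig3 θ (((i : ℝ) + 1) * θ) (((k : ℝ) + 3) * θ)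
        ring_nf at t ⊢
        linear_combination (x ^ (i + 1)) * t
      · rw [gg_zero θ (show (k + 2) + 1 ≤ i + 1 by omega),
            gg_zero θ (show (k + 1) + 1 ≤ i + 1 by omega),
            gg_zero θ (show (k + 1) + 1 ≤ i by omega),
            gg_zero θ (show k + 1 ≤ i by omega)]
        ring
  linear_combination main - Real.sin (((k + 3 : ℕ) : ℝ) * θ) * e1
    + Real.sin (((k + 4 : ℕ) : ℝ) * θ) * e0

lemma key2 (θ x : ℝ) (m : ℕ) (hh : ((m + 3 : ℕ) : ℝ) * θ = Real.pi / 2) :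
    Real.sin θ * Real.sin (((m + 2 : ℕ) : ℝ) * θ) * (∑ j ∈ Finset.range (m + 3), x ^ j) =
      (x + 1) * SS θ x (m + 1) - 2 * x * Real.sin (((m + 2 : ℕ) : ℝ) * θ) * SS θ x m := by
  have hh' : ((m : ℝ) + 3) * θ = Real.pi / 2 := by push_cast at hh; linarith
  rw [SS_ext θ x (show (m + 1) + 1 ≤ m + 3 by omega),
      SS_ext θ x (show m + 1 ≤ m + 3 by omega)]
  have e1 := shift x (m + 2) (gg θ (m + 1)) (gg_zero θ (by omega))
  have e0 := shift x (m + 2) (gg θ m) (gg_zero θ (by omega))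
  have main : Real.sin θ * Real.sin (((m + 2 : ℕ) : ℝ) * θ) * (∑ j ∈ Finset.range (m + 3), x ^ j)
      = ((∑ j ∈ Finset.range (m + 3), (if j = 0 then 0 else gg θ (m + 1) (j - 1)) * x ^ j)
            + ∑ j ∈ Finset.range (m + 3), gg θ (m + 1) j * x ^ j)
        - 2 * Real.sin (((m + 2 : ℕ) : ℝ) * θ) *
            (∑ j ∈ Finset.range (m + 3), (if j = 0 then 0 else gg θ m (j - 1)) * x ^ j) := by
    rw [Finset.mul_sum]
    rw [show ((∑ j ∈ Finset.range (m + 3), (if j = 0 then 0 else gg θ (m + 1) (j - 1)) * x ^ j)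
            + ∑ j ∈ Finset.range (m + 3), gg θ (m + 1) j * x ^ j)
        - 2 * Real.sin (((m + 2 : ℕ) : ℝ) * θ) *
            (∑ j ∈ Finset.range (m + 3), (if j = 0 then 0 else gg θ m (j - 1)) * x ^ j)
      = ∑ j ∈ Finset.range (m + 3),
          (((if j = 0 then 0 else gg θ (m + 1) (j - 1)) * x ^ j + gg θ (m + 1) j * x ^ j)
          - 2 * Real.sin (((m + 2 : ℕ) : ℝ) * θ) * ((if j = 0 then 0 else gg θ m (j - 1)) * x ^ j))
      from by
        simp only [mul_add, Finset.sum_add_distrib, Finset.sum_sub_distrib, ← Finset.mul_sum]]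
    refine Finset.sum_congr rfl fun j hj => ?_
    have hjm : j < m + 3 := Finset.mem_range.1 hj
    rcases j with _ | i
    · rw [if_pos rfl, if_pos rfl, gg_eq θ (show 0 ≤ (m + 1) + 1 by omega)]
      push_cast
      ring_nf
    · have him : i ≤ m + 1 := by omega
      rw [if_neg (Nat.succ_ne_zero i), if_neg (Nat.succ_ne_zero i), Nat.add_sub_cancel,
        gg_eq θ (show i ≤ (m + 1) + 1 by omega),
        gg_eq θ (show i + 1 ≤ (m + 1) + 1 by omega),
        gg_eq θ (show i ≤ m + 1 by omega)]
      push_cast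
      have v1 : Real.sin (((m : ℝ) + 2) * θ) = Real.cos θ := by
        rw [show ((m : ℝ) + 2) * θ = Real.pi / 2 - θ by linear_combination hh']
        exact Real.sin_pi_div_two_sub θ
      have v2 : Real.sin (((m : ℝ) + 1 + 1 - (i : ℝ)) * θ) = Real.cos (((i : ℝ) + 1) * θ) := by
        rw [show ((m : ℝ) + 1 + 1 - (i : ℝ)) * θ = Real.pi / 2 - ((i : ℝ) + 1) * θ by
          linear_combination hh']
        exact Real.sin_pi_div_two_sub _
      have v3 : Real.sin (((m : ℝ) + 1 - (i : ℝ)) * θ) = Real.cos (((i : ℝ) + 1) * θ + θ) := by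
        rw [show ((m : ℝ) + 1 - (i : ℝ)) * θ = Real.pi / 2 - (((i : ℝ) + 1) * θ + θ) by
          linear_combination hh']
        exact Real.sin_pi_div_two_sub _
      have v4 : Real.sin (((i : ℝ) + 1 + 1) * θ) = Real.sin (((i : ℝ) + 1) * θ + θ) := by
        ring_nf
      have v5 : Real.sin (((m : ℝ) + 1 + 1 - ((i : ℝ) + 1)) * θ) =
          Real.cos (((i : ℝ) + 1) * θ + θ) := by
        rw [show ((m : ℝ) + 1 + 1 - ((i : ℝ) + 1)) * θ = Real.pi / 2 - (((i : ℝ) + 1) * θ + θ) by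
          linear_combination hh']
        exact Real.sin_pi_div_two_sub _
      rw [v1, v2, v3, v4, v5]
      linear_combination (x ^ (i + 1)) * trig4 θ (((i : ℝ) + 1) * θ)
  linear_combination main - e1 + 2 * Real.sin (((m + 2 : ℕ) : ℝ) * θ) * e0




noncomputable def kk (θ : ℝ) (i : ℕ) : ℝ :=
  Real.sin (((i + 2 : ℕ) : ℝ) * θ) ^ 2 /
    (Real.sin (((i + 1 : ℕ) : ℝ) * θ) * Real.sin (((i + 3 : ℕ) : ℝ) * θ))

lemma claim (θ x : ℝ) (n : ℕ) (d u l : ℕ → ℝ)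
    (hd : ∀ i, d i = (x + 1) * kk θ i)
    (hu : ∀ i, i + 3 ≤ n → u i = -x)
    (hl : ∀ i, l i = -1)
    (hsnz : ∀ j : ℕ, 1 ≤ j → j ≤ 2 * n + 1 → Real.sin ((j : ℝ) * θ) ≠ 0) :
    ∀ k, k + 1 ≤ n →
      DD d u l k * (Real.sin θ * Real.sin (((k + 1 : ℕ) : ℝ) * θ))
        = (∏ i ∈ Finset.range k, kk θ i) * SS θ x k := by
  have nz1 : Real.sin θ ≠ 0 := by
    intro h
    exact hsnz 1 le_rfl (by omega) (by rwa [Nat.cast_one, one_mul])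
  have main : ∀ k, (k + 1 ≤ n →
      DD d u l k * (Real.sin θ * Real.sin (((k + 1 : ℕ) : ℝ) * θ))
        = (∏ i ∈ Finset.range k, kk θ i) * SS θ x k) ∧
      (k + 2 ≤ n →
      DD d u l (k + 1) * (Real.sin θ * Real.sin (((k + 2 : ℕ) : ℝ) * θ))
        = (∏ i ∈ Finset.range (k + 1), kk θ i) * SS θ x (k + 1)) := by
    intro k
    induction k with
    | zero =>
      constructor
      · intro _
        show (1 : ℝ) * _ = _
        rw [SS, Finset.prod_range_zero]
        norm_num [gg]
      · intro _
        show d 0 * _ = _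
        rw [hd, SS]
        norm_num [gg, Finset.sum_range_succ, Finset.prod_range_one]
        push_cast
        ring
    | succ k ih =>
      refine ⟨fun h => ih.2 h, fun h => ?_⟩
      -- h : k + 3 ≤ n ; prove statement for k + 2
      have pk := ih.1 (by omega)
      have pk1 := ih.2 (by omega)
      have nzA : Real.sin (((k + 1 : ℕ) : ℝ) * θ) ≠ 0 := hsnz (k + 1) (by omega) (by omega)
      have nzB : Real.sin (((k + 2 : ℕ) : ℝ) * θ) ≠ 0 := hsnz (k + 2) (by omega) (by omega)
      have nzC : Real.sin (((k + 3 : ℕ) : ℝ) * θ) ≠ 0 := hsnz (k + 3) (by omega) (by omega)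
      have nzD : Real.sin (((k + 4 : ℕ) : ℝ) * θ) ≠ 0 := hsnz (k + 4) (by omega) (by omega)
      have hDD : DD d u l (k + 2) =
          (x + 1) * kk θ (k + 1) * DD d u l (k + 1) - x * DD d u l k := by
        show d (k + 1) * DD d u l (k + 1) - u k * l k * DD d u l k = _
        rw [hd, hu k (by omega), hl]
        ring
      have hidx2 : k + 2 + 1 = k + 3 := by omega
      have hkk1 : kk θ k = Real.sin (((k + 2 : ℕ) : ℝ) * θ) ^ 2 /
          (Real.sin (((k + 1 : ℕ) : ℝ) * θ) * Real.sin (((k + 3 : ℕ) : ℝ) * θ)) := rfl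
      have hkk2 : kk θ (k + 1) = Real.sin (((k + 3 : ℕ) : ℝ) * θ) ^ 2 /
          (Real.sin (((k + 2 : ℕ) : ℝ) * θ) * Real.sin (((k + 4 : ℕ) : ℝ) * θ)) := rfl
      have ck1 : kk θ k * (Real.sin (((k + 1 : ℕ) : ℝ) * θ) * Real.sin (((k + 3 : ℕ) : ℝ) * θ))
          = Real.sin (((k + 2 : ℕ) : ℝ) * θ) ^ 2 := by
        rw [hkk1, div_mul_cancel₀ _ (mul_ne_zero nzA nzC)]
      have ck2 : kk θ (k + 1) * (Real.sin (((k + 2 : ℕ) : ℝ) * θ) * Real.sin (((k + 4 : ℕ) : ℝ) * θ))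
          = Real.sin (((k + 3 : ℕ) : ℝ) * θ) ^ 2 := by
        rw [hkk2, div_mul_cancel₀ _ (mul_ne_zero nzB nzD)]
      have K := key1 θ x k
      rw [hidx2, hDD, Finset.prod_range_succ, Finset.prod_range_succ]
      rw [Finset.prod_range_succ] at pk1
      apply mul_left_cancel₀ (a := Real.sin θ * Real.sin (((k + 1 : ℕ) : ℝ) * θ)
        * Real.sin (((k + 2 : ℕ) : ℝ) * θ) ^ 2 * Real.sin (((k + 4 : ℕ) : ℝ) * θ))
        (by exact mul_ne_zero (mul_ne_zero (mul_ne_zero nz1 nzA) (pow_ne_zero 2 nzB)) nzD)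
      linear_combination
        ((x + 1) * kk θ (k + 1) * Real.sin θ * Real.sin (((k + 1 : ℕ) : ℝ) * θ)
          * Real.sin (((k + 2 : ℕ) : ℝ) * θ) * Real.sin (((k + 3 : ℕ) : ℝ) * θ)
          * Real.sin (((k + 4 : ℕ) : ℝ) * θ)) * pk1
        - (x * Real.sin θ * Real.sin (((k + 2 : ℕ) : ℝ) * θ) ^ 2
          * Real.sin (((k + 3 : ℕ) : ℝ) * θ) * Real.sin (((k + 4 : ℕ) : ℝ) * θ)) * pk
        - ((∏ i ∈ Finset.range k, kk θ i) * kk θ k * Real.sin θ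
          * Real.sin (((k + 1 : ℕ) : ℝ) * θ) * Real.sin (((k + 3 : ℕ) : ℝ) * θ) ^ 2) * K
        + (x * (∏ i ∈ Finset.range k, kk θ i) * SS θ x k * Real.sin θ
          * Real.sin (((k + 3 : ℕ) : ℝ) * θ) * Real.sin (((k + 4 : ℕ) : ℝ) * θ)) * ck1
        + ((x + 1) * (∏ i ∈ Finset.range k, kk θ i) * kk θ k * SS θ x (k + 1) * Real.sin θ
            * Real.sin (((k + 1 : ℕ) : ℝ) * θ) * Real.sin (((k + 3 : ℕ) : ℝ) * θ)
          - (∏ i ∈ Finset.range k, kk θ i) * kk θ k * SS θ x (k + 2) * Real.sin θ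
            * Real.sin (((k + 1 : ℕ) : ℝ) * θ) * Real.sin (((k + 2 : ℕ) : ℝ) * θ)) * ck2
  exact fun k hk => (main k).1 hk



end Stmt12

open Stmt12 Polynomial Matrix in
/-- Type `C_n`: `det(X·U_κ + L_κ) = (∏ κ_i)·(1 + X + ⋯ + Xⁿ)`, where
`κ_i = a_i²/(a_i² - 1)` with `a_i = sin((i+1)θ)/sin θ`, `θ = π/(2n+2)`
(indices below are 0-based). -/
theorem stmt12 (n : ℕ) (hn : 3 ≤ n) (θ : ℝ) (hθ : θ = Real.pi / (2 * n + 2))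
    (a : Fin n → ℝ) (ha : ∀ i, a i = Real.sin (((i : ℕ) + 2 : ℝ) * θ) / Real.sin θ)
    (κ : Fin n → ℝ) (hκ : ∀ i, κ i = (a i) ^ 2 / ((a i) ^ 2 - 1))
    (U L : Matrix (Fin n) (Fin n) ℝ)
    (hU : ∀ i j, U i j = if i = j then κ i
      else if (j : ℕ) = (i : ℕ) + 1 then (if (j : ℕ) = n - 1 then -2 else -1) else 0)
    (hL : ∀ i j, L i j = if i = j then κ i else if (i : ℕ) = (j : ℕ) + 1 then -1 else 0) :
    ((X : ℝ[X]) • U.map C + L.map C).det =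
      C (∏ i, κ i) * ∑ j ∈ Finset.range (n + 1), X ^ j := by
  obtain ⟨m, rfl⟩ : ∃ m, n = m + 3 := ⟨n - 3, by omega⟩
  apply Polynomial.funext
  intro x
  -- reduce both sides to evaluations over ℝ
  rw [show Polynomial.eval x (((X : ℝ[X]) • U.map C + L.map C).det)
      = ((x • U + L : Matrix (Fin (m + 3)) (Fin (m + 3)) ℝ)).det from by
    rw [show Polynomial.eval x (((X : ℝ[X]) • U.map C + L.map C).det)
        = ((((X : ℝ[X]) • U.map C + L.map C)).map (Polynomial.evalRingHom x)).det from
      (Polynomial.evalRingHom x).map_det _]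
    congr 1
    ext i j
    simp [Matrix.map_apply, Matrix.add_apply, Matrix.smul_apply, smul_eq_mul]
    ring]
  rw [show Polynomial.eval x (C (∏ i, κ i) * ∑ j ∈ Finset.range (m + 3 + 1), (X : ℝ[X]) ^ j)
      = (∏ i, κ i) * ∑ j ∈ Finset.range (m + 3 + 1), x ^ j from by
    simp only [Polynomial.eval_mul, Polynomial.eval_C, Polynomial.eval_finset_sum,
      Polynomial.eval_pow, Polynomial.eval_X]]
  -- basic sine facts
  have hsum : (2 * ((m + 3 : ℕ) : ℝ) + 2) * θ = Real.pi := by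
    rw [hθ]
    have hne : (2 * ((m + 3 : ℕ) : ℝ) + 2) ≠ 0 := by positivity
    field_simp
  have hθpos : 0 < θ := by rw [hθ]; positivity
  have hsnz : ∀ j : ℕ, 1 ≤ j → j ≤ 2 * (m + 3) + 1 → Real.sin ((j : ℝ) * θ) ≠ 0 := by
    intro j h1 h2
    have hj : j < 2 * (m + 3) + 2 := by omega
    have h3 : (j : ℝ) < 2 * ((m + 3 : ℕ) : ℝ) + 2 := by exact_mod_cast hj
    have hlt : (j : ℝ) * θ < Real.pi := by
      calc (j : ℝ) * θ < (2 * ((m + 3 : ℕ) : ℝ) + 2) * θ :=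
            mul_lt_mul_of_pos_right h3 hθpos
        _ = Real.pi := hsum
    have hpos : 0 < (j : ℝ) * θ := by
      have : (0 : ℝ) < j := by exact_mod_cast h1
      exact mul_pos this hθpos
    exact ne_of_gt (Real.sin_pos_of_pos_of_lt_pi hpos hlt)
  have nz1 : Real.sin θ ≠ 0 := by
    have := hsnz 1 le_rfl (by omega)
    rwa [Nat.cast_one, one_mul] at this
  -- κ agrees with kk
  have κ_eq : ∀ i : Fin (m + 3), κ i = kk θ (i : ℕ) := by
    intro i
    have hiLt := i.isLt
    have nzi1 : Real.sin ((((i : ℕ) + 1 : ℕ) : ℝ) * θ) ≠ 0 := hsnz _ (by omega) (by omega)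
    have nzi3 : Real.sin ((((i : ℕ) + 3 : ℕ) : ℝ) * θ) ≠ 0 := hsnz _ (by omega) (by omega)
    have key : Real.sin ((((i : ℕ) + 2 : ℕ) : ℝ) * θ) ^ 2 - Real.sin θ ^ 2
        = Real.sin ((((i : ℕ) + 3 : ℕ) : ℝ) * θ) * Real.sin ((((i : ℕ) + 1 : ℕ) : ℝ) * θ) := by
      have h := sin_sq_sub ((((i : ℕ) : ℝ) + 2) * θ) θ
      rw [show (((i : ℕ) : ℝ) + 2) * θ + θ = (((i : ℕ) + 3 : ℕ) : ℝ) * θ by push_cast; ring,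
          show (((i : ℕ) : ℝ) + 2) * θ - θ = (((i : ℕ) + 1 : ℕ) : ℝ) * θ by push_cast; ring] at h
      rw [show (((i : ℕ) + 2 : ℕ) : ℝ) * θ = (((i : ℕ) : ℝ) + 2) * θ by push_cast; ring]
      linarith [h]
    rw [hκ, ha]
    rw [show kk θ (i : ℕ) = Real.sin ((((i : ℕ) + 2 : ℕ) : ℝ) * θ) ^ 2
        / (Real.sin ((((i : ℕ) + 1 : ℕ) : ℝ) * θ) * Real.sin ((((i : ℕ) + 3 : ℕ) : ℝ) * θ))
      from rfl]
    rw [show Real.sin (((i : ℕ) + 2 : ℝ) * θ) = Real.sin ((((i : ℕ) + 2 : ℕ) : ℝ) * θ) by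
      norm_cast]
    have hden : (Real.sin ((((i : ℕ) + 2 : ℕ) : ℝ) * θ) / Real.sin θ) ^ 2 - 1
        = (Real.sin ((((i : ℕ) + 3 : ℕ) : ℝ) * θ) * Real.sin ((((i : ℕ) + 1 : ℕ) : ℝ) * θ))
          / Real.sin θ ^ 2 := by
      rw [div_pow, eq_div_iff (pow_ne_zero 2 nz1), sub_mul, div_mul_cancel₀ _ (pow_ne_zero 2 nz1)]
      linarith [key]
    rw [hden, div_pow]
    rw [div_div_div_cancel_right₀]
    · rw [show Real.sin ((((i : ℕ) + 3 : ℕ) : ℝ) * θ) * Real.sin ((((i : ℕ) + 1 : ℕ) : ℝ) * θ)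
        = Real.sin ((((i : ℕ) + 1 : ℕ) : ℝ) * θ) * Real.sin ((((i : ℕ) + 3 : ℕ) : ℝ) * θ) from
        mul_comm _ _]
    · exact pow_ne_zero 2 nz1
  -- the matrix is tridiagonal
  have hM : (x • U + L : Matrix (Fin (m + 3)) (Fin (m + 3)) ℝ)
      = tri (fun i => (x + 1) * kk θ i)
          (fun i => x * (if i + 1 = m + 3 - 1 then (-2 : ℝ) else -1))
          (fun _ => (-1 : ℝ)) (m + 3) := by
    ext i j
    rw [Matrix.add_apply, Matrix.smul_apply, smul_eq_mul, hU, hL, tri_apply, ent]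
    by_cases h1 : i = j
    · subst h1
      rw [if_pos rfl, if_pos rfl, if_pos rfl, κ_eq]
      ring
    · have h1' : (i : ℕ) ≠ (j : ℕ) := fun hc => h1 (Fin.ext hc)
      rw [if_neg h1, if_neg h1, if_neg h1']
      by_cases h2 : (j : ℕ) = (i : ℕ) + 1
      · rw [if_pos h2, if_pos h2, if_neg (show ¬(i : ℕ) = (j : ℕ) + 1 by omega), h2]
        show x * _ + 0 = x * _
        rw [add_zero]
      · rw [if_neg h2, if_neg h2]
        by_cases h3 : (i : ℕ) = (j : ℕ) + 1 <;> simp [h3]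
  rw [hM, tri_det]
  rw [show (∏ i, κ i) = ∏ i ∈ Finset.range (m + 3), kk θ i from by
    rw [← Fin.prod_univ_eq_prod_range (fun i => kk θ i) (m + 3)]
    exact Finset.prod_congr rfl fun i _ => κ_eq i]
  -- recursion at the top level
  have hDDn : DD (fun i => (x + 1) * kk θ i)
      (fun i => x * (if i + 1 = m + 3 - 1 then (-2 : ℝ) else -1)) (fun _ => (-1 : ℝ)) (m + 3)
      = (x + 1) * kk θ (m + 2) * DD (fun i => (x + 1) * kk θ i)
          (fun i => x * (if i + 1 = m + 3 - 1 then (-2 : ℝ) else -1)) (fun _ => (-1 : ℝ)) (m + 2)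
        - 2 * x * DD (fun i => (x + 1) * kk θ i)
          (fun i => x * (if i + 1 = m + 3 - 1 then (-2 : ℝ) else -1)) (fun _ => (-1 : ℝ)) (m + 1) := by
    show (x + 1) * kk θ (m + 2) * _ - (x * (if (m + 1) + 1 = m + 3 - 1 then (-2 : ℝ) else -1)) * (-1) * _ = _
    rw [if_pos (by omega)]
    ring
  have pk2 := claim θ x (m + 3) _ _ _ (fun i => rfl)
    (fun i hi => by
      show x * (if i + 1 = m + 3 - 1 then (-2 : ℝ) else -1) = -x
      rw [if_neg (by omega)]; ring)
    (fun i => rfl) hsnz (m + 2) (by omega)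
  have pk1 := claim θ x (m + 3) _ _ _ (fun i => rfl)
    (fun i hi => by
      show x * (if i + 1 = m + 3 - 1 then (-2 : ℝ) else -1) = -x
      rw [if_neg (by omega)]; ring)
    (fun i => rfl) hsnz (m + 1) (by omega)
  have K2 := key2 θ x (m + 1) (by
    push_cast
    push_cast at hsum
    linarith [hsum])
  -- index normalizations
  simp only [show m + 1 + 2 = m + 3 from rfl, show m + 1 + 1 = m + 2 from rfl,
    show m + 2 + 1 = m + 3 from rfl, show m + 1 + 3 = m + 4 from rfl,
    show m + 1 + 4 = m + 5 from rfl] at pk2 pk1 K2 ⊢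
  have nzM2 : Real.sin (((m + 2 : ℕ) : ℝ) * θ) ≠ 0 := hsnz (m + 2) (by omega) (by omega)
  have nzM3 : Real.sin (((m + 3 : ℕ) : ℝ) * θ) ≠ 0 := hsnz (m + 3) (by omega) (by omega)
  have hs1 : Real.sin (((m + 4 : ℕ) : ℝ) * θ) = 1 := by
    rw [show ((m + 4 : ℕ) : ℝ) * θ = Real.pi / 2 from by
      push_cast; push_cast at hsum; linarith [hsum]]
    exact Real.sin_pi_div_two
  have hs2 : Real.sin (((m + 5 : ℕ) : ℝ) * θ) = Real.sin (((m + 3 : ℕ) : ℝ) * θ) := by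
    rw [show ((m + 5 : ℕ) : ℝ) * θ = Real.pi - ((m + 3 : ℕ) : ℝ) * θ from by
      push_cast; push_cast at hsum; linarith [hsum]]
    exact Real.sin_pi_sub _
  have nz4 : Real.sin (((m + 4 : ℕ) : ℝ) * θ) ≠ 0 := by rw [hs1]; exact one_ne_zero
  have nz5 : Real.sin (((m + 5 : ℕ) : ℝ) * θ) ≠ 0 := by rw [hs2]; exact nzM3
  have ck1 : kk θ (m + 1) * (Real.sin (((m + 2 : ℕ) : ℝ) * θ) * Real.sin (((m + 4 : ℕ) : ℝ) * θ))
      = Real.sin (((m + 3 : ℕ) : ℝ) * θ) ^ 2 := by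
    rw [show kk θ (m + 1) = Real.sin (((m + 3 : ℕ) : ℝ) * θ) ^ 2
        / (Real.sin (((m + 2 : ℕ) : ℝ) * θ) * Real.sin (((m + 4 : ℕ) : ℝ) * θ)) from rfl,
      div_mul_cancel₀ _ (mul_ne_zero nzM2 nz4)]
  have ck2 : kk θ (m + 2) * (Real.sin (((m + 3 : ℕ) : ℝ) * θ) * Real.sin (((m + 5 : ℕ) : ℝ) * θ))
      = Real.sin (((m + 4 : ℕ) : ℝ) * θ) ^ 2 := by
    rw [show kk θ (m + 2) = Real.sin (((m + 4 : ℕ) : ℝ) * θ) ^ 2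
        / (Real.sin (((m + 3 : ℕ) : ℝ) * θ) * Real.sin (((m + 5 : ℕ) : ℝ) * θ)) from rfl,
      div_mul_cancel₀ _ (mul_ne_zero nzM3 nz5)]
  rw [hs1] at ck1
  rw [hs2, hs1] at ck2
  rw [hDDn, Finset.prod_range_succ, Finset.prod_range_succ]
  rw [Finset.prod_range_succ] at pk2
  apply mul_left_cancel₀ (a := Real.sin θ * Real.sin (((m + 2 : ℕ) : ℝ) * θ)
    * Real.sin (((m + 3 : ℕ) : ℝ) * θ))
    (mul_ne_zero (mul_ne_zero nz1 nzM2) nzM3)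
  linear_combination
    ((x + 1) * kk θ (m + 2) * Real.sin (((m + 2 : ℕ) : ℝ) * θ)) * pk2
    - (2 * x * Real.sin (((m + 3 : ℕ) : ℝ) * θ)) * pk1
    - ((∏ i ∈ Finset.range (m + 1), kk θ i) * kk θ (m + 1) * kk θ (m + 2)
        * Real.sin (((m + 2 : ℕ) : ℝ) * θ)) * K2
    + (2 * x * (∏ i ∈ Finset.range (m + 1), kk θ i) * SS θ x (m + 1)
        * Real.sin (((m + 3 : ℕ) : ℝ) * θ) * kk θ (m + 2)) * ck1
    + (2 * x * (∏ i ∈ Finset.range (m + 1), kk θ i) * SS θ x (m + 1)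
        * Real.sin (((m + 3 : ℕ) : ℝ) * θ)) * ck2
end
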